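/- arXiv:1712.07690 — 8 statements merged into one kernel-verified Lean document; each statement's English description precedes it below -/
import Mathlib

section
/- Under the hypotheses of the weighted mean comparison (p, q positive continuous non-decreasing probability densities on [a,b] with p/q strictly decreasing, θ positive non-decreasing), equality ∫_I p·θ dx = ∫_I q·θ dx holds if and only if θ is constant a.e. on [a,b]. -/
/-! Write `d = q - p`. Since `p / q` is strictly decreasing, `d` changes sign exactly once, at some
`c ∈ [a, b]`: `d < 0` left of `c` and `d > 0` right of `c`. As `∫ d = 0`,
`∫ d θ = ∫ d (θ - θ c)`, and the integrand is nonnegative because `θ` is non-decreasing. So the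
two weighted means agree iff `d (θ - θ c) = 0` a.e., i.e. iff `θ = θ c` a.e. -/

open Set intervalIntegral MeasureTheory

theorem StrictAntiOn.exists_crossing_Icc {α β : Type*} [ConditionallyCompleteLinearOrder α]
    [LinearOrder β] {f : α → β} {a b : α} (hab : a ≤ b) (hf : StrictAntiOn f (Icc a b)) (t : β) :
    ∃ c ∈ Icc a b, ∀ x ∈ Icc a b, (x < c → t < f x) ∧ (c < x → f x < t) := by
  set S := {x ∈ Icc a b | t ≤ f x}
  rcases S.eq_empty_or_nonempty with hS | hS
  · refine ⟨a, left_mem_Icc.2 hab, fun x hx => ⟨fun hxa => absurd hx.1 (not_le.2 hxa), fun _ => ?_⟩⟩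
    exact not_le.1 fun h => hS.subset ⟨hx, h⟩
  · have hbdd : BddAbove S := ⟨b, fun x hx => hx.1.2⟩
    refine ⟨sSup S, ⟨?_, csSup_le hS fun x hx => hx.1.2⟩, fun x hx => ⟨fun hxc => ?_, fun hcx => ?_⟩⟩
    · obtain ⟨y, hy⟩ := hS
      exact hy.1.1.trans (le_csSup hbdd hy)
    · obtain ⟨y, hyS, hxy⟩ := exists_lt_of_lt_csSup hS hxc
      exact hyS.2.trans_lt (hf hx hyS.1 hxy)
    · exact not_le.1 fun h => (le_csSup hbdd ⟨hx, h⟩).not_gt hcx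

section SignChange

variable {d θ : ℝ → ℝ} {c : ℝ}

theorem mul_sub_nonneg_of_sign_change {s : Set ℝ} (hc : c ∈ s)
    (hneg : ∀ x ∈ s, x < c → d x < 0) (hpos : ∀ x ∈ s, c < x → 0 < d x)
    (hθ : MonotoneOn θ s) {x : ℝ} (hx : x ∈ s) : 0 ≤ d x * (θ x - θ c) := by
  rcases lt_trichotomy x c with h | rfl | h
  · exact mul_nonneg_of_nonpos_of_nonpos (hneg x hx h).le (sub_nonpos.2 (hθ hx hc h.le))
  · simp
  · exact mul_nonneg (hpos x hx h).le (sub_nonneg.2 (hθ hc hx h.le))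

theorem ae_eq_of_integral_mul_eq_zero_of_sign_change {a b : ℝ} (hc : c ∈ Icc a b)
    (hneg : ∀ x ∈ Icc a b, x < c → d x < 0) (hpos : ∀ x ∈ Icc a b, c < x → 0 < d x)
    (hθ : MonotoneOn θ (Icc a b)) (hd : IntervalIntegrable d volume a b)
    (hdθ : IntervalIntegrable (fun x => d x * θ x) volume a b)
    (hd0 : ∫ x in a..b, d x = 0) (hdθ0 : ∫ x in a..b, d x * θ x = 0) :
    ∀ᵐ x ∂(volume.restrict (Icc a b)), θ x = θ c := by
  have hint : IntervalIntegrable (fun x => d x * (θ x - θ c)) volume a b := by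
    simpa only [mul_sub] using hdθ.sub (hd.mul_const (θ c))
  have hzero : ∫ x in a..b, d x * (θ x - θ c) = 0 := by
    simp only [mul_sub]
    rw [integral_sub hdθ (hd.mul_const _), intervalIntegral.integral_mul_const, hd0, hdθ0,
      zero_mul, sub_zero]
  have hnonneg : 0 ≤ᵐ[volume.restrict (Ioc a b)] fun x => d x * (θ x - θ c) :=
    (ae_restrict_iff' measurableSet_Ioc).2 <| ae_of_all _ fun x hx =>
      mul_sub_nonneg_of_sign_change hc hneg hpos hθ (Ioc_subset_Icc_self hx)
  have hae := (integral_eq_zero_iff_of_le_of_nonneg_ae (hc.1.trans hc.2) hnonneg hint).1 hzero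
  rw [Measure.restrict_congr_set Ioc_ae_eq_Icc] at hae
  filter_upwards [hae, ae_restrict_mem measurableSet_Icc, Measure.ae_ne _ c] with x hx hxI hxc
  have hdx : d x ≠ 0 := by
    rcases hxc.lt_or_gt with h | h
    exacts [(hneg x hxI h).ne, (hpos x hxI h).ne']
  exact sub_eq_zero.1 ((mul_eq_zero.1 hx).resolve_left hdx)

end SignChange

theorem intervalIntegral.integral_mul_of_ae_eq_const {f θ : ℝ → ℝ} {a b c : ℝ} (hab : a ≤ b)
    (hθ : ∀ᵐ x ∂(volume.restrict (Icc a b)), θ x = c) :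
    ∫ x in a..b, f x * θ x = (∫ x in a..b, f x) * c := by
  rw [← intervalIntegral.integral_mul_const]
  refine integral_congr_ae ?_
  rw [uIoc_of_le hab]
  filter_upwards [ae_imp_of_ae_restrict (ae_restrict_of_ae_restrict_of_subset Ioc_subset_Icc_self hθ)]
    with x hx hxI
  rw [hx hxI]

theorem stmt_2_general (a b : ℝ) (hab : a < b) (p q θ : ℝ → ℝ)
    (hqpos : ∀ x ∈ Icc a b, 0 < q x)
    (hpint : ∫ x in a..b, p x = 1) (hqint : ∫ x in a..b, q x = 1)
    (hpq : StrictAntiOn (fun x => p x / q x) (Icc a b))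
    (hθmono : MonotoneOn θ (Icc a b))
    (hpθ : IntervalIntegrable (fun x => p x * θ x) volume a b)
    (hqθ : IntervalIntegrable (fun x => q x * θ x) volume a b) :
    (∫ x in a..b, p x * θ x) = ∫ x in a..b, q x * θ x ↔
      ∃ c : ℝ, ∀ᵐ x ∂(volume.restrict (Icc a b)), θ x = c := by
  constructor
  · intro heq
    have hp := intervalIntegrable_of_integral_ne_zero (hpint ▸ one_ne_zero)
    have hq := intervalIntegrable_of_integral_ne_zero (hqint ▸ one_ne_zero)
    obtain ⟨c, hc, hcross⟩ := hpq.exists_crossing_Icc hab.le 1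
    refine ⟨θ c, ae_eq_of_integral_mul_eq_zero_of_sign_change (d := fun x => q x - p x) hc
      (fun x hx hxc => ?_) (fun x hx hxc => ?_) hθmono (hq.sub hp) ?_ ?_ ?_⟩
    · have := (one_lt_div (hqpos x hx)).1 ((hcross x hx).1 hxc)
      linarith
    · have := (div_lt_one (hqpos x hx)).1 ((hcross x hx).2 hxc)
      linarith
    · simpa only [sub_mul] using hqθ.sub hpθ
    · rw [integral_sub hq hp, hpint, hqint, sub_self]
    · simp only [sub_mul]
      rw [integral_sub hqθ hpθ, heq, sub_self]
  · rintro ⟨c, hc⟩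
    rw [integral_mul_of_ae_eq_const hab.le hc, integral_mul_of_ae_eq_const hab.le hc, hpint, hqint]

theorem stmt_2 (a b : ℝ) (hab : a < b) (p q θ : ℝ → ℝ)
    (hpc : ContinuousOn p (Icc a b)) (hqc : ContinuousOn q (Icc a b))
    (hppos : ∀ x ∈ Icc a b, 0 < p x) (hqpos : ∀ x ∈ Icc a b, 0 < q x)
    (hpmono : MonotoneOn p (Icc a b)) (hqmono : MonotoneOn q (Icc a b))
    (hpint : ∫ x in a..b, p x = 1) (hqint : ∫ x in a..b, q x = 1)
    (hpq : StrictAntiOn (fun x => p x / q x) (Icc a b))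
    (hθpos : ∀ x ∈ Icc a b, 0 < θ x) (hθmono : MonotoneOn θ (Icc a b))
    (hpθ : IntervalIntegrable (fun x => p x * θ x) volume a b)
    (hqθ : IntervalIntegrable (fun x => q x * θ x) volume a b) :
    (∫ x in a..b, p x * θ x) = ∫ x in a..b, q x * θ x ↔
      ∃ c : ℝ, ∀ᵐ x ∂(volume.restrict (Icc a b)), θ x = c :=
  stmt_2_general a b hab p q θ hqpos hpint hqint hpq hθmono hpθ hqθ
end

section
/- Let S ⊆ ℝ be nonempty and bounded, and suppose that for each s ∈ S there exists δ > 0 such that [s, s+δ) ⊆ S. Then S is Lebesgue measurable and has positive Lebesgue measure. -/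
/-!
Every `s ∈ S` starts an interval `[s, t) ⊆ S`, whose interior `(s, t)` lies in `interior S`.
For two points `a < b` of `S \ interior S` this forces `t_a ≤ b`, so the intervals `(a, t_a)` are
pairwise disjoint and hence only countably many. Thus `S` is an open set plus a countable set,
and it has positive measure because it contains a nondegenerate interval.
-/

open Set MeasureTheory

section RightIntervals

variable {α : Type*} [LinearOrder α] [TopologicalSpace α] [OrderTopology α] {S : Set α}

theorem countable_diff_interior_of_forall_exists_Ico_subset [SecondCountableTopology α]
    (h : ∀ s ∈ S, ∃ t > s, Ico s t ⊆ S) : (S \ interior S).Countable := by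
  choose! t hst htS using h
  have hIoo : ∀ s ∈ S, Ioo s (t s) ⊆ interior S := fun s hs =>
    isOpen_Ioo.subset_interior_iff.2 (Ioo_subset_Ico_self.trans (htS s hs))
  have hdisj : ∀ a ∈ S \ interior S, ∀ b ∈ S \ interior S, a < b →
      Disjoint (Ioo a (t a)) (Ioo b (t b)) := by
    intro a ha b hb hab
    have htb : t a ≤ b := not_lt.1 fun hlt => hb.2 (hIoo a ha.1 ⟨hab, hlt⟩)
    exact (Iio_disjoint_Ici htb).mono Ioo_subset_Iio_self
      (Ioo_subset_Ioi_self.trans Ioi_subset_Ici_self)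
  refine PairwiseDisjoint.countable_of_Ioo (y := t) (fun a ha b hb hne => ?_)
    fun a ha => hst a ha.1
  rcases hne.lt_or_gt with hab | hba
  · exact hdisj a ha b hb hab
  · exact (hdisj b hb a ha hba).symm

theorem measurableSet_of_forall_exists_Ico_subset [SecondCountableTopology α] [MeasurableSpace α]
    [OpensMeasurableSpace α] [MeasurableSingletonClass α]
    (h : ∀ s ∈ S, ∃ t > s, Ico s t ⊆ S) : MeasurableSet S := by
  rw [← union_sdiff_cancel (interior_subset (s := S))]
  exact isOpen_interior.measurableSet.union
    (countable_diff_interior_of_forall_exists_Ico_subset h).measurableSet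

end RightIntervals

theorem stmt_5_general (S : Set ℝ) (hne : S.Nonempty)
    (h : ∀ s ∈ S, ∃ δ > 0, Ico s (s + δ) ⊆ S) :
    NullMeasurableSet S volume ∧ 0 < volume S := by
  have hIco : ∀ s ∈ S, ∃ t > s, Ico s t ⊆ S := fun s hs => by
    obtain ⟨δ, hδ, hsub⟩ := h s hs
    exact ⟨s + δ, by linarith, hsub⟩
  refine ⟨(measurableSet_of_forall_exists_Ico_subset hIco).nullMeasurableSet, ?_⟩
  obtain ⟨s, hs⟩ := hne
  obtain ⟨t, hst, hsub⟩ := hIco s hs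
  calc 0 < volume (Ico s t) := by simpa [Real.volume_Ico] using hst
    _ ≤ volume S := measure_mono hsub

theorem stmt_5 (S : Set ℝ) (hne : S.Nonempty) (hbdd : Bornology.IsBounded S)
    (h : ∀ s ∈ S, ∃ δ > 0, Ico s (s + δ) ⊆ S) :
    NullMeasurableSet S volume ∧ 0 < volume S :=
  stmt_5_general S hne h
end

section
/- Let 0 < a < b and define w₀(τ) = (a+b)τ/(ab + τ²) on [a,b]. Then ∫_a^b (1/√(w₀(τ)² - 1))·(dτ/τ) = π. -/
open Set intervalIntegral

/-- The integral of `1` over `Ioo (-(π/2)) (π/2)` gives `π` via the sin substitution,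
used to compute `∫ u in Ioo (-c) c, 1/√(c²-u²) = π`. -/
lemma aux_sqrt_integral (c : ℝ) (hc : 0 < c) :
    ∫ u in Ioo (-c) c, 1 / Real.sqrt (c ^ 2 - u ^ 2) = Real.pi := by
  have hmono : StrictMonoOn (fun θ : ℝ => c * Real.sin θ)
      (Icc (-(Real.pi/2)) (Real.pi/2)) := by
    intro x hx y hy hxy
    exact mul_lt_mul_of_pos_left
      (Real.strictMonoOn_sin (by simpa using hx) (by simpa using hy) hxy) hc
  have himg : (fun θ : ℝ => c * Real.sin θ) '' Ioo (-(Real.pi/2)) (Real.pi/2)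
      = Ioo (-c) c := by
    apply Subset.antisymm
    · have := hmono.image_Ioo_subset
      simpa using this
    · have h := intermediate_value_Ioo (f := fun θ : ℝ => c * Real.sin θ)
        (a := -(Real.pi/2)) (b := Real.pi/2)
        (by linarith [Real.pi_pos]) (by fun_prop)
      simpa using h
  have hderiv : ∀ θ ∈ Ioo (-(Real.pi/2)) (Real.pi/2),
      HasDerivWithinAt (fun θ : ℝ => c * Real.sin θ) (c * Real.cos θ)
        (Ioo (-(Real.pi/2)) (Real.pi/2)) θ := by
    intro θ _
    exact ((Real.hasDerivAt_sin θ).const_mul c).hasDerivWithinAt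
  have hinj : InjOn (fun θ : ℝ => c * Real.sin θ) (Ioo (-(Real.pi/2)) (Real.pi/2)) :=
    (hmono.mono Ioo_subset_Icc_self).injOn
  have key := MeasureTheory.integral_image_eq_integral_abs_deriv_smul
    measurableSet_Ioo hderiv hinj (fun u => 1 / Real.sqrt (c ^ 2 - u ^ 2))
  rw [himg] at key
  rw [key]
  have : ∀ θ ∈ Ioo (-(Real.pi/2)) (Real.pi/2),
      |c * Real.cos θ| • (1 / Real.sqrt (c ^ 2 - (c * Real.sin θ) ^ 2)) = 1 := by
    intro θ hθ
    have hcos : 0 < Real.cos θ := Real.cos_pos_of_mem_Ioo (by simpa using hθ)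
    have h1 : c ^ 2 - (c * Real.sin θ) ^ 2 = (c * Real.cos θ) ^ 2 := by
      have := Real.sin_sq_add_cos_sq θ
      ring_nf
      nlinarith [Real.sin_sq_add_cos_sq θ]
    rw [h1, Real.sqrt_sq (by positivity)]
    have : c * Real.cos θ > 0 := by positivity
    rw [abs_of_pos this]
    field_simp
    exact mul_one_div_cancel this.ne'
  rw [MeasureTheory.setIntegral_congr_fun measurableSet_Ioo this]
  simp [Real.volume_Ioo]
  ring_nf
  exact Real.pi_pos.le

theorem stmt_11 (a b : ℝ) (ha : 0 < a) (hab : a < b)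
    (w₀ : ℝ → ℝ) (hw₀ : ∀ τ, w₀ τ = (a + b) * τ / (a * b + τ ^ 2)) :
    ∫ τ in a..b, 1 / (τ * Real.sqrt ((w₀ τ) ^ 2 - 1)) = Real.pi := by
  have hb : 0 < b := ha.trans hab
  set c : ℝ := b - a with hc
  have hcpos : 0 < c := sub_pos.2 hab
  set f : ℝ → ℝ := fun τ => τ - a * b / τ with hfdef
  have hmono : StrictMonoOn f (Icc a b) := by
    intro x hx y hy hxy
    have hx0 : 0 < x := lt_of_lt_of_le ha hx.1
    have hy0 : 0 < y := lt_of_lt_of_le ha hy.1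
    simp only [hfdef]
    have h1 : a * b / y ≤ a * b / x :=
      div_le_div_of_nonneg_left (by positivity) hx0 hxy.le
    linarith
  have himg : f '' Ioo a b = Ioo (-c) c := by
    have hfa : f a = -c := by
      simp only [hfdef, hc]; field_simp; ring
    have hfb : f b = c := by
      simp only [hfdef, hc]; field_simp
    apply Subset.antisymm
    · have := hmono.image_Ioo_subset
      rwa [hfa, hfb] at this
    · have hcont : ContinuousOn f (Icc a b) := by
        apply ContinuousOn.sub continuousOn_id
        apply ContinuousOn.div continuousOn_const continuousOn_id
        intro x hx; exact ne_of_gt (lt_of_lt_of_le ha hx.1)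
      have h := intermediate_value_Ioo hab.le hcont
      rwa [hfa, hfb] at h
  have hderiv : ∀ τ ∈ Ioo a b,
      HasDerivWithinAt f (1 + a * b / τ ^ 2) (Ioo a b) τ := by
    intro τ hτ
    have hτ0 : τ ≠ 0 := ne_of_gt (ha.trans hτ.1)
    have h1 : HasDerivAt (fun τ : ℝ => a * b / τ) (a * b * (-(τ ^ 2)⁻¹)) τ := by
      simpa [div_eq_mul_inv] using (hasDerivAt_inv hτ0).const_mul (a * b)
    have h2 : HasDerivAt f (1 - a * b * (-(τ ^ 2)⁻¹)) τ :=
      (hasDerivAt_id τ).sub h1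
    have : 1 - a * b * (-(τ ^ 2)⁻¹) = 1 + a * b / τ ^ 2 := by
      field_simp
      ring
    rw [this] at h2
    exact h2.hasDerivWithinAt
  have hinj : InjOn f (Ioo a b) := (hmono.mono Ioo_subset_Icc_self).injOn
  have key := MeasureTheory.integral_image_eq_integral_abs_deriv_smul
    measurableSet_Ioo hderiv hinj (fun u => 1 / Real.sqrt (c ^ 2 - u ^ 2))
  rw [himg, aux_sqrt_integral c hcpos] at key
  rw [intervalIntegral.integral_of_le hab.le,
    MeasureTheory.integral_Ioc_eq_integral_Ioo, key]
  apply MeasureTheory.setIntegral_congr_fun measurableSet_Ioo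
  intro τ hτ
  have hτ0 : 0 < τ := ha.trans hτ.1
  have hd : 0 < a * b + τ ^ 2 := by positivity
  -- key algebraic identity: c² - (f τ)² = (τ²-a²)(b²-τ²)/τ²
  have hfτ : f τ ∈ Ioo (-c) c := himg ▸ mem_image_of_mem f hτ
  have hpos : 0 < c ^ 2 - f τ ^ 2 := by
    nlinarith [hfτ.1, hfτ.2]
  have hw : (w₀ τ) ^ 2 - 1
      = (τ * Real.sqrt (c ^ 2 - f τ ^ 2) / (a * b + τ ^ 2)) ^ 2 := by
    rw [hw₀, div_pow, div_pow, mul_pow, mul_pow, Real.sq_sqrt hpos.le, hfdef, hc]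
    field_simp
    ring
  have hsq : Real.sqrt ((w₀ τ) ^ 2 - 1)
      = τ * Real.sqrt (c ^ 2 - f τ ^ 2) / (a * b + τ ^ 2) := by
    rw [hw, Real.sqrt_sq (by positivity)]
  have habs : |1 + a * b / τ ^ 2| = (τ ^ 2 + a * b) / τ ^ 2 := by
    rw [abs_of_pos (by positivity)]; field_simp
  have hsqrtpos : 0 < Real.sqrt (c ^ 2 - f τ ^ 2) := Real.sqrt_pos.2 hpos
  simp only [smul_eq_mul, habs, hsq]
  field_simp
  ring
end

section
/- Let 0 < a < b and define w₀(τ) = (a+b)τ/(ab+τ²) on [a,b], and μ the measure on (0,∞) with density 1/x. For t ∈ [1, A/G) where A=(a+b)/2, G=√(ab), the distribution function μ_{w₀}(t) := μ({τ ∈ (a,b) : w₀(τ) > t}) equals 2·log((λ + √(λ² - t²))/t), where λ = A/G. -/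
/-!
Writing `G = √(ab)`, the quadratic `t τ² - (a + b) τ + t ab` has the roots `G / ρ` and `G ρ`,
where `ρ = (λ + √(λ² - t²)) / t` solves `t (ρ + ρ⁻¹) = 2λ`. Hence `{w₀ > t}` is the interval
`(G / ρ, G ρ)`, which lies in `(a, b) = {w₀ > 1}` because `t ≥ 1`, and its `dx / x`-measure is
`log (G ρ / (G / ρ)) = 2 log ρ`.
-/

open Set MeasureTheory

lemma one_lt_add_mul_div_iff {a b τ : ℝ} (ha : 0 < a) (hab : a ≤ b) :
    1 < (a + b) * τ / (a * b + τ ^ 2) ↔ τ ∈ Ioo a b := by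
  have hden : 0 < a * b + τ ^ 2 := by have := mul_pos ha (ha.trans_le hab); positivity
  rw [one_lt_div hden, mem_Ioo]
  constructor
  · intro h
    have hneg : (τ - a) * (τ - b) < 0 := by linarith
    rcases mul_neg_iff.mp hneg with ⟨h₁, h₂⟩ | ⟨h₁, h₂⟩
    · constructor <;> linarith
    · exact absurd hab (by linarith)
  · rintro ⟨h₁, h₂⟩
    nlinarith [mul_neg_of_pos_of_neg (sub_pos.mpr h₁) (sub_neg.mpr h₂)]

lemma one_le_and_mul_add_inv_eq {t lam : ℝ} (ht : 0 < t) (htlam : t ≤ lam) :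
    let ρ := (lam + √(lam ^ 2 - t ^ 2)) / t
    1 ≤ ρ ∧ t * (ρ + ρ⁻¹) = 2 * lam := by
  intro ρ
  have hd : 0 ≤ √(lam ^ 2 - t ^ 2) := Real.sqrt_nonneg _
  have hd2 : √(lam ^ 2 - t ^ 2) ^ 2 = lam ^ 2 - t ^ 2 :=
    Real.sq_sqrt (by nlinarith)
  refine ⟨(one_le_div ht).mpr (by linarith), ?_⟩
  have hpos : 0 < lam + √(lam ^ 2 - t ^ 2) := by linarith
  simp only [ρ, inv_div]
  field_simp
  linear_combination hd2

lemma withDensity_ofReal_one_div_Ioo {x y : ℝ} (hx : 0 < x) (hxy : x ≤ y) :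
    volume.withDensity (fun z => ENNReal.ofReal (1 / z)) (Ioo x y) =
      ENNReal.ofReal (Real.log (y / x)) := by
  have hint : IntegrableOn (fun z : ℝ => 1 / z) (Ioo x y) :=
    (continuousOn_const.div continuousOn_id fun z hz => (hx.trans_le hz.1).ne').integrableOn_Icc
      |>.mono_set Ioo_subset_Icc_self
  have hnonneg : 0 ≤ᵐ[volume.restrict (Ioo x y)] fun z : ℝ => 1 / z :=
    (ae_restrict_iff' measurableSet_Ioo).mpr <|
      .of_forall fun z hz => one_div_nonneg.mpr (hx.trans hz.1).le
  rw [withDensity_apply _ measurableSet_Ioo, ← ofReal_integral_eq_lintegral_ofReal hint hnonneg,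
    ← integral_Ioc_eq_integral_Ioo, ← intervalIntegral.integral_of_le hxy,
    integral_one_div_of_pos hx (hx.trans_le hxy)]

theorem stmt_12 (a b : ℝ) (ha : 0 < a) (hab : a < b)
    (A G lam : ℝ) (hA : A = (a + b) / 2) (hG : G = Real.sqrt (a * b))
    (hlam : lam = A / G)
    (w₀ : ℝ → ℝ) (hw₀ : ∀ τ, w₀ τ = (a + b) * τ / (a * b + τ ^ 2))
    (μ : Measure ℝ) (hμ : μ = volume.withDensity (fun x => ENNReal.ofReal (1 / x))) :
    ∀ t ∈ Ico (1 : ℝ) lam,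
      μ {τ ∈ Ioo a b | t < w₀ τ} =
        ENNReal.ofReal (2 * Real.log ((lam + Real.sqrt (lam ^ 2 - t ^ 2)) / t)) := by
  rintro t ⟨ht1, htlam⟩
  have ht : 0 < t := one_pos.trans_le ht1
  have hGpos : 0 < G := hG ▸ Real.sqrt_pos.mpr (mul_pos ha (ha.trans hab))
  have hG2 : G ^ 2 = a * b := hG ▸ Real.sq_sqrt (mul_pos ha (ha.trans hab)).le
  obtain ⟨hρ1, hρ⟩ := one_le_and_mul_add_inv_eq ht htlam.le
  set ρ := (lam + √(lam ^ 2 - t ^ 2)) / t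
  clear_value ρ
  have hρpos : 0 < ρ := one_pos.trans_le hρ1
  have hroots_le : G / ρ ≤ G * ρ :=
    (div_le_self hGpos.le hρ1).trans (le_mul_of_one_le_right hGpos.le hρ1)
  have hprod : G / ρ * (G * ρ) = a * b := by field_simp; exact hG2
  have hsum : t * (G / ρ + G * ρ) = a + b := by
    rw [hlam, hA] at hρ; field_simp at hρ ⊢; linear_combination hρ
  have hlevel : ∀ τ, t < w₀ τ ↔ τ ∈ Ioo (G / ρ) (G * ρ) := fun τ => by
    rw [hw₀, ← hsum, ← hprod, mul_assoc, mul_div_assoc, lt_mul_iff_one_lt_right ht,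
      one_lt_add_mul_div_iff (div_pos hGpos hρpos) hroots_le]
  have hset : {τ ∈ Ioo a b | t < w₀ τ} = Ioo (G / ρ) (G * ρ) := by
    ext τ
    refine ⟨fun h => (hlevel τ).mp h.2, fun h => ⟨?_, (hlevel τ).mpr h⟩⟩
    rw [← one_lt_add_mul_div_iff ha hab.le, ← hw₀]
    exact ht1.trans_lt ((hlevel τ).mpr h)
  have hratio : G * ρ / (G / ρ) = ρ ^ 2 := by field_simp
  rw [hμ, hset, withDensity_ofReal_one_div_Ioo (div_pos hGpos hρpos) hroots_le, hratio,
    Real.log_pow, Nat.cast_ofNat]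
end

section
/- Let 0 < b < 1, ζ(t) = 2/(1-t²), ϱ ≥ 0 a function on [0,b] such that ϱ/ζ is non-decreasing and bounded, h = ∫ ϱ, ψ = e^h, f(t) = t·ζ(t)²·ψ(t), g(t) = t·ζ(t)·ψ(t), F = ∫_0^· f ds. Define u = (g(b)/F(b))·(F/g) on [0,b]. Then u ≥ u₀ on [0,b], where u₀(t) = t/b. Moreover if ϱ ≢ 0 on [0,b) then u > u₀ on (0,b). -/
open Set MeasureTheory intervalIntegral Function

noncomputable def MM (b : ℝ) (ϱ : ℝ → ℝ) : ℝ → ℝ :=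
  fun s => ϱ (min (max s 0) b) / (2 / (1 - (min (max s 0) b) ^ 2))

noncomputable def RR (b : ℝ) (ϱ : ℝ → ℝ) : ℝ → ℝ := Function.rightLim (MM b ϱ)

noncomputable def mh (b : ℝ) (ϱ : ℝ → ℝ) : ℝ → ℝ := fun s => 1 + s * RR b ϱ s

section basic
variable {b : ℝ} {ϱ : ℝ → ℝ}

theorem proj_mem (hb : 0 ≤ b) (s : ℝ) : min (max s 0) b ∈ Icc (0:ℝ) b :=
  ⟨le_min (le_max_right _ _) hb, min_le_right _ _⟩

theorem proj_eq {s : ℝ} (hs : s ∈ Icc (0:ℝ) b) : min (max s 0) b = s := by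
  rw [max_eq_left hs.1, min_eq_left hs.2]

theorem MM_mono (hb : 0 ≤ b)
    (hmono : MonotoneOn (fun t => ϱ t / (2 / (1 - t ^ 2))) (Icc (0:ℝ) b)) :
    Monotone (MM b ϱ) := by
  intro s u hsu
  exact hmono (proj_mem hb s) (proj_mem hb u)
    (min_le_min (max_le_max hsu le_rfl) le_rfl)

theorem MM_eq {s : ℝ} (hs : s ∈ Icc (0:ℝ) b) : MM b ϱ s = ϱ s / (2 / (1 - s ^ 2)) := by
  rw [MM, proj_eq hs]

theorem zeta_pos {s : ℝ} (hb1 : b < 1) (hs : s ∈ Icc (0:ℝ) b) : 0 < 2 / (1 - s ^ 2) := by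
  have : 0 < 1 - s ^ 2 := by nlinarith [hs.1, hs.2]
  positivity

theorem MM_nonneg (hb1 : b < 1) (hϱpos : ∀ t ∈ Icc (0:ℝ) b, 0 ≤ ϱ t) (hb : 0 ≤ b) (s : ℝ) :
    0 ≤ MM b ϱ s :=
  div_nonneg (hϱpos _ (proj_mem hb s)) (zeta_pos hb1 (proj_mem hb s)).le

theorem RR_mono (hM : Monotone (MM b ϱ)) : Monotone (RR b ϱ) := by
  intro s u hsu
  rcases eq_or_lt_of_le hsu with rfl | h
  · exact le_rfl
  · exact (hM.rightLim_le (by linarith : s < (s+u)/2)).trans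
      (hM.le_rightLim (by linarith : (s+u)/2 ≤ u))

theorem MM_le_RR (hM : Monotone (MM b ϱ)) (s : ℝ) : MM b ϱ s ≤ RR b ϱ s :=
  hM.le_rightLim le_rfl

theorem RR_nonneg (hM : Monotone (MM b ϱ)) (hMn : ∀ s, 0 ≤ MM b ϱ s) (s : ℝ) :
    0 ≤ RR b ϱ s := (hMn s).trans (MM_le_RR hM s)

theorem mh_monoOn (hM : Monotone (MM b ϱ)) (hMn : ∀ s, 0 ≤ MM b ϱ s) :
    MonotoneOn (mh b ϱ) (Icc (0:ℝ) b) := by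
  intro s hs u hu hsu
  have := RR_nonneg hM hMn
  exact add_le_add le_rfl (mul_le_mul hsu (RR_mono hM hsu) (this s) hu.1)

theorem mh_nonneg (hM : Monotone (MM b ϱ)) (hMn : ∀ s, 0 ≤ MM b ϱ s) {s : ℝ}
    (hs : 0 ≤ s) : 0 ≤ mh b ϱ s := by
  have := mul_nonneg hs (RR_nonneg hM hMn s)
  simp only [mh]; linarith
end basic

section main
variable {b : ℝ} {ϱ : ℝ → ℝ}

theorem P_cont (hb : 0 ≤ b) (hϱint : IntervalIntegrable ϱ volume 0 b) :
    ContinuousOn (fun s => Real.exp (∫ x in (0:ℝ)..s, ϱ x)) (Icc (0:ℝ) b) := by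
  have := continuousOn_primitive_interval' hϱint (left_mem_uIcc (a := (0:ℝ)) (b := b))
  rw [uIcc_of_le hb] at this
  exact Real.continuous_exp.comp_continuousOn this

theorem ff_cont (hb : 0 ≤ b) (hb1 : b < 1) (hϱint : IntervalIntegrable ϱ volume 0 b) :
    ContinuousOn (fun s => s * (2 / (1 - s ^ 2)) ^ 2 * Real.exp (∫ x in (0:ℝ)..s, ϱ x))
      (Icc (0:ℝ) b) := by
  refine ContinuousOn.mul (ContinuousOn.mul continuousOn_id ?_) (P_cont hb hϱint)
  refine ContinuousOn.pow ?_ 2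
  exact continuousOn_const.div (by fun_prop) (fun s hs => by
    have : 0 < 1 - s ^ 2 := by nlinarith [hs.1, hs.2]
    exact ne_of_gt this)

theorem ff_int (hb : 0 ≤ b) (hb1 : b < 1) (hϱint : IntervalIntegrable ϱ volume 0 b) :
    IntervalIntegrable (fun s => s * (2 / (1 - s ^ 2)) ^ 2 * Real.exp (∫ x in (0:ℝ)..s, ϱ x))
      volume 0 b := by
  apply ContinuousOn.intervalIntegrable
  rw [uIcc_of_le hb]; exact ff_cont hb hb1 hϱint

theorem mh_int (hb : 0 ≤ b) (hM : Monotone (MM b ϱ)) (hMn : ∀ s, 0 ≤ MM b ϱ s) :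
    IntervalIntegrable (mh b ϱ) volume 0 b := by
  apply MonotoneOn.intervalIntegrable
  rw [uIcc_of_le hb]; exact mh_monoOn hM hMn

theorem ffm_int (hb : 0 ≤ b) (hb1 : b < 1) (hϱint : IntervalIntegrable ϱ volume 0 b)
    (hM : Monotone (MM b ϱ)) (hMn : ∀ s, 0 ≤ MM b ϱ s) :
    IntervalIntegrable
      (fun s => s * (2 / (1 - s ^ 2)) ^ 2 * Real.exp (∫ x in (0:ℝ)..s, ϱ x) * mh b ϱ s)
      volume 0 b := by
  apply (mh_int hb hM hMn).continuousOn_mul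
  rw [uIcc_of_le hb]; exact ff_cont hb hb1 hϱint

theorem key_id (hb : 0 < b) (hb1 : b < 1)
    (hϱpos : ∀ t ∈ Icc (0:ℝ) b, 0 ≤ ϱ t)
    (hmono : MonotoneOn (fun t => ϱ t / (2 / (1 - t ^ 2))) (Icc (0:ℝ) b))
    (hϱint : IntervalIntegrable ϱ volume 0 b) :
    ∀ t ∈ Icc (0:ℝ) b,
      (∫ s in (0:ℝ)..t,
        s * (2 / (1 - s ^ 2)) ^ 2 * Real.exp (∫ x in (0:ℝ)..s, ϱ x) * mh b ϱ s)
        = t ^ 2 * (2 / (1 - t ^ 2)) * Real.exp (∫ x in (0:ℝ)..t, ϱ x) := by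
  intro t ht
  have hM : Monotone (MM b ϱ) := MM_mono hb.le hmono
  have hMn : ∀ s, 0 ≤ MM b ϱ s := MM_nonneg hb1 hϱpos hb.le
  set P : ℝ → ℝ := fun s => Real.exp (∫ x in (0:ℝ)..s, ϱ x) with hP
  set Φ : ℝ → ℝ := fun s => s ^ 2 * (2 / (1 - s ^ 2)) * P s with hΦ
  have hΦcont : ContinuousOn Φ (Icc (0:ℝ) t) := by
    apply ContinuousOn.mono _ (Icc_subset_Icc le_rfl ht.2)
    refine ContinuousOn.mul (ContinuousOn.mul (by fun_prop) ?_) (P_cont hb.le hϱint)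
    exact continuousOn_const.div (by fun_prop) (fun s hs => by
      have : 0 < 1 - s ^ 2 := by nlinarith [hs.1, hs.2]
      exact ne_of_gt this)
  have hderiv : ∀ x ∈ Ioo (0:ℝ) t,
      HasDerivWithinAt Φ
        (x * (2 / (1 - x ^ 2)) ^ 2 * P x * mh b ϱ x) (Ioi x) x := by
    intro x hx
    have hx0 : 0 < x := hx.1
    have hxb : x < b := lt_of_lt_of_le hx.2 ht.2
    have h1x : (0:ℝ) < 1 - x ^ 2 := by nlinarith
    -- derivative of the primitive of ϱ from the right
    have hRtend : Filter.Tendsto (MM b ϱ) (nhdsWithin x (Ioi x)) (nhds (RR b ϱ x)) :=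
      hM.tendsto_rightLim x
    have hζtend : Filter.Tendsto (fun u : ℝ => 2 / (1 - u ^ 2)) (nhdsWithin x (Ioi x))
        (nhds (2 / (1 - x ^ 2))) := by
      apply ContinuousAt.continuousWithinAt
      exact ContinuousAt.div continuousAt_const (by fun_prop) (ne_of_gt h1x)
    have hϱtend : Filter.Tendsto ϱ (nhdsWithin x (Ioi x))
        (nhds (2 / (1 - x ^ 2) * RR b ϱ x)) := by
      refine (hζtend.mul hRtend).congr' ?_
      filter_upwards [Ioo_mem_nhdsGT_of_mem ⟨le_refl x, hxb⟩] with u hu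
      rw [MM_eq ⟨(hx0.trans hu.1).le, hu.2.le⟩, mul_comm,
        div_mul_cancel₀]
      have : 0 < 1 - u ^ 2 := by nlinarith [hu.1, hu.2]
      positivity
    have hmeas : StronglyMeasurableAtFilter ϱ (nhdsWithin x (Ioi x)) volume := by
      refine ⟨Ioo x b, Ioo_mem_nhdsGT_of_mem ⟨le_refl x, hxb⟩, ?_⟩
      exact hϱint.1.aestronglyMeasurable.mono_measure
        (Measure.restrict_mono (show Ioo x b ⊆ Ioc 0 b from fun u hu => ⟨hx0.trans hu.1, hu.2.le⟩) le_rfl)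
    have hsub : uIcc (0:ℝ) x ⊆ uIcc (0:ℝ) b := by
      rw [uIcc_of_le hx0.le, uIcc_of_le hb.le]
      exact Icc_subset_Icc le_rfl hxb.le
    have hh : HasDerivWithinAt (fun u => ∫ s in (0:ℝ)..u, ϱ s)
        (2 / (1 - x ^ 2) * RR b ϱ x) (Ici x) x :=
      integral_hasDerivWithinAt_of_tendsto_ae_right (hϱint.mono_set hsub) hmeas
        (hϱtend.mono_left inf_le_left)
    have hPd : HasDerivWithinAt P (P x * (2 / (1 - x ^ 2) * RR b ϱ x)) (Ici x) x := hh.exp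
    have hqd : HasDerivAt (fun s : ℝ => s ^ 2 * (2 / (1 - s ^ 2)))
        (2 * x * (2 / (1 - x ^ 2)) + x ^ 2 * (4 * x / (1 - x ^ 2) ^ 2)) x := by
      have h1 : HasDerivAt (fun s : ℝ => 1 - s ^ 2) (-(2 * x)) x := by
        simpa using (hasDerivAt_pow 2 x).const_sub 1
      have h2 : HasDerivAt (fun s : ℝ => 2 / (1 - s ^ 2)) (4 * x / (1 - x ^ 2) ^ 2) x := by
        have := (hasDerivAt_const x (2:ℝ)).div h1 (ne_of_gt h1x)
        exact this.congr_deriv (by ring)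
      have h3 := (hasDerivAt_pow 2 x).mul h2
      exact h3.congr_deriv (by push_cast; ring)
    have hmul := hqd.hasDerivWithinAt.mul hPd
    have heq : (2 * x * (2 / (1 - x ^ 2)) + x ^ 2 * (4 * x / (1 - x ^ 2) ^ 2)) * P x
        + x ^ 2 * (2 / (1 - x ^ 2)) * (P x * (2 / (1 - x ^ 2) * RR b ϱ x))
        = x * (2 / (1 - x ^ 2)) ^ 2 * P x * mh b ϱ x := by
      rw [mh]
      field_simp
      ring
    rw [heq] at hmul
    exact hmul.mono Ioi_subset_Ici_self
  have hint : IntervalIntegrable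
      (fun s => s * (2 / (1 - s ^ 2)) ^ 2 * Real.exp (∫ x in (0:ℝ)..s, ϱ x) * mh b ϱ s)
      volume 0 t := by
    refine (ffm_int hb.le hb1 hϱint hM hMn).mono_set ?_
    rw [uIcc_of_le ht.1, uIcc_of_le hb.le]
    exact Icc_subset_Icc le_rfl ht.2
  have := integral_eq_sub_of_hasDeriv_right_of_le ht.1 hΦcont hderiv hint
  rw [this]
  simp [hΦ, hP]

end main

theorem stmt_16 (b : ℝ) (hb : 0 < b) (hb1 : b < 1)
    (ϱ : ℝ → ℝ) (hϱpos : ∀ t ∈ Icc (0 : ℝ) b, 0 ≤ ϱ t)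
    (ζ : ℝ → ℝ) (hζ : ∀ t, ζ t = 2 / (1 - t ^ 2))
    (hmono : MonotoneOn (fun t => ϱ t / ζ t) (Icc (0 : ℝ) b))
    (hbdd : ∃ C : ℝ, ∀ t ∈ Icc (0 : ℝ) b, ϱ t / ζ t ≤ C)
    (hϱint : IntervalIntegrable ϱ volume 0 b)
    (ψ f g F u : ℝ → ℝ)
    (hψ : ∀ t, ψ t = Real.exp (∫ s in (0 : ℝ)..t, ϱ s))
    (hf : ∀ t, f t = t * (ζ t) ^ 2 * ψ t)
    (hg : ∀ t, g t = t * ζ t * ψ t)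
    (hF : ∀ t, F t = ∫ s in (0 : ℝ)..t, f s)
    (hu : ∀ t, u t = (g b / F b) * (F t / g t)) :
    (∀ t ∈ Icc (0 : ℝ) b, t / b ≤ u t) ∧
    ((∃ t ∈ Ico (0 : ℝ) b, ϱ t ≠ 0) → ∀ t ∈ Ioo (0 : ℝ) b, t / b < u t) := by
  simp only [hζ] at hmono
  simp only [hu, hF, hg, hf, hψ, hζ]
  have hM : Monotone (MM b ϱ) := MM_mono hb.le hmono
  have hMn : ∀ s, 0 ≤ MM b ϱ s := MM_nonneg hb1 hϱpos hb.le
  set ff : ℝ → ℝ := fun s => s * (2 / (1 - s ^ 2)) ^ 2 * Real.exp (∫ x in (0:ℝ)..s, ϱ x)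
    with hffdef
  have key := key_id hb hb1 hϱpos hmono hϱint
  have hffint : IntervalIntegrable ff volume 0 b := ff_int hb.le hb1 hϱint
  have hffmint : IntervalIntegrable (fun s => ff s * mh b ϱ s) volume 0 b :=
    ffm_int hb.le hb1 hϱint hM hMn
  have hsub : ∀ {t₁ t₂ : ℝ}, t₁ ∈ Icc (0:ℝ) b → t₂ ∈ Icc (0:ℝ) b →
      uIcc t₁ t₂ ⊆ uIcc (0:ℝ) b := fun h1 h2 =>
    uIcc_subset_uIcc (by rw [uIcc_of_le hb.le]; exact h1) (by rw [uIcc_of_le hb.le]; exact h2)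
  have hffpos : ∀ s ∈ Ioo (0:ℝ) b, 0 < ff s := by
    intro s hs
    have h1 : 0 < 1 - s ^ 2 := by nlinarith [hs.1, hs.2]
    have := Real.exp_pos (∫ x in (0:ℝ)..s, ϱ x)
    have := hs.1
    rw [hffdef]; positivity
  have hffnn : ∀ s ∈ Icc (0:ℝ) b, 0 ≤ ff s := by
    intro s hs
    have h1 : 0 < 1 - s ^ 2 := by nlinarith [hs.1, hs.2]
    have := (Real.exp_pos (∫ x in (0:ℝ)..s, ϱ x)).le
    have := hs.1
    rw [hffdef]; positivity
  have hmhmono := mh_monoOn hM hMn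
  have hFbpos : 0 < ∫ s in (0:ℝ)..b, ff s := intervalIntegral_pos_of_pos_on hffint hffpos hb
  -- the central comparison, weak form
  have hA₁le : ∀ t ∈ Icc (0:ℝ) b,
      (∫ s in (0:ℝ)..t, ff s * mh b ϱ s) ≤ mh b ϱ t * ∫ s in (0:ℝ)..t, ff s := by
    intro t ht
    have i1 : IntervalIntegrable (fun s => ff s * mh b ϱ s) volume 0 t :=
      hffmint.mono_set (hsub (left_mem_Icc.mpr hb.le) ht)
    have i2 : IntervalIntegrable (fun s => mh b ϱ t * ff s) volume 0 t :=
      (hffint.mono_set (hsub (left_mem_Icc.mpr hb.le) ht)).const_mul _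
    calc (∫ s in (0:ℝ)..t, ff s * mh b ϱ s) ≤ ∫ s in (0:ℝ)..t, mh b ϱ t * ff s := by
          apply integral_mono_on ht.1 i1 i2
          intro s hs
          have hsmem : s ∈ Icc (0:ℝ) b := ⟨hs.1, hs.2.trans ht.2⟩
          have := hmhmono hsmem ht hs.2
          have := hffnn s hsmem
          nlinarith
      _ = mh b ϱ t * ∫ s in (0:ℝ)..t, ff s := integral_const_mul _ _
  have hB₁ge : ∀ t ∈ Icc (0:ℝ) b,
      mh b ϱ t * (∫ s in t..b, ff s) ≤ ∫ s in t..b, ff s * mh b ϱ s := by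
    intro t ht
    have i1 : IntervalIntegrable (fun s => ff s * mh b ϱ s) volume t b :=
      hffmint.mono_set (hsub ht (right_mem_Icc.mpr hb.le))
    have i2 : IntervalIntegrable (fun s => mh b ϱ t * ff s) volume t b :=
      (hffint.mono_set (hsub ht (right_mem_Icc.mpr hb.le))).const_mul _
    calc mh b ϱ t * (∫ s in t..b, ff s) = ∫ s in t..b, mh b ϱ t * ff s :=
          (intervalIntegral.integral_const_mul _ _).symm
      _ ≤ ∫ s in t..b, ff s * mh b ϱ s := by
          apply integral_mono_on ht.2 i2 i1
          intro s hs
          have hsmem : s ∈ Icc (0:ℝ) b := ⟨ht.1.trans hs.1, hs.2⟩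
          have := hmhmono ht hsmem hs.1
          have := hffnn s hsmem
          nlinarith
  have hsplit : ∀ t ∈ Icc (0:ℝ) b,
      (∫ s in (0:ℝ)..t, ff s) + (∫ s in t..b, ff s) = ∫ s in (0:ℝ)..b, ff s := fun t ht =>
    integral_add_adjacent_intervals (hffint.mono_set (hsub (left_mem_Icc.mpr hb.le) ht))
      (hffint.mono_set (hsub ht (right_mem_Icc.mpr hb.le)))
  have hsplitm : ∀ t ∈ Icc (0:ℝ) b,
      (∫ s in (0:ℝ)..t, ff s * mh b ϱ s) + (∫ s in t..b, ff s * mh b ϱ s)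
        = ∫ s in (0:ℝ)..b, ff s * mh b ϱ s := fun t ht =>
    integral_add_adjacent_intervals (hffmint.mono_set (hsub (left_mem_Icc.mpr hb.le) ht))
      (hffmint.mono_set (hsub ht (right_mem_Icc.mpr hb.le)))
  have main : ∀ t ∈ Icc (0:ℝ) b,
      (∫ s in (0:ℝ)..b, ff s) * (∫ s in (0:ℝ)..t, ff s * mh b ϱ s)
        ≤ (∫ s in (0:ℝ)..b, ff s * mh b ϱ s) * (∫ s in (0:ℝ)..t, ff s) := by
    intro t ht
    have hA0 : 0 ≤ ∫ s in (0:ℝ)..t, ff s :=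
      integral_nonneg ht.1 (fun s hs => hffnn s ⟨hs.1, hs.2.trans ht.2⟩)
    have hB0 : 0 ≤ ∫ s in t..b, ff s :=
      integral_nonneg ht.2 (fun s hs => hffnn s ⟨ht.1.trans hs.1, hs.2⟩)
    have h1 := mul_le_mul_of_nonneg_left (hA₁le t ht) hB0
    have h2 := mul_le_mul_of_nonneg_left (hB₁ge t ht) hA0
    have h3 : (∫ s in t..b, ff s) * (mh b ϱ t * ∫ s in (0:ℝ)..t, ff s)
        = (∫ s in (0:ℝ)..t, ff s) * (mh b ϱ t * ∫ s in t..b, ff s) := by ring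
    have h4 : (∫ s in t..b, ff s) * (∫ s in (0:ℝ)..t, ff s * mh b ϱ s)
        ≤ (∫ s in (0:ℝ)..t, ff s) * (∫ s in t..b, ff s * mh b ϱ s) := by linarith
    rw [← hsplit t ht, ← hsplitm t ht]
    nlinarith [h4]
  constructor
  · intro t ht
    rcases eq_or_lt_of_le ht.1 with rfl | ht0
    · simp
    · have h1t : 0 < 1 - t ^ 2 := by nlinarith [ht.2]
      have h1b : 0 < 1 - b ^ 2 := by nlinarith
      have hPt : 0 < Real.exp (∫ x in (0:ℝ)..t, ϱ x) := Real.exp_pos _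
      have hPb : 0 < Real.exp (∫ x in (0:ℝ)..b, ϱ x) := Real.exp_pos _
      have hgt : 0 < t * (2 / (1 - t ^ 2)) * Real.exp (∫ x in (0:ℝ)..t, ϱ x) := by positivity
      have hgb : 0 < b * (2 / (1 - b ^ 2)) * Real.exp (∫ x in (0:ℝ)..b, ϱ x) := by positivity
      rw [div_mul_div_comm, div_le_div_iff₀ hb (by positivity)]
      calc t * ((∫ s in (0:ℝ)..b, ff s) * (t * (2 / (1 - t ^ 2)) * Real.exp (∫ x in (0:ℝ)..t, ϱ x)))
          = (∫ s in (0:ℝ)..b, ff s) * (t ^ 2 * (2 / (1 - t ^ 2)) * Real.exp (∫ x in (0:ℝ)..t, ϱ x)) := by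
            ring
        _ = (∫ s in (0:ℝ)..b, ff s) * (∫ s in (0:ℝ)..t, ff s * mh b ϱ s) := by rw [key t ht]
        _ ≤ (∫ s in (0:ℝ)..b, ff s * mh b ϱ s) * (∫ s in (0:ℝ)..t, ff s) := main t ht
        _ = (b ^ 2 * (2 / (1 - b ^ 2)) * Real.exp (∫ x in (0:ℝ)..b, ϱ x)) * (∫ s in (0:ℝ)..t, ff s) := by
            rw [key b (right_mem_Icc.mpr hb.le)]
        _ = b * (2 / (1 - b ^ 2)) * Real.exp (∫ x in (0:ℝ)..b, ϱ x) * (∫ s in (0:ℝ)..t, ff s) * b := by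
            ring
  · rintro ⟨t₀, ht₀, hϱt₀⟩ t ht
    have ht' : t ∈ Icc (0:ℝ) b := ⟨ht.1.le, ht.2.le⟩
    have hMt₀ : 0 < MM b ϱ t₀ := by
      rw [MM_eq ⟨ht₀.1, ht₀.2.le⟩]
      have h0 : 0 < ϱ t₀ := lt_of_le_of_ne (hϱpos t₀ ⟨ht₀.1, ht₀.2.le⟩) (Ne.symm hϱt₀)
      have h1 : 0 < 2 / (1 - t₀ ^ 2) := zeta_pos hb1 ⟨ht₀.1, ht₀.2.le⟩
      positivity
    set r := max t t₀ with hrdef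
    have hrb : r < b := max_lt ht.2 ht₀.2
    have htr : t ≤ r := le_max_left _ _
    have hr0 : 0 ≤ r := ht.1.le.trans htr
    have hrmem : r ∈ Icc (0:ℝ) b := ⟨hr0, hrb.le⟩
    have hmhs : ∀ s ∈ Ioo r b, mh b ϱ t < mh b ϱ s := by
      intro s hs
      have hts : t < s := lt_of_le_of_lt htr hs.1
      have ht₀s : t₀ ≤ s := (le_max_right t t₀).trans hs.1.le
      have hRs : 0 < RR b ϱ s := lt_of_lt_of_le hMt₀ ((hM ht₀s).trans (MM_le_RR hM s))
      have hRts : RR b ϱ t ≤ RR b ϱ s := RR_mono hM hts.le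
      have : t * RR b ϱ t < s * RR b ϱ s :=
        lt_of_le_of_lt (mul_le_mul_of_nonneg_left hRts ht.1.le)
          (mul_lt_mul_of_pos_right hts hRs)
      simp only [mh]; linarith
    have hApos : 0 < ∫ s in (0:ℝ)..t, ff s :=
      intervalIntegral_pos_of_pos_on (hffint.mono_set (hsub (left_mem_Icc.mpr hb.le) ht'))
        (fun s hs => hffpos s ⟨hs.1, hs.2.trans ht.2⟩) ht.1
    have hBpos : 0 < ∫ s in t..b, ff s :=
      intervalIntegral_pos_of_pos_on (hffint.mono_set (hsub ht' (right_mem_Icc.mpr hb.le)))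
        (fun s hs => hffpos s ⟨ht.1.trans hs.1, hs.2⟩) ht.2
    -- strict inequality on [t, b]
    have hstrict : mh b ϱ t * (∫ s in t..b, ff s) < ∫ s in t..b, ff s * mh b ϱ s := by
      have int_tr_ff : IntervalIntegrable ff volume t r := hffint.mono_set (hsub ht' hrmem)
      have int_rb_ff : IntervalIntegrable ff volume r b :=
        hffint.mono_set (hsub hrmem (right_mem_Icc.mpr hb.le))
      have int_tr_m : IntervalIntegrable (fun s => ff s * mh b ϱ s) volume t r :=
        hffmint.mono_set (hsub ht' hrmem)
      have int_rb_m : IntervalIntegrable (fun s => ff s * mh b ϱ s) volume r b :=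
        hffmint.mono_set (hsub hrmem (right_mem_Icc.mpr hb.le))
      have e1 : (∫ s in t..r, ff s) + (∫ s in r..b, ff s) = ∫ s in t..b, ff s :=
        integral_add_adjacent_intervals int_tr_ff int_rb_ff
      have e2 : (∫ s in t..r, ff s * mh b ϱ s) + (∫ s in r..b, ff s * mh b ϱ s)
          = ∫ s in t..b, ff s * mh b ϱ s :=
        integral_add_adjacent_intervals int_tr_m int_rb_m
      have i1 : mh b ϱ t * (∫ s in t..r, ff s) ≤ ∫ s in t..r, ff s * mh b ϱ s := by
        calc mh b ϱ t * (∫ s in t..r, ff s) = ∫ s in t..r, mh b ϱ t * ff s :=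
              (intervalIntegral.integral_const_mul _ _).symm
          _ ≤ ∫ s in t..r, ff s * mh b ϱ s := by
              apply integral_mono_on htr (int_tr_ff.const_mul _) int_tr_m
              intro s hs
              have hsmem : s ∈ Icc (0:ℝ) b := ⟨ht.1.le.trans hs.1, hs.2.trans hrb.le⟩
              have := hmhmono ht' hsmem hs.1
              have := hffnn s hsmem
              nlinarith
      have i2 : mh b ϱ t * (∫ s in r..b, ff s) < ∫ s in r..b, ff s * mh b ϱ s := by
        have hpos : 0 < ∫ s in r..b, (ff s * mh b ϱ s - mh b ϱ t * ff s) := by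
          apply intervalIntegral_pos_of_pos_on (int_rb_m.sub (int_rb_ff.const_mul _)) _ hrb
          intro s hs
          have hffs : 0 < ff s := hffpos s ⟨lt_of_le_of_lt hr0 hs.1, hs.2⟩
          have := hmhs s hs
          nlinarith
        rw [integral_sub int_rb_m (int_rb_ff.const_mul _), sub_pos, intervalIntegral.integral_const_mul] at hpos
        exact hpos
      rw [← e1, ← e2, mul_add]
      linarith
    have mainlt : (∫ s in (0:ℝ)..b, ff s) * (∫ s in (0:ℝ)..t, ff s * mh b ϱ s)
        < (∫ s in (0:ℝ)..b, ff s * mh b ϱ s) * (∫ s in (0:ℝ)..t, ff s) := by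
      have h1 := mul_le_mul_of_nonneg_left (hA₁le t ht') hBpos.le
      have h2 := mul_lt_mul_of_pos_left hstrict hApos
      have h3 : (∫ s in t..b, ff s) * (mh b ϱ t * ∫ s in (0:ℝ)..t, ff s)
          = (∫ s in (0:ℝ)..t, ff s) * (mh b ϱ t * ∫ s in t..b, ff s) := by ring
      have h4 : (∫ s in t..b, ff s) * (∫ s in (0:ℝ)..t, ff s * mh b ϱ s)
          < (∫ s in (0:ℝ)..t, ff s) * (∫ s in t..b, ff s * mh b ϱ s) := by linarith
      rw [← hsplit t ht', ← hsplitm t ht']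
      nlinarith [h4]
    have h1t : 0 < 1 - t ^ 2 := by nlinarith [ht.1, ht.2]
    have h1b : 0 < 1 - b ^ 2 := by nlinarith
    have hPt : 0 < Real.exp (∫ x in (0:ℝ)..t, ϱ x) := Real.exp_pos _
    have hPb : 0 < Real.exp (∫ x in (0:ℝ)..b, ϱ x) := Real.exp_pos _
    have ht0 : 0 < t := ht.1
    rw [div_mul_div_comm, div_lt_div_iff₀ hb (by positivity)]
    calc t * ((∫ s in (0:ℝ)..b, ff s) * (t * (2 / (1 - t ^ 2)) * Real.exp (∫ x in (0:ℝ)..t, ϱ x)))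
        = (∫ s in (0:ℝ)..b, ff s) * (t ^ 2 * (2 / (1 - t ^ 2)) * Real.exp (∫ x in (0:ℝ)..t, ϱ x)) := by
          ring
      _ = (∫ s in (0:ℝ)..b, ff s) * (∫ s in (0:ℝ)..t, ff s * mh b ϱ s) := by rw [key t ht']
      _ < (∫ s in (0:ℝ)..b, ff s * mh b ϱ s) * (∫ s in (0:ℝ)..t, ff s) := mainlt
      _ = (b ^ 2 * (2 / (1 - b ^ 2)) * Real.exp (∫ x in (0:ℝ)..b, ϱ x)) * (∫ s in (0:ℝ)..t, ff s) := by
          rw [key b (right_mem_Icc.mpr hb.le)]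
      _ = b * (2 / (1 - b ^ 2)) * Real.exp (∫ x in (0:ℝ)..b, ϱ x) * (∫ s in (0:ℝ)..t, ff s) * b := by
          ring
end

section
/- Let 0 ≤ a < b < 1, ζ(t) = 2/(1-t²), and let ϱ ≥ 0 on [a,b] with ϱ/ζ non-decreasing and bounded. Let h be a primitive of ϱ, ψ = e^h, f(t) = tζ(t)²ψ(t), g(t) = tζ(t)ψ(t), and m := (g(b) - g(a))/∫_a^b f dt. Then m ≤ (ϱ/ζ)(b⁻) + m₀, where m₀ = (b·ζ(b) - a·ζ(a))/(ζ(b) - ζ(a)). Equality holds if and only if ϱ ≡ 0 on [a,b). -/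
open Set MeasureTheory intervalIntegral Filter

lemma exp_sub_le {x y : ℝ} (h : x ≤ y) :
    Real.exp x * (y - x) ≤ Real.exp y - Real.exp x ∧
      Real.exp y - Real.exp x ≤ Real.exp y * (y - x) := by
  have h1 := Real.add_one_le_exp (y - x)
  have h2 := Real.add_one_le_exp (x - y)
  have e1 : Real.exp x * Real.exp (y - x) = Real.exp y := by
    rw [← Real.exp_add]; congr 1; ring
  have e2 : Real.exp y * Real.exp (x - y) = Real.exp x := by
    rw [← Real.exp_add]; congr 1; ring
  constructor
  · nlinarith [Real.exp_pos x]
  · nlinarith [Real.exp_pos y]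

lemma step_aux (s u : ℝ) (hsu : s ≤ u) (ϱ ψ w w' : ℝ → ℝ)
    (hϱ0 : ∀ t ∈ Icc s u, 0 ≤ ϱ t)
    (hϱint : IntervalIntegrable ϱ volume s u)
    (hψcont : ContinuousOn ψ (Icc s u))
    (hψmono : ∀ t ∈ Icc s u, ψ s ≤ ψ t ∧ ψ t ≤ ψ u)
    (hψs : 0 < ψ s)
    (δ B Mw Mw' : ℝ)
    (hδ : ∫ x in s..u, ϱ x = δ)
    (hinc1 : ψ s * δ ≤ ψ u - ψ s) (hinc2 : ψ u - ψ s ≤ ψ u * δ)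
    (hB : ψ u ≤ B)
    (hw : ∀ t ∈ Icc s u, HasDerivAt w (w' t) t)
    (hw'c : ContinuousOn w' (Icc s u))
    (hw'0 : ∀ t ∈ Icc s u, 0 ≤ w' t)
    (hMw : ∀ t ∈ Icc s u, |w t| ≤ Mw)
    (hMw' : ∀ t ∈ Icc s u, w' t ≤ Mw') :
    |w u * ψ u - w s * ψ s - ∫ t in s..u, (w' t + w t * ϱ t) * ψ t| ≤
      B * δ * (2 * Mw' * (u - s) + Mw * δ) := by
  have huIcc : uIcc s u = Icc s u := uIcc_of_le hsu
  have hus : (0:ℝ) ≤ u - s := sub_nonneg.2 hsu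
  have hδ0 : 0 ≤ δ := hδ ▸ intervalIntegral.integral_nonneg hsu hϱ0
  have hsmem : s ∈ Icc s u := ⟨le_rfl, hsu⟩
  have humem : u ∈ Icc s u := ⟨hsu, le_rfl⟩
  have hψu : 0 < ψ u := lt_of_lt_of_le hψs (hψmono u humem).1
  have hψpos : ∀ t ∈ Icc s u, 0 < ψ t := fun t ht => lt_of_lt_of_le hψs (hψmono t ht).1
  have hB0 : 0 ≤ B := le_trans hψu.le hB
  have hMw'0 : 0 ≤ Mw' := le_trans (hw'0 s hsmem) (hMw' s hsmem)
  have hMw0 : 0 ≤ Mw := le_trans (abs_nonneg _) (hMw s hsmem)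
  have hwc : ContinuousOn w (Icc s u) := fun t ht =>
    (hw t ht).continuousAt.continuousWithinAt
  have hw'int : IntervalIntegrable w' volume s u := by
    apply ContinuousOn.intervalIntegrable; rwa [huIcc]
  have hϱψint : IntervalIntegrable (fun t => ϱ t * ψ t) volume s u := by
    apply hϱint.mul_continuousOn; rwa [huIcc]
  have hw'ψint : IntervalIntegrable (fun t => w' t * ψ t) volume s u := by
    apply ContinuousOn.intervalIntegrable; rw [huIcc]; exact hw'c.mul hψcont
  have hwψϱint : IntervalIntegrable (fun t => ϱ t * (w t * ψ t)) volume s u := by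
    apply hϱint.mul_continuousOn; rw [huIcc]; exact hwc.mul hψcont
  have hFTC : ∫ t in s..u, w' t = w u - w s := by
    apply integral_eq_sub_of_hasDerivAt (fun t ht => hw t (huIcc ▸ ht)) hw'int
  have hwdiff : ∀ t ∈ Icc s u, 0 ≤ w t - w s ∧ w t - w s ≤ Mw' * (u - s) := by
    intro t ht
    have hst : s ≤ t := ht.1
    have hsubc : ContinuousOn w' (Icc s t) := hw'c.mono (Icc_subset_Icc le_rfl ht.2)
    have hsub : IntervalIntegrable w' volume s t := by
      apply ContinuousOn.intervalIntegrable; rwa [uIcc_of_le hst]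
    have hss : Icc s t ⊆ Icc s u := Icc_subset_Icc le_rfl ht.2
    have hFTCt : ∫ x in s..t, w' x = w t - w s := by
      apply integral_eq_sub_of_hasDerivAt
        (fun x hx => hw x (hss ((uIcc_of_le hst) ▸ hx))) hsub
    constructor
    · rw [← hFTCt]
      exact intervalIntegral.integral_nonneg hst (fun x hx => hw'0 x (hss hx))
    · rw [← hFTCt]
      calc ∫ x in s..t, w' x ≤ ∫ _x in s..t, Mw' :=
            integral_mono_on hst hsub intervalIntegrable_const
              (fun x hx => hMw' x (hss hx))
        _ = (t - s) * Mw' := by simp [smul_eq_mul]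
        _ ≤ (u - s) * Mw' := mul_le_mul_of_nonneg_right (by linarith [ht.2]) hMw'0
        _ = Mw' * (u - s) := mul_comm _ _
  set I := ∫ t in s..u, ϱ t * ψ t with hIdef
  have hI1 : ψ s * δ ≤ I := by
    rw [← hδ, ← intervalIntegral.integral_const_mul]
    exact integral_mono_on hsu (hϱint.const_mul _) hϱψint
      (fun t ht => by nlinarith [hϱ0 t ht, (hψmono t ht).1])
  have hI2 : I ≤ ψ u * δ := by
    rw [← hδ, ← intervalIntegral.integral_const_mul]
    exact integral_mono_on hsu hϱψint (hϱint.const_mul _)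
      (fun t ht => by nlinarith [hϱ0 t ht, (hψmono t ht).2])
  have hIB : I ≤ B * δ := le_trans hI2 (mul_le_mul_of_nonneg_right hB hδ0)
  have hsplit : (∫ t in s..u, (w' t + w t * ϱ t) * ψ t)
      = (∫ t in s..u, w' t * ψ t) + ∫ t in s..u, ϱ t * (w t * ψ t) := by
    rw [← intervalIntegral.integral_add hw'ψint hwψϱint]
    exact intervalIntegral.integral_congr fun t _ => by ring
  have ht1 : (∫ t in s..u, w' t * (ψ u - ψ t))
      = (w u - w s) * ψ u - ∫ t in s..u, w' t * ψ t := by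
    have e : (fun t => w' t * (ψ u - ψ t)) = fun t => w' t * ψ u - w' t * ψ t := by
      funext t; ring
    rw [e, intervalIntegral.integral_sub (hw'int.mul_const _) hw'ψint,
      intervalIntegral.integral_mul_const, hFTC]
  have ht3 : (∫ t in s..u, (w s - w t) * (ϱ t * ψ t))
      = w s * I - ∫ t in s..u, ϱ t * (w t * ψ t) := by
    have e : (fun t => (w s - w t) * (ϱ t * ψ t))
        = fun t => w s * (ϱ t * ψ t) - ϱ t * (w t * ψ t) := by funext t; ring
    rw [e, intervalIntegral.integral_sub (hϱψint.const_mul _) hwψϱint,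
      intervalIntegral.integral_const_mul]
  have hterm3int : IntervalIntegrable (fun t => (w s - w t) * (ϱ t * ψ t)) volume s u := by
    have e : (fun t => (w s - w t) * (ϱ t * ψ t))
        = fun t => ϱ t * ((w s - w t) * ψ t) := by funext t; ring
    rw [e]; apply hϱint.mul_continuousOn; rw [huIcc]
    exact (continuousOn_const.sub hwc).mul hψcont
  have hterm1int : IntervalIntegrable (fun t => w' t * (ψ u - ψ t)) volume s u := by
    apply ContinuousOn.intervalIntegrable; rw [huIcc]
    exact hw'c.mul (continuousOn_const.sub hψcont)
  have hb1u : (∫ t in s..u, w' t * (ψ u - ψ t)) ≤ Mw' * (B * δ) * (u - s) := by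
    calc (∫ t in s..u, w' t * (ψ u - ψ t)) ≤ ∫ _t in s..u, Mw' * (B * δ) := by
          apply integral_mono_on hsu hterm1int intervalIntegrable_const
          intro t ht
          have h1 : 0 ≤ ψ u - ψ t := sub_nonneg.2 (hψmono t ht).2
          have h2 : ψ u - ψ t ≤ B * δ := by nlinarith [hinc2, hB, hδ0, (hψmono t ht).1]
          exact mul_le_mul (hMw' t ht) h2 h1 hMw'0
      _ = (u - s) * (Mw' * (B * δ)) := by simp [smul_eq_mul]; ring
      _ = Mw' * (B * δ) * (u - s) := by ring
  have hb1l : 0 ≤ ∫ t in s..u, w' t * (ψ u - ψ t) :=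
    intervalIntegral.integral_nonneg hsu
      (fun t ht => mul_nonneg (hw'0 t ht) (sub_nonneg.2 (hψmono t ht).2))
  have hb2 : |w s * ((ψ u - ψ s) - I)| ≤ Mw * (B * δ * δ) := by
    rw [abs_mul]
    have h1 : |(ψ u - ψ s) - I| ≤ B * δ * δ := by
      rw [abs_le]
      constructor
      · nlinarith [hI2, hinc1, mul_le_mul_of_nonneg_right hinc2 hδ0,
          mul_le_mul_of_nonneg_right (mul_le_mul_of_nonneg_right hB hδ0) hδ0, hψs, hδ0]
      · nlinarith [hI1, hinc2, mul_le_mul_of_nonneg_right hinc2 hδ0,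
          mul_le_mul_of_nonneg_right (mul_le_mul_of_nonneg_right hB hδ0) hδ0, hψs, hδ0]
    exact mul_le_mul (hMw s hsmem) h1 (abs_nonneg _) hMw0
  have hb3l : -(Mw' * (u - s)) * (B * δ) ≤ ∫ t in s..u, (w s - w t) * (ϱ t * ψ t) := by
    have hc0 : 0 ≤ Mw' * (u - s) := mul_nonneg hMw'0 hus
    calc -(Mw' * (u - s)) * (B * δ) ≤ -(Mw' * (u - s)) * I := by nlinarith [hIB]
      _ = ∫ t in s..u, -(Mw' * (u - s)) * (ϱ t * ψ t) := by
          rw [intervalIntegral.integral_const_mul]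
      _ ≤ ∫ t in s..u, (w s - w t) * (ϱ t * ψ t) := by
          apply integral_mono_on hsu (hϱψint.const_mul _) hterm3int
          intro t ht
          have := (hwdiff t ht).2
          exact mul_le_mul_of_nonneg_right (by linarith)
            (mul_nonneg (hϱ0 t ht) (hψpos t ht).le)
  have hb3u : (∫ t in s..u, (w s - w t) * (ϱ t * ψ t)) ≤ 0 := by
    have h0 : 0 ≤ ∫ t in s..u, (w t - w s) * (ϱ t * ψ t) :=
      intervalIntegral.integral_nonneg hsu
        (fun t ht => mul_nonneg (hwdiff t ht).1 (mul_nonneg (hϱ0 t ht) (hψpos t ht).le))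
    have e : (∫ t in s..u, (w s - w t) * (ϱ t * ψ t))
        = -∫ t in s..u, (w t - w s) * (ϱ t * ψ t) := by
      rw [← intervalIntegral.integral_neg]
      exact intervalIntegral.integral_congr fun t _ => by ring
    rw [e]; linarith
  have hE : w u * ψ u - w s * ψ s - (∫ t in s..u, (w' t + w t * ϱ t) * ψ t)
      = (∫ t in s..u, w' t * (ψ u - ψ t)) + w s * ((ψ u - ψ s) - I)
        + ∫ t in s..u, (w s - w t) * (ϱ t * ψ t) := by
    rw [hsplit, ht1, ht3]; ring
  rw [hE]
  have hb2' := abs_le.1 hb2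
  rw [abs_le]
  have hc1 : 0 ≤ Mw' * (B * δ) * (u - s) :=
    mul_nonneg (mul_nonneg hMw'0 (mul_nonneg hB0 hδ0)) hus
  have he1 : B * δ * (2 * Mw' * (u - s) + Mw * δ)
      = Mw' * (B * δ) * (u - s) + Mw * (B * δ * δ) + -(Mw' * (u - s)) * (B * δ) * (-1) := by
    ring
  constructor
  · linarith [hb1l, hb2'.1, hb3l, hc1]
  · linarith [hb1u, hb2'.2, hb3u, hc1]

lemma ibp_aux (a b : ℝ) (hab : a ≤ b) (ϱ w w' : ℝ → ℝ)
    (hϱ0 : ∀ t ∈ Icc a b, 0 ≤ ϱ t)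
    (hϱint : IntervalIntegrable ϱ volume a b)
    (hw : ∀ t ∈ Icc a b, HasDerivAt w (w' t) t)
    (hw'c : ContinuousOn w' (Icc a b))
    (hw'0 : ∀ t ∈ Icc a b, 0 ≤ w' t) :
    w b * Real.exp (∫ s in a..b, ϱ s) - w a =
      ∫ t in a..b, (w' t + w t * ϱ t) * Real.exp (∫ s in a..t, ϱ s) := by
  have huab : uIcc a b = Icc a b := uIcc_of_le hab
  have hamem : a ∈ Icc a b := ⟨le_rfl, hab⟩
  have hbmem : b ∈ Icc a b := ⟨hab, le_rfl⟩
  have hsubI : ∀ {s u : ℝ}, s ∈ Icc a b → u ∈ Icc a b →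
      IntervalIntegrable ϱ volume s u := by
    intro s u hs hu
    apply hϱint.mono_set
    have hs' : s ∈ uIcc a b := huab.symm ▸ hs
    have hu' : u ∈ uIcc a b := huab.symm ▸ hu
    exact uIcc_subset_uIcc hs' hu'
  set H : ℝ → ℝ := fun t => ∫ s in a..t, ϱ s with hH
  set ψ : ℝ → ℝ := fun t => Real.exp (H t) with hψdef
  have hsplit : ∀ s ∈ Icc a b, ∀ u ∈ Icc a b, ∫ x in s..u, ϱ x = H u - H s := by
    intro s hs u hu
    exact (integral_interval_sub_left (hsubI hamem hu) (hsubI hamem hs)).symm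
  have hHa : H a = 0 := integral_same
  have hHmono : ∀ s ∈ Icc a b, ∀ u ∈ Icc a b, s ≤ u → H s ≤ H u := by
    intro s hs u hu hsu
    have h1 := hsplit s hs u hu
    have h0 : 0 ≤ ∫ x in s..u, ϱ x :=
      intervalIntegral.integral_nonneg hsu
        (fun x hx => hϱ0 x ⟨le_trans hs.1 hx.1, le_trans hx.2 hu.2⟩)
    linarith
  have hHcont : ContinuousOn H (Icc a b) := by
    have := intervalIntegral.continuousOn_primitive_interval' hϱint left_mem_uIcc
    rwa [huab] at this
  have hψcont : ContinuousOn ψ (Icc a b) := Real.continuous_exp.comp_continuousOn hHcont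
  have hψpos : ∀ t, 0 < ψ t := fun t => Real.exp_pos _
  have hψmono : ∀ s ∈ Icc a b, ∀ u ∈ Icc a b, s ≤ u → ψ s ≤ ψ u :=
    fun s hs u hu hsu => Real.exp_le_exp.2 (hHmono s hs u hu hsu)
  set B := ψ b with hBdef
  have hB : ∀ t ∈ Icc a b, ψ t ≤ B := fun t ht => hψmono t ht b hbmem ht.2
  have hB0 : 0 ≤ B := (hψpos b).le
  have hwc : ContinuousOn w (Icc a b) := fun t ht =>
    (hw t ht).continuousAt.continuousWithinAt
  obtain ⟨Mw, hMwn⟩ := isCompact_Icc.exists_bound_of_continuousOn hwc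
  have hMw : ∀ t ∈ Icc a b, |w t| ≤ Mw := by
    intro t ht; have := hMwn t ht; rwa [Real.norm_eq_abs] at this
  have hMw0 : 0 ≤ Mw := le_trans (abs_nonneg _) (hMw a hamem)
  obtain ⟨Mw', hMw'n⟩ := isCompact_Icc.exists_bound_of_continuousOn hw'c
  have hMw' : ∀ t ∈ Icc a b, w' t ≤ Mw' := by
    intro t ht; have := hMw'n t ht; rw [Real.norm_eq_abs] at this
    exact le_trans (le_abs_self _) this
  have hMw'0 : 0 ≤ Mw' := le_trans (hw'0 a hamem) (hMw' a hamem)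
  have hΦint : ∀ s ∈ Icc a b, ∀ u ∈ Icc a b,
      IntervalIntegrable (fun t => (w' t + w t * ϱ t) * ψ t) volume s u := by
    intro s hs u hu
    have hsub : uIcc s u ⊆ Icc a b := by
      have hs' : s ∈ uIcc a b := huab.symm ▸ hs
      have hu' : u ∈ uIcc a b := huab.symm ▸ hu
      exact huab ▸ uIcc_subset_uIcc hs' hu'
    have e : (fun t => (w' t + w t * ϱ t) * ψ t)
        = fun t => w' t * ψ t + ϱ t * (w t * ψ t) := by funext t; ring
    rw [e]
    apply IntervalIntegrable.add
    · exact (((hw'c.mono hsub).mul (hψcont.mono hsub))).intervalIntegrable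
    · exact (hsubI hs hu).mul_continuousOn ((hwc.mono hsub).mul (hψcont.mono hsub))
  have hHb0 : 0 ≤ H b := by have := hHmono a hamem b hbmem hab; linarith [hHa ▸ this]
  have key : ∀ N : ℕ, 0 < N →
      |w b * ψ b - w a * ψ a - ∫ t in a..b, (w' t + w t * ϱ t) * ψ t| ≤
        H b * (B * (2 * Mw' * (b - a) + Mw * H b)) / N := by
    intro N hN
    have hN0 : (0:ℝ) < N := by exact_mod_cast hN
    set Δ := H b / N with hΔdef
    have hΔ0 : 0 ≤ Δ := div_nonneg hHb0 hN0.le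
    have hNΔ : (N:ℝ) * Δ = H b := by rw [hΔdef]; field_simp
    set S : ℕ → Set ℝ := fun i => Icc a b ∩ H ⁻¹' (Ici (i * Δ)) with hSdef
    have hSb : ∀ i : ℕ, i ≤ N → b ∈ S i := by
      intro i hi
      refine ⟨hbmem, ?_⟩
      simp only [mem_preimage, mem_Ici]
      rw [← hNΔ]
      exact mul_le_mul_of_nonneg_right (by exact_mod_cast hi) hΔ0
    have hSbdd : ∀ i, BddBelow (S i) := fun i => ⟨a, fun x hx => hx.1.1⟩
    have hSclosed : ∀ i, IsClosed (S i) := fun i =>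
      hHcont.preimage_isClosed_of_isClosed isClosed_Icc isClosed_Ici
    set T : ℕ → ℝ := fun i => sInf (S i) with hTdef
    have hTmem : ∀ i ≤ N, T i ∈ S i := fun i hi =>
      (hSclosed i).csInf_mem ⟨b, hSb i hi⟩ (hSbdd i)
    have hTimem : ∀ i ≤ N, T i ∈ Icc a b := fun i hi => (hTmem i hi).1
    have hT0 : T 0 = a := by
      apply le_antisymm
      · exact csInf_le (hSbdd 0) ⟨hamem, by simp [hHa]⟩
      · exact le_csInf ⟨b, hSb 0 (Nat.zero_le N)⟩ (fun x hx => hx.1.1)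
    have hTmono : ∀ i j : ℕ, i ≤ j → j ≤ N → T i ≤ T j := by
      intro i j hij hj
      apply csInf_le_csInf (hSbdd i) ⟨b, hSb j hj⟩
      intro x hx
      refine ⟨hx.1, ?_⟩
      have := hx.2
      simp only [mem_preimage, mem_Ici] at this ⊢
      calc (i:ℝ) * Δ ≤ (j:ℝ) * Δ :=
            mul_le_mul_of_nonneg_right (by exact_mod_cast hij) hΔ0
        _ ≤ H x := this
    have hTH : ∀ i ≤ N, H (T i) = i * Δ := by
      intro i hi
      have hTi := hTmem i hi
      have haTi : a ≤ T i := hTi.1.1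
      have h0le : 0 ≤ (i:ℝ) * Δ := mul_nonneg (Nat.cast_nonneg i) hΔ0
      have hIVT := intermediate_value_Icc haTi (hHcont.mono (Icc_subset_Icc le_rfl hTi.1.2))
      have hmem2 : (i:ℝ) * Δ ∈ Icc (H a) (H (T i)) := ⟨by rw [hHa]; exact h0le, hTi.2⟩
      obtain ⟨x, hx, hHx⟩ := hIVT hmem2
      have hxS : x ∈ S i := ⟨⟨hx.1, le_trans hx.2 hTi.1.2⟩, by
        simp only [mem_preimage, mem_Ici]; rw [hHx]⟩
      have h1 : T i ≤ x := csInf_le (hSbdd i) hxS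
      have h2 : x = T i := le_antisymm hx.2 h1
      rw [← h2]; exact hHx
    have tele : w b * ψ b - w a * ψ a =
        (∑ i ∈ Finset.range N, (w (T (i+1)) * ψ (T (i+1)) - w (T i) * ψ (T i)))
          + (w b * ψ b - w (T N) * ψ (T N)) := by
      rw [Finset.sum_range_sub (fun i => w (T i) * ψ (T i)), hT0]; ring
    have isplit : (∫ t in a..b, (w' t + w t * ϱ t) * ψ t) =
        (∑ i ∈ Finset.range N, ∫ t in T i..T (i+1), (w' t + w t * ϱ t) * ψ t)
          + ∫ t in T N..b, (w' t + w t * ϱ t) * ψ t := by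
      rw [intervalIntegral.sum_integral_adjacent_intervals
        (fun k hk => hΦint (T k) (hTimem k hk.le) (T (k+1)) (hTimem (k+1) hk))]
      rw [hT0]
      exact (integral_add_adjacent_intervals (hΦint a hamem (T N) (hTimem N le_rfl))
        (hΦint (T N) (hTimem N le_rfl) b hbmem)).symm
    have hstep : ∀ i < N,
        |w (T (i+1)) * ψ (T (i+1)) - w (T i) * ψ (T i)
            - ∫ t in T i..T (i+1), (w' t + w t * ϱ t) * ψ t| ≤
          B * Δ * (2 * Mw' * (T (i+1) - T i) + Mw * Δ) := by
      intro i hi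
      have hsmem := hTimem i hi.le
      have humem := hTimem (i+1) hi
      have hsu : T i ≤ T (i+1) := hTmono i (i+1) (Nat.le_succ i) hi
      have hsub : Icc (T i) (T (i+1)) ⊆ Icc a b := Icc_subset_Icc hsmem.1 humem.2
      have hδval : ∫ x in T i..T (i+1), ϱ x = Δ := by
        rw [hsplit (T i) hsmem (T (i+1)) humem, hTH (i+1) hi, hTH i hi.le]
        push_cast; ring
      have hHsu : H (T i) ≤ H (T (i+1)) := hHmono _ hsmem _ humem hsu
      have hHdiff : H (T (i+1)) - H (T i) = Δ := by
        rw [hTH (i+1) hi, hTH i hi.le]; push_cast; ring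
      have hinc := exp_sub_le hHsu
      rw [hHdiff] at hinc
      exact step_aux (T i) (T (i+1)) hsu ϱ ψ w w'
        (fun t ht => hϱ0 t (hsub ht)) (hsubI hsmem humem) (hψcont.mono hsub)
        (fun t ht => ⟨hψmono _ hsmem t (hsub ht) ht.1, hψmono t (hsub ht) _ humem ht.2⟩)
        (hψpos _) Δ B Mw Mw' hδval hinc.1 hinc.2 (hB _ humem)
        (fun t ht => hw t (hsub ht)) (hw'c.mono hsub) (fun t ht => hw'0 t (hsub ht))
        (fun t ht => hMw t (hsub ht)) (fun t ht => hMw' t (hsub ht))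
    have htail : |w b * ψ b - w (T N) * ψ (T N)
        - ∫ t in T N..b, (w' t + w t * ϱ t) * ψ t| ≤
          B * 0 * (2 * Mw' * (b - T N) + Mw * 0) := by
      have hsmem := hTimem N le_rfl
      have hsu : T N ≤ b := hsmem.2
      have hsub : Icc (T N) b ⊆ Icc a b := Icc_subset_Icc hsmem.1 le_rfl
      have hδval : ∫ x in T N..b, ϱ x = 0 := by
        rw [hsplit (T N) hsmem b hbmem, hTH N le_rfl, ← hNΔ]; ring
      have hHeq : H (T N) = H b := by rw [hTH N le_rfl, ← hNΔ]
      have hψeq : ψ (T N) = ψ b := by rw [hψdef]; simp only [hHeq]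
      exact step_aux (T N) b hsu ϱ ψ w w'
        (fun t ht => hϱ0 t (hsub ht)) (hsubI hsmem hbmem) (hψcont.mono hsub)
        (fun t ht => ⟨hψmono _ hsmem t (hsub ht) ht.1, hψmono t (hsub ht) _ hbmem ht.2⟩)
        (hψpos _) 0 B Mw Mw' hδval (by simp [hψeq]) (by simp [hψeq])
        (hB _ hbmem)
        (fun t ht => hw t (hsub ht)) (hw'c.mono hsub) (fun t ht => hw'0 t (hsub ht))
        (fun t ht => hMw t (hsub ht)) (fun t ht => hMw' t (hsub ht))
    have hEeq : w b * ψ b - w a * ψ a - (∫ t in a..b, (w' t + w t * ϱ t) * ψ t)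
        = (∑ i ∈ Finset.range N, (w (T (i+1)) * ψ (T (i+1)) - w (T i) * ψ (T i)
            - ∫ t in T i..T (i+1), (w' t + w t * ϱ t) * ψ t))
          + (w b * ψ b - w (T N) * ψ (T N) - ∫ t in T N..b, (w' t + w t * ϱ t) * ψ t) := by
      rw [tele, isplit]; simp only [Finset.sum_sub_distrib]; ring
    rw [hEeq]
    have h1 : |(∑ i ∈ Finset.range N, (w (T (i+1)) * ψ (T (i+1)) - w (T i) * ψ (T i)
            - ∫ t in T i..T (i+1), (w' t + w t * ϱ t) * ψ t))
          + (w b * ψ b - w (T N) * ψ (T N) - ∫ t in T N..b, (w' t + w t * ϱ t) * ψ t)|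
        ≤ (∑ i ∈ Finset.range N, |w (T (i+1)) * ψ (T (i+1)) - w (T i) * ψ (T i)
            - ∫ t in T i..T (i+1), (w' t + w t * ϱ t) * ψ t|)
          + |w b * ψ b - w (T N) * ψ (T N) - ∫ t in T N..b, (w' t + w t * ϱ t) * ψ t| :=
      (abs_add_le _ _).trans (add_le_add_left (Finset.abs_sum_le_sum_abs _ _) _)
    have h2 : (∑ i ∈ Finset.range N, |w (T (i+1)) * ψ (T (i+1)) - w (T i) * ψ (T i)
            - ∫ t in T i..T (i+1), (w' t + w t * ϱ t) * ψ t|)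
        ≤ ∑ i ∈ Finset.range N, B * Δ * (2 * Mw' * (T (i+1) - T i) + Mw * Δ) :=
      Finset.sum_le_sum (fun i hi => hstep i (Finset.mem_range.1 hi))
    have h3 : (∑ i ∈ Finset.range N, B * Δ * (2 * Mw' * (T (i+1) - T i) + Mw * Δ))
        = (B * Δ * (2 * Mw')) * (T N - T 0) + N * (B * Δ * (Mw * Δ)) := by
      have e : ∀ i ∈ Finset.range N, B * Δ * (2 * Mw' * (T (i+1) - T i) + Mw * Δ)
          = (B * Δ * (2 * Mw')) * (T (i+1) - T i) + B * Δ * (Mw * Δ) := by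
        intro i _; ring
      rw [Finset.sum_congr rfl e, Finset.sum_add_distrib, ← Finset.mul_sum,
        Finset.sum_range_sub T, Finset.sum_const, Finset.card_range, nsmul_eq_mul]
    have h4 : (B * Δ * (2 * Mw')) * (T N - T 0) + N * (B * Δ * (Mw * Δ))
        ≤ (B * Δ * (2 * Mw')) * (b - a) + B * (Mw * Δ) * H b := by
      have hc : 0 ≤ B * Δ * (2 * Mw') := by positivity
      have hTNb : T N - T 0 ≤ b - a := by
        rw [hT0]
        have := (hTimem N le_rfl).2
        linarith
      have he : (N:ℝ) * (B * Δ * (Mw * Δ)) = B * (Mw * Δ) * ((N:ℝ) * Δ) := by ring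
      rw [he, hNΔ]
      exact add_le_add (mul_le_mul_of_nonneg_left hTNb hc) le_rfl
    have h5 : (B * Δ * (2 * Mw')) * (b - a) + B * (Mw * Δ) * H b
        = H b * (B * (2 * Mw' * (b - a) + Mw * H b)) / N := by
      rw [hΔdef]; field_simp
    calc _ ≤ _ := h1
      _ ≤ (∑ i ∈ Finset.range N, B * Δ * (2 * Mw' * (T (i+1) - T i) + Mw * Δ)) + 0 := by
          refine add_le_add h2 ?_
          calc _ ≤ B * 0 * (2 * Mw' * (b - T N) + Mw * 0) := htail
            _ = 0 := by ring
      _ = (B * Δ * (2 * Mw')) * (T N - T 0) + N * (B * Δ * (Mw * Δ)) := by rw [add_zero, h3]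
      _ ≤ (B * Δ * (2 * Mw')) * (b - a) + B * (Mw * Δ) * H b := h4
      _ = H b * (B * (2 * Mw' * (b - a) + Mw * H b)) / N := h5
  -- conclude: the error is 0
  have hE0 : w b * ψ b - w a * ψ a - (∫ t in a..b, (w' t + w t * ϱ t) * ψ t) = 0 := by
    by_contra hne
    have habs : 0 < |w b * ψ b - w a * ψ a - ∫ t in a..b, (w' t + w t * ϱ t) * ψ t| :=
      abs_pos.2 hne
    have hC0 : 0 ≤ H b * (B * (2 * Mw' * (b - a) + Mw * H b)) := by
      have h1 : 0 ≤ b - a := by linarith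
      have h2 : 0 ≤ 2 * Mw' * (b - a) + Mw * H b :=
        add_nonneg (mul_nonneg (by linarith) h1) (mul_nonneg hMw0 hHb0)
      exact mul_nonneg hHb0 (mul_nonneg hB0 h2)
    obtain ⟨N, hNgt⟩ := exists_nat_gt ((H b * (B * (2 * Mw' * (b - a) + Mw * H b)))
      / |w b * ψ b - w a * ψ a - ∫ t in a..b, (w' t + w t * ϱ t) * ψ t|)
    have hN0 : 0 < N := by
      have : (0:ℝ) < N := lt_of_le_of_lt (div_nonneg hC0 habs.le) hNgt
      exact_mod_cast this
    have h1 := key N hN0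
    have hN0' : (0:ℝ) < N := by exact_mod_cast hN0
    rw [div_lt_iff₀ habs] at hNgt
    have h2 : H b * (B * (2 * Mw' * (b - a) + Mw * H b)) / N < |w b * ψ b - w a * ψ a
        - ∫ t in a..b, (w' t + w t * ϱ t) * ψ t| := by
      rw [div_lt_iff₀ hN0']
      nlinarith [hNgt]
    linarith
  have hψa : ψ a = 1 := by rw [hψdef]; simp only [hH]; rw [integral_same, Real.exp_zero]
  rw [hψa] at hE0
  simp only [hψdef, hH] at hE0
  linarith [hE0]


set_option maxHeartbeats 1000000 in
theorem stmt_17 (a b : ℝ) (ha : 0 ≤ a) (hab : a < b) (hb1 : b < 1)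
    (ϱ : ℝ → ℝ) (hϱpos : ∀ t ∈ Icc a b, 0 ≤ ϱ t)
    (ζ : ℝ → ℝ) (hζ : ∀ t, ζ t = 2 / (1 - t ^ 2))
    (hmono : MonotoneOn (fun t => ϱ t / ζ t) (Icc a b))
    (hbdd : ∃ C : ℝ, ∀ t ∈ Icc a b, ϱ t / ζ t ≤ C)
    (hϱint : IntervalIntegrable ϱ volume a b)
    (ψ f g : ℝ → ℝ)
    (hψ : ∀ t, ψ t = Real.exp (∫ s in a..t, ϱ s))
    (hf : ∀ t, f t = t * (ζ t) ^ 2 * ψ t)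
    (hg : ∀ t, g t = t * ζ t * ψ t)
    (m m₀ L : ℝ)
    (hm : m = (g b - g a) / ∫ t in a..b, f t)
    (hm₀ : m₀ = (b * ζ b - a * ζ a) / (ζ b - ζ a))
    (hL : Tendsto (fun t => ϱ t / ζ t) (nhdsWithin b (Iio b)) (nhds L)) :
    m ≤ L + m₀ ∧ (m = L + m₀ ↔ ∀ t ∈ Ico a b, ϱ t = 0) := by
  have hble : a ≤ b := hab.le
  have hamem : a ∈ Icc a b := ⟨le_rfl, hble⟩
  have hbmem : b ∈ Icc a b := ⟨hble, le_rfl⟩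
  have hb0 : 0 < b := lt_of_le_of_lt ha hab
  have hsq : ∀ t ∈ Icc a b, 0 < 1 - t ^ 2 := by
    intro t ht
    have h1 := ht.1; have h2 := ht.2
    nlinarith [ha, hb1]
  have hζpos : ∀ t ∈ Icc a b, 0 < ζ t := by
    intro t ht; rw [hζ]; exact div_pos two_pos (hsq t ht)
  have hψpos : ∀ t, 0 < ψ t := fun t => by rw [hψ]; exact Real.exp_pos _
  have hψa : ψ a = 1 := by rw [hψ, integral_same, Real.exp_zero]
  have hsubI : ∀ {s u : ℝ}, s ∈ Icc a b → u ∈ Icc a b →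
      IntervalIntegrable ϱ volume s u := by
    intro s u hs hu
    apply hϱint.mono_set
    have hs' : s ∈ uIcc a b := (uIcc_of_le hble).symm ▸ hs
    have hu' : u ∈ uIcc a b := (uIcc_of_le hble).symm ▸ hu
    exact uIcc_subset_uIcc hs' hu'
  have hHsub : ∀ {s u : ℝ}, s ∈ Icc a b → u ∈ Icc a b →
      (∫ x in s..u, ϱ x) = (∫ x in a..u, ϱ x) - ∫ x in a..s, ϱ x :=
    fun hs hu => (integral_interval_sub_left (hsubI hamem hu) (hsubI hamem hs)).symm
  have hHnonneg : ∀ {s u : ℝ}, s ∈ Icc a b → u ∈ Icc a b → s ≤ u →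
      0 ≤ ∫ x in s..u, ϱ x := fun {s u} hs hu hsu =>
    intervalIntegral.integral_nonneg hsu
      (fun x hx => hϱpos x ⟨le_trans hs.1 hx.1, le_trans hx.2 hu.2⟩)
  have hψmono : ∀ {s u : ℝ}, s ∈ Icc a b → u ∈ Icc a b → s ≤ u → ψ s ≤ ψ u := by
    intro s u hs hu hsu
    rw [hψ, hψ]
    apply Real.exp_le_exp.2
    have h0 := hHnonneg hs hu hsu
    have h1 := hHsub hs hu
    linarith
  have hψcont : ContinuousOn ψ (Icc a b) := by
    have h1 : ContinuousOn (fun t => ∫ s in a..t, ϱ s) (Icc a b) := by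
      have := intervalIntegral.continuousOn_primitive_interval' hϱint left_mem_uIcc
      rwa [uIcc_of_le hble] at this
    exact (Real.continuous_exp.comp_continuousOn h1).congr (fun t _ => hψ t)
  have hζcont : ContinuousOn ζ (Icc a b) := by
    have hden : ContinuousOn (fun t : ℝ => 2 / (1 - t ^ 2)) (Icc a b) :=
      ContinuousOn.div continuousOn_const
        ((continuous_const.sub (continuous_pow 2)).continuousOn)
        (fun t ht => (hsq t ht).ne')
    exact hden.congr (fun t _ => hζ t)
  -- the explicit functions
  set wfun : ℝ → ℝ := fun t => 2 * t / (1 - t ^ 2) with hwdef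
  set vfun : ℝ → ℝ := fun t => (2 + 2 * t ^ 2) / (1 - t ^ 2) ^ 2 with hvdef
  set Ffun : ℝ → ℝ := fun t => 4 * t / (1 - t ^ 2) ^ 2 with hFdef
  have hwderiv : ∀ t ∈ Icc a b, HasDerivAt wfun (vfun t) t := by
    intro t ht
    have h0 : 1 - t ^ 2 ≠ 0 := (hsq t ht).ne'
    have h1 : HasDerivAt (fun x : ℝ => 2 * x) 2 t := by
      simpa using (hasDerivAt_id t).const_mul 2
    have h2 : HasDerivAt (fun x : ℝ => 1 - x ^ 2) (-(2 * t)) t := by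
      simpa using (hasDerivAt_pow 2 t).const_sub 1
    have := h1.div h2 h0
    refine this.congr_deriv ?_
    rw [hvdef]
    field_simp
    ring
  have hzderiv : ∀ t ∈ Icc a b, HasDerivAt (fun x : ℝ => 2 / (1 - x ^ 2)) (Ffun t) t := by
    intro t ht
    have h0 : 1 - t ^ 2 ≠ 0 := (hsq t ht).ne'
    have h2 : HasDerivAt (fun x : ℝ => 1 - x ^ 2) (-(2 * t)) t := by
      simpa using (hasDerivAt_pow 2 t).const_sub 1
    have := (hasDerivAt_const t (2:ℝ)).div h2 h0
    refine this.congr_deriv ?_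
    rw [hFdef]
    field_simp
    ring
  have hwcont : ContinuousOn wfun (Icc a b) := fun t ht =>
    (hwderiv t ht).continuousAt.continuousWithinAt
  have hvcont : ContinuousOn vfun (Icc a b) := by
    apply ContinuousOn.div
    · exact (continuous_const.add (continuous_const.mul (continuous_pow 2))).continuousOn
    · exact ((continuous_const.sub (continuous_pow 2)).pow 2).continuousOn
    · exact fun t ht => pow_ne_zero 2 (hsq t ht).ne'
  have hFcont : ContinuousOn Ffun (Icc a b) := by
    apply ContinuousOn.div
    · exact (continuous_const.mul continuous_id).continuousOn
    · exact ((continuous_const.sub (continuous_pow 2)).pow 2).continuousOn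
    · exact fun t ht => pow_ne_zero 2 (hsq t ht).ne'
  have hv0 : ∀ t ∈ Icc a b, 0 ≤ vfun t := by
    intro t ht
    apply div_nonneg _ (by positivity)
    nlinarith [sq_nonneg t]
  have hwζ : ∀ t ∈ Icc a b, wfun t = t * ζ t := by
    intro t _; rw [hζ, hwdef]; ring
  clear_value wfun vfun Ffun
  -- IBP identity
  have hIBP : wfun b * ψ b - wfun a = ∫ t in a..b, (vfun t + wfun t * ϱ t) * ψ t := by
    have h := ibp_aux a b hble ϱ wfun vfun hϱpos hϱint hwderiv hvcont hv0
    simp only [← hψ] at h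
    exact h
  -- integrabilities
  have hi1 : IntervalIntegrable (fun t => vfun t * ψ t) volume a b := by
    apply ContinuousOn.intervalIntegrable; rw [uIcc_of_le hble]
    exact hvcont.mul hψcont
  have hiFψ : IntervalIntegrable (fun t => Ffun t * ψ t) volume a b := by
    apply ContinuousOn.intervalIntegrable; rw [uIcc_of_le hble]
    exact hFcont.mul hψcont
  have hi2 : IntervalIntegrable (fun t => wfun t * ϱ t * ψ t) volume a b := by
    rw [show (fun t => wfun t * ϱ t * ψ t) = fun t => ϱ t * (wfun t * ψ t) from
      funext fun t => by ring]
    apply hϱint.mul_continuousOn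
    rw [uIcc_of_le hble]
    exact hwcont.mul hψcont
  have hsplitint : (∫ t in a..b, (vfun t + wfun t * ϱ t) * ψ t)
      = (∫ t in a..b, vfun t * ψ t) + ∫ t in a..b, wfun t * ϱ t * ψ t := by
    rw [← intervalIntegral.integral_add hi1 hi2]
    exact intervalIntegral.integral_congr fun t _ => by ring
  -- J
  have hfcont : ContinuousOn f (Icc a b) := by
    apply ContinuousOn.congr ((continuousOn_id.mul (hζcont.pow 2)).mul hψcont)
    intro t _; rw [hf]; rfl
  have hfint : IntervalIntegrable f volume a b := by
    apply ContinuousOn.intervalIntegrable; rwa [uIcc_of_le hble]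
  set J := ∫ t in a..b, f t with hJdef
  have hJpos : 0 < J := by
    apply intervalIntegral_pos_of_pos_on hfint _ hab
    intro x hx
    have hxm : x ∈ Icc a b := ⟨hx.1.le, hx.2.le⟩
    rw [hf]
    have hx0 : 0 < x := lt_of_le_of_lt ha hx.1
    exact mul_pos (mul_pos hx0 (pow_pos (hζpos x hxm) 2)) (hψpos x)
  clear_value J
  have hfψF : ∀ t ∈ Icc a b, f t = Ffun t * ψ t := by
    intro t ht
    rw [hf, hζ, hFdef, div_pow]
    ring
  have hJF : (∫ t in a..b, Ffun t * ψ t) = J := by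
    rw [hJdef]
    apply intervalIntegral.integral_congr
    intro t ht
    rw [uIcc_of_le hble] at ht
    exact (hfψF t ht).symm
  -- m₀ facts
  have h1a : 0 < 1 - a ^ 2 := hsq a hamem
  have h1b : 0 < 1 - b ^ 2 := hsq b hbmem
  have hζab : ζ a < ζ b := by
    rw [hζ, hζ]
    apply div_lt_div_of_pos_left two_pos h1b
    nlinarith
  have hζne : ζ b - ζ a ≠ 0 := sub_ne_zero.2 (ne_of_gt hζab)
  have hm₀' : m₀ * (ζ b - ζ a) = b * ζ b - a * ζ a := by
    rw [hm₀]; field_simp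
  have hab0 : 0 < a + b := by linarith
  have hm₀v : m₀ * (a + b) = 1 + a * b := by
    have hane := h1a.ne'
    have hbne := h1b.ne'
    have e1 : (ζ b - ζ a) * ((1 - a ^ 2) * (1 - b ^ 2)) = 2 * (b ^ 2 - a ^ 2) := by
      rw [hζ, hζ]; field_simp; ring
    have e2 : (b * ζ b - a * ζ a) * ((1 - a ^ 2) * (1 - b ^ 2))
        = 2 * (b - a) * (1 + a * b) := by
      rw [hζ, hζ]; field_simp; ring
    have h3 : m₀ * (2 * (b ^ 2 - a ^ 2)) = 2 * (b - a) * (1 + a * b) := by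
      calc m₀ * (2 * (b ^ 2 - a ^ 2))
          = m₀ * ((ζ b - ζ a) * ((1 - a ^ 2) * (1 - b ^ 2))) := by rw [e1]
        _ = m₀ * (ζ b - ζ a) * ((1 - a ^ 2) * (1 - b ^ 2)) := by ring
        _ = (b * ζ b - a * ζ a) * ((1 - a ^ 2) * (1 - b ^ 2)) := by rw [hm₀']
        _ = 2 * (b - a) * (1 + a * b) := e2
    have h2ba : (2:ℝ) * (b - a) ≠ 0 := by
      have : (0:ℝ) < 2 * (b - a) := by linarith
      exact this.ne'
    apply mul_left_cancel₀ h2ba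
    linear_combination h3
  have hm₀1 : 1 < m₀ := by nlinarith [hm₀v, hab, ha, hb1, hab0]
  -- Φ and its root r
  have hΦa : 0 < a ^ 2 - 2 * m₀ * a + 1 := by nlinarith [hm₀v, hab0, h1a, hab]
  have hΦb : b ^ 2 - 2 * m₀ * b + 1 < 0 := by nlinarith [hm₀v, hab0, h1b, hab]
  obtain ⟨r, hrIcc, hΦr⟩ : ∃ r ∈ Icc a b, r ^ 2 - 2 * m₀ * r + 1 = 0 := by
    have hc : ContinuousOn (fun t : ℝ => t ^ 2 - 2 * m₀ * t + 1) (Icc a b) :=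
      Continuous.continuousOn (by fun_prop)
    have h0 : (0:ℝ) ∈ Icc (b ^ 2 - 2 * m₀ * b + 1) (a ^ 2 - 2 * m₀ * a + 1) :=
      ⟨hΦb.le, hΦa.le⟩
    obtain ⟨r, hr, hr0⟩ := intermediate_value_Icc' hble hc h0
    exact ⟨r, hr, hr0⟩
  have hra : a < r := by
    rcases lt_or_eq_of_le hrIcc.1 with h | h
    · exact h
    · exfalso; rw [← h] at hΦr; linarith
  have hrb : r < b := by
    rcases lt_or_eq_of_le hrIcc.2 with h | h
    · exact h
    · exfalso; rw [h] at hΦr; linarith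
  have hΦfact : ∀ t : ℝ, t ^ 2 - 2 * m₀ * t + 1 = (t - r) * (t + r - 2 * m₀) := by
    intro t; linear_combination hΦr
  -- K = v - m₀ F and its sign
  set K : ℝ → ℝ := fun t => vfun t - m₀ * Ffun t with hKdef
  clear_value K
  have hKval : ∀ t ∈ Icc a b, K t = 2 * (t ^ 2 - 2 * m₀ * t + 1) / (1 - t ^ 2) ^ 2 := by
    intro t ht
    rw [hKdef, hvdef, hFdef]
    have h0 := (hsq t ht).ne'
    field_simp
    ring
  have hfac2 : ∀ t ∈ Icc a b, t + r - 2 * m₀ < 0 := by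
    intro t ht
    have := ht.2
    linarith [hrb, hb1, hm₀1]
  have hKsign1 : ∀ t ∈ Icc a b, t ≤ r → 0 ≤ K t := by
    intro t ht htr
    rw [hKval t ht]
    apply div_nonneg _ (by positivity)
    rw [hΦfact t]
    have hp : 0 ≤ (r - t) * (2 * m₀ - t - r) :=
      mul_nonneg (by linarith) (by linarith [hfac2 t ht])
    linarith only [hp]
  have hKsign2 : ∀ t ∈ Icc a b, r ≤ t → K t ≤ 0 := by
    intro t ht htr
    rw [hKval t ht]
    apply div_nonpos_of_nonpos_of_nonneg _ (by positivity)
    rw [hΦfact t]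
    have hp : 0 ≤ (t - r) * (2 * m₀ - t - r) :=
      mul_nonneg (by linarith) (by linarith [hfac2 t ht])
    linarith only [hp]
  have hKsign3 : ∀ t ∈ Icc a b, r < t → K t < 0 := by
    intro t ht htr
    rw [hKval t ht]
    apply div_neg_of_neg_of_pos _ (pow_pos (hsq t ht) 2)
    rw [hΦfact t]
    have hp : 0 < (t - r) * (2 * m₀ - t - r) :=
      mul_pos (by linarith) (by linarith [hfac2 t ht])
    linarith only [hp]
  -- FTC values
  have hivint : IntervalIntegrable vfun volume a b := by
    apply ContinuousOn.intervalIntegrable; rwa [uIcc_of_le hble]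
  have hiFint : IntervalIntegrable Ffun volume a b := by
    apply ContinuousOn.intervalIntegrable; rwa [uIcc_of_le hble]
  have hIV : (∫ t in a..b, vfun t) = wfun b - wfun a := by
    apply integral_eq_sub_of_hasDerivAt
    · intro t ht; rw [uIcc_of_le hble] at ht; exact hwderiv t ht
    · exact hivint
  have hIF : (∫ t in a..b, Ffun t) = ζ b - ζ a := by
    rw [hζ, hζ]
    apply integral_eq_sub_of_hasDerivAt
    · intro t ht; rw [uIcc_of_le hble] at ht; exact hzderiv t ht
    · exact hiFint
  have hIK : (∫ t in a..b, K t) = 0 := by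
    have e : (∫ t in a..b, K t) = (∫ t in a..b, vfun t) - m₀ * ∫ t in a..b, Ffun t := by
      rw [hKdef, intervalIntegral.integral_sub hivint (hiFint.const_mul m₀),
        intervalIntegral.integral_const_mul]
    rw [e, hIV, hIF, hwζ b hbmem, hwζ a hamem]
    linarith [hm₀']
  -- ∫ K ψ ≤ 0
  have hKcont : ContinuousOn K (Icc a b) :=
    (hvcont.sub ((continuousOn_const (c := m₀)).mul hFcont)).congr (fun t _ => by rw [hKdef]; rfl)
  have hiK : IntervalIntegrable K volume a b := by
    apply ContinuousOn.intervalIntegrable; rwa [uIcc_of_le hble]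
  have hiKψ : IntervalIntegrable (fun t => K t * ψ t) volume a b := by
    apply ContinuousOn.intervalIntegrable; rw [uIcc_of_le hble]
    exact hKcont.mul hψcont
  have hKψrcont : ContinuousOn (fun t => K t * (ψ t - ψ r)) (Icc a b) :=
    hKcont.mul (hψcont.sub continuousOn_const)
  have hiKψr : IntervalIntegrable (fun t => K t * (ψ t - ψ r)) volume a b := by
    apply ContinuousOn.intervalIntegrable; rwa [uIcc_of_le hble]
  have hKψeq : (∫ t in a..b, K t * ψ t) = ∫ t in a..b, K t * (ψ t - ψ r) := by
    have e1 : (∫ t in a..b, K t * (ψ t - ψ r))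
        = (∫ t in a..b, K t * ψ t) - (∫ t in a..b, K t) * ψ r := by
      rw [show (fun t => K t * (ψ t - ψ r)) = fun t => K t * ψ t - K t * ψ r from
        funext fun t => by ring]
      rw [intervalIntegral.integral_sub hiKψ (hiK.mul_const _),
        intervalIntegral.integral_mul_const]
    rw [e1, hIK]
    ring
  have hKψptwise : ∀ t ∈ Icc a b, K t * (ψ t - ψ r) ≤ 0 := by
    intro t ht
    rcases le_total t r with h | h
    · exact mul_nonpos_iff.2 (Or.inl ⟨hKsign1 t ht h,
        sub_nonpos.2 (hψmono ht hrIcc h)⟩)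
    · exact mul_nonpos_iff.2 (Or.inr ⟨hKsign2 t ht h,
        sub_nonneg.2 (hψmono hrIcc ht h)⟩)
  have hKψle : (∫ t in a..b, K t * ψ t) ≤ 0 := by
    rw [hKψeq]
    have h := intervalIntegral.integral_nonneg (μ := volume) hble
      (f := fun t => -(K t * (ψ t - ψ r))) (fun t ht => by
        show (0:ℝ) ≤ -(K t * (ψ t - ψ r)); linarith [hKψptwise t ht])
    rw [intervalIntegral.integral_neg] at h
    linarith
  -- ∫ wϱψ ≤ L J
  have hLbound : ∀ t ∈ Ico a b, ϱ t / ζ t ≤ L := by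
    intro t ht
    apply ge_of_tendsto hL
    filter_upwards [Ioo_mem_nhdsLT_of_mem (⟨ht.2, le_rfl⟩ : b ∈ Ioc t b)] with s hs
    exact hmono ⟨ht.1, ht.2.le⟩ ⟨le_trans ht.1 hs.1.le, hs.2.le⟩ hs.1.le
  have haeb : ∀ᵐ x ∂(volume.restrict (Icc a b)), x ≠ b := by
    apply ae_restrict_of_ae
    rw [ae_iff]
    have e : {x : ℝ | ¬x ≠ b} = {b} := by ext x; simp
    rw [e]
    exact measure_singleton b
  have hwϱle : (∫ t in a..b, wfun t * ϱ t * ψ t) ≤ L * J := by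
    have hint2 : IntervalIntegrable (fun t => L * f t) volume a b := hfint.const_mul L
    have hptae : (fun t => wfun t * ϱ t * ψ t) ≤ᵐ[volume.restrict (Icc a b)]
        fun t => L * f t := by
      filter_upwards [haeb, ae_restrict_mem measurableSet_Icc] with t htb htm
      have htlt : t < b := lt_of_le_of_ne htm.2 htb
      have hLt := hLbound t ⟨htm.1, htlt⟩
      have hfpos : 0 ≤ f t := by
        rw [hf]
        have h1 := hζpos t htm
        have h2 := (hψpos t).le
        have h3 : 0 ≤ t := le_trans ha htm.1
        positivity
      have hrew : wfun t * ϱ t * ψ t = (ϱ t / ζ t) * f t := by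
        rw [hf, hζ, hwdef]
        have h0 := (hsq t htm).ne'
        field_simp
      rw [hrew]
      exact mul_le_mul_of_nonneg_right hLt hfpos
    calc (∫ t in a..b, wfun t * ϱ t * ψ t) ≤ ∫ t in a..b, L * f t :=
          intervalIntegral.integral_mono_ae_restrict hble hi2 hint2 hptae
      _ = L * J := by rw [intervalIntegral.integral_const_mul, hJdef]
  -- decomposition
  have hgb : g b = wfun b * ψ b := by rw [hg, hwζ b hbmem]
  have hga : g a = wfun a := by rw [hg, hψa, mul_one, ← hwζ a hamem]
  have hvK : (∫ t in a..b, vfun t * ψ t) = (∫ t in a..b, K t * ψ t) + m₀ * J := by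
    have e0 : (fun t => K t * ψ t) = fun t => vfun t * ψ t - m₀ * (Ffun t * ψ t) := by
      funext t; rw [hKdef]; ring
    have e : (∫ t in a..b, K t * ψ t)
        = (∫ t in a..b, vfun t * ψ t) - m₀ * ∫ t in a..b, Ffun t * ψ t := by
      rw [e0, intervalIntegral.integral_sub hi1 (hiFψ.const_mul m₀),
        intervalIntegral.integral_const_mul]
    rw [e, hJF]
    ring
  have hdecomp : g b - g a = (∫ t in a..b, K t * ψ t) + m₀ * J
      + ∫ t in a..b, wfun t * ϱ t * ψ t := by
    rw [hgb, hga, hIBP, hsplitint, hvK]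
  have hmle : m ≤ L + m₀ := by
    rw [hm, div_le_iff₀ hJpos]
    linarith only [hdecomp, hKψle, hwϱle]
  refine ⟨hmle, ?_, ?_⟩
  · -- equality implies vanishing
    intro heq
    by_contra hcon
    push_neg at hcon
    obtain ⟨t₀, ht₀mem, ht₀⟩ := hcon
    have ht₀Icc : t₀ ∈ Icc a b := ⟨ht₀mem.1, ht₀mem.2.le⟩
    have hϱt₀ : 0 < ϱ t₀ := lt_of_le_of_ne (hϱpos t₀ ht₀Icc) (Ne.symm ht₀)
    have hc0 : 0 < ϱ t₀ / ζ t₀ := div_pos hϱt₀ (hζpos t₀ ht₀Icc)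
    set c := ϱ t₀ / ζ t₀ with hcdef
    set t₁ := max t₀ r with ht₁def
    have ht₁mem : t₁ ∈ Icc a b :=
      ⟨le_trans ht₀mem.1 (le_max_left _ _), max_le ht₀mem.2.le hrIcc.2⟩
    have ht₁b : t₁ < b := max_lt ht₀mem.2 hrb
    have hrt₁ : r ≤ t₁ := le_max_right _ _
    have hψgt : ∀ t ∈ Ioc t₁ b, ψ r < ψ t := by
      intro t ht
      have htmem : t ∈ Icc a b := ⟨le_trans ht₁mem.1 ht.1.le, ht.2⟩
      have hlow : ∀ s ∈ Icc t₁ t, 2 * c ≤ ϱ s := by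
        intro s hs
        have hsmem : s ∈ Icc a b := ⟨le_trans ht₁mem.1 hs.1, le_trans hs.2 htmem.2⟩
        have ht₀s : t₀ ≤ s := le_trans (le_max_left _ _) hs.1
        have h1 : c ≤ ϱ s / ζ s := hmono ht₀Icc hsmem ht₀s
        have h2 : 0 < ζ s := hζpos s hsmem
        have h3 : c * ζ s ≤ ϱ s := (le_div_iff₀ h2).1 h1
        have h4 : 2 ≤ ζ s := by
          rw [hζ]
          rw [le_div_iff₀ (hsq s hsmem)]
          linarith only [sq_nonneg s]
        have hp : 0 ≤ c * (ζ s - 2) := mul_nonneg hc0.le (by linarith only [h4])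
        linarith only [hp, h3]
      have hlowint : (t - t₁) * (2 * c) ≤ ∫ x in t₁..t, ϱ x := by
        have h := intervalIntegral.integral_mono_on ht.1.le
          intervalIntegrable_const (hsubI ht₁mem htmem) hlow
        rwa [intervalIntegral.integral_const, smul_eq_mul] at h
      have hpos : 0 < ∫ x in t₁..t, ϱ x := by
        have : 0 < (t - t₁) * (2 * c) := by
          apply mul_pos (by linarith [ht.1]) (by linarith)
        linarith
      have hHr : (∫ x in a..r, ϱ x) ≤ ∫ x in a..t₁, ϱ x := by
        have h0 := hHnonneg hrIcc ht₁mem hrt₁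
        have h1 := hHsub hrIcc ht₁mem
        linarith
      have hHt : (∫ x in a..t₁, ϱ x) < ∫ x in a..t, ϱ x := by
        have h1 := hHsub ht₁mem htmem
        linarith
      rw [hψ, hψ]
      exact Real.exp_lt_exp.2 (by linarith)
    have hstrict : (∫ t in a..b, K t * (ψ t - ψ r)) < 0 := by
      have hiAt : IntervalIntegrable (fun t => K t * (ψ t - ψ r)) volume a t₁ := by
        apply ContinuousOn.intervalIntegrable
        rw [uIcc_of_le ht₁mem.1]
        exact hKψrcont.mono (Icc_subset_Icc le_rfl ht₁mem.2)
      have hiTb : IntervalIntegrable (fun t => K t * (ψ t - ψ r)) volume t₁ b := by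
        apply ContinuousOn.intervalIntegrable
        rw [uIcc_of_le ht₁b.le]
        exact hKψrcont.mono (Icc_subset_Icc ht₁mem.1 le_rfl)
      have hsplit2 : (∫ t in a..b, K t * (ψ t - ψ r))
          = (∫ t in a..t₁, K t * (ψ t - ψ r)) + ∫ t in t₁..b, K t * (ψ t - ψ r) :=
        (integral_add_adjacent_intervals hiAt hiTb).symm
      have hle1 : (∫ t in a..t₁, K t * (ψ t - ψ r)) ≤ 0 := by
        have h := intervalIntegral.integral_nonneg (μ := volume) ht₁mem.1
          (f := fun t => -(K t * (ψ t - ψ r)))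
          (fun t ht => by
            have htmem : t ∈ Icc a b := ⟨ht.1, le_trans ht.2 ht₁mem.2⟩
            show (0:ℝ) ≤ -(K t * (ψ t - ψ r)); linarith [hKψptwise t htmem])
        rw [intervalIntegral.integral_neg] at h
        linarith
      have hlt2 : (∫ t in t₁..b, K t * (ψ t - ψ r)) < 0 := by
        have h := intervalIntegral_pos_of_pos_on (f := fun t => -(K t * (ψ t - ψ r)))
          hiTb.neg
          (fun x hx => by
            have hxmem : x ∈ Icc a b := ⟨le_trans ht₁mem.1 hx.1.le, hx.2.le⟩
            have h1 : K x < 0 := hKsign3 x hxmem (lt_of_le_of_lt hrt₁ hx.1)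
            have h2 : 0 < ψ x - ψ r := sub_pos.2 (hψgt x ⟨hx.1, hx.2.le⟩)
            have hp := mul_pos (neg_pos.2 h1) h2
            show (0:ℝ) < -(K x * (ψ x - ψ r)); linarith only [hp])
          ht₁b
        rw [intervalIntegral.integral_neg] at h
        linarith
      linarith
    have hKψlt : (∫ t in a..b, K t * ψ t) < 0 := by rw [hKψeq]; exact hstrict
    have hlt : m < L + m₀ := by
      rw [hm, div_lt_iff₀ hJpos]
      linarith only [hdecomp, hKψlt, hwϱle]
    rw [heq] at hlt
    exact lt_irrefl _ hlt
  · -- vanishing implies equality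
    intro hz
    have hint0 : ∀ t ∈ Icc a b, (∫ s in a..t, ϱ s) = 0 := by
      intro t ht
      rw [intervalIntegral.integral_of_le ht.1]
      have hae : (fun s => ϱ s) =ᵐ[volume.restrict (Ioc a t)] (fun _ => (0:ℝ)) := by
        have h1 : ∀ᵐ x ∂(volume.restrict (Ioc a t)), x ≠ b := by
          apply ae_restrict_of_ae
          rw [ae_iff]
          have e : {x : ℝ | ¬x ≠ b} = {b} := by ext x; simp
          rw [e]
          exact measure_singleton b
        filter_upwards [h1, ae_restrict_mem measurableSet_Ioc] with x hxb hxm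
        exact hz x ⟨hxm.1.le, lt_of_le_of_ne (le_trans hxm.2 ht.2) hxb⟩
      rw [integral_congr_ae hae]
      simp
    have hψ1 : ∀ t ∈ Icc a b, ψ t = 1 := fun t ht => by
      rw [hψ, hint0 t ht, Real.exp_zero]
    have hL0 : L = 0 := by
      have htend : Tendsto (fun t => ϱ t / ζ t) (nhdsWithin b (Iio b)) (nhds 0) := by
        apply Tendsto.congr' _ tendsto_const_nhds
        filter_upwards [Ioo_mem_nhdsLT_of_mem (⟨hab, le_rfl⟩ : b ∈ Ioc a b)] with s hs
        rw [hz s ⟨hs.1.le, hs.2⟩, zero_div]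
      exact tendsto_nhds_unique hL htend
    have hJval : J = ζ b - ζ a := by
      rw [hJdef, ← hIF]
      apply intervalIntegral.integral_congr
      intro t ht
      rw [uIcc_of_le hble] at ht
      rw [hf, hψ1 t ht, hζ, hFdef, mul_one]
      have h0 := (hsq t ht).ne'
      field_simp
      ring
    have hgbga : g b - g a = b * ζ b - a * ζ a := by
      rw [hg, hg, hψ1 b hbmem, hψ1 a hamem]
      ring
    rw [hm, hgbga, hJval, hL0, zero_add, hm₀]
end

section
/- Let 0 < a < b < 1, ζ(t) = 2/(1-t²), ϱ ≥ 0 on [a,b] with ϱ/ζ non-decreasing and bounded, ψ = exp(∫ ϱ), f = tζ²ψ, g = tζψ, m = (g(b)-g(a))/∫_a^b f. Define w : [a,b] → ℝ by w = g/(m·∫_a^· f ds + g(a)). Then w ∈ C^{0,1}([a,b]), w(a) = w(b) = 1, w > 0 on [a,b], and w satisfies the Riccati equation w' + m·ζ·w² = (1/x + \hat{ϱ} + ϱ)·w a.e. on (a,b); moreover (w, m) is the unique such Lipschitz solution pair. -/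
open Set MeasureTheory intervalIntegral Filter


noncomputable def clmp (a b t : ℝ) : ℝ := max a (min t b)

lemma clmp_mem {a b : ℝ} (hab : a ≤ b) (t : ℝ) : clmp a b t ∈ Icc a b :=
  ⟨le_max_left _ _, max_le hab (min_le_right _ _)⟩

lemma clmp_eq {a b t : ℝ} (h : t ∈ Icc a b) : clmp a b t = t := by
  simp only [clmp, min_eq_left h.2, max_eq_right h.1]

lemma clmp_dist (a b s t : ℝ) : |clmp a b s - clmp a b t| ≤ |s - t| := by
  have h1 : |max a (min s b) - max a (min t b)| ≤ |min s b - min t b| := by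
    rw [max_comm a, max_comm a]; exact abs_max_sub_max_le_abs _ _ _
  refine h1.trans ((abs_min_sub_min_le_max _ _ _ _).trans ?_)
  rw [sub_self, abs_zero]
  exact max_le le_rfl (abs_nonneg _)

lemma clmp_mono (a b : ℝ) : Monotone (clmp a b) := fun s t hst =>
  max_le_max le_rfl (min_le_min hst le_rfl)

lemma clmp_eventuallyEq {a b x : ℝ} (hx : x ∈ Ioo a b) :
    (fun t => clmp a b t) =ᶠ[nhds x] id := by
  filter_upwards [Ioo_mem_nhds hx.1 hx.2] with t ht
  exact clmp_eq ⟨ht.1.le, ht.2.le⟩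

lemma le_of_lip_ae_deriv_zero {a b K : ℝ} (hab : a ≤ b) (hK : 0 ≤ K) {r : ℝ → ℝ}
    (hr : ∀ x ∈ Icc a b, ∀ y ∈ Icc a b, |r x - r y| ≤ K * |x - y|)
    (hd : ∀ᵐ x ∂(volume.restrict (Ioo a b)), HasDerivAt r 0 x) :
    ∀ x ∈ Icc a b, r a ≤ r x := by
  set q : ℝ → ℝ := fun t => K * t + r (clmp a b t) with hqdef
  have hqm : Monotone q := by
    intro s t hst
    have h1 := hr _ (clmp_mem hab t) _ (clmp_mem hab s)
    have h2 : |clmp a b t - clmp a b s| ≤ t - s := (clmp_dist a b t s).trans_eq (abs_of_nonneg (by linarith))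
    have h4 : K * |clmp a b t - clmp a b s| ≤ K * (t - s) := mul_le_mul_of_nonneg_left h2 hK
    have h3 := neg_abs_le (r (clmp a b t) - r (clmp a b s))
    simp only [hqdef]
    nlinarith
  have hqlip : ∀ s t : ℝ, |q s - q t| ≤ (K + K) * |s - t| := by
    intro s t
    have h1 := hr _ (clmp_mem hab s) _ (clmp_mem hab t)
    have h2 : K * |clmp a b s - clmp a b t| ≤ K * |s - t| :=
      mul_le_mul_of_nonneg_left (clmp_dist a b s t) hK
    have he : q s - q t = K * (s - t) + (r (clmp a b s) - r (clmp a b t)) := by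
      simp only [hqdef]; ring
    calc |q s - q t| ≤ |K * (s - t)| + |r (clmp a b s) - r (clmp a b t)| := he ▸ abs_add_le _ _
      _ ≤ K * |s - t| + K * |s - t| := by
          rw [abs_mul, abs_of_nonneg hK]; exact add_le_add le_rfl (h1.trans h2)
      _ = (K + K) * |s - t| := by ring
  have hqc : Continuous q := by
    refine LipschitzWith.continuous (K := (K + K).toNNReal) (LipschitzWith.of_dist_le_mul ?_)
    intro s t
    rw [Real.dist_eq, Real.dist_eq, Real.coe_toNNReal _ (by linarith)]
    exact hqlip s t
  have hSq : ∀ x, (hqm.stieltjesFunction : ℝ → ℝ) x = q x := by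
    intro x
    rw [Monotone.stieltjesFunction_eq]
    exact rightLim_eq_of_tendsto
      ((hqc.tendsto x).mono_left nhdsWithin_le_nhds)
  have hd' : ∀ᵐ x, x ∈ Ioo a b → HasDerivAt r 0 x := (ae_restrict_iff' measurableSet_Ioo).1 hd
  have key : ∀ᵐ x, x ∈ Ioo a b →
      hqm.stieltjesFunction.measure.rnDeriv volume x = ENNReal.ofReal K := by
    filter_upwards [hqm.ae_hasDerivAt, hd',
      Measure.rnDeriv_lt_top hqm.stieltjesFunction.measure volume] with x h1 h2 h3 hx
    have hq' : HasDerivAt q K x := by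
      have : HasDerivAt (fun t => K * t + r t) (K * 1 + 0) x :=
        ((hasDerivAt_id x).const_mul K).add (h2 hx)
      rw [mul_one, add_zero] at this
      refine this.congr_of_eventuallyEq ?_
      filter_upwards [clmp_eventuallyEq hx] with t ht
      simp only [hqdef, ht, id]
    have := (h1.unique hq')
    rw [← ENNReal.ofReal_toReal h3.ne, this]
  intro x0 hx0
  have hIoo : Ioo a x0 ⊆ Ioo a b := Ioo_subset_Ioo le_rfl hx0.2
  have hcalc : ENNReal.ofReal (K * (x0 - a)) ≤ ENNReal.ofReal (q x0 - q a) := by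
    calc ENNReal.ofReal (K * (x0 - a))
        = ENNReal.ofReal K * volume (Ioo a x0) := by
          rw [Real.volume_Ioo, ENNReal.ofReal_mul hK]
      _ = ∫⁻ _ in Ioo a x0, ENNReal.ofReal K := (setLIntegral_const _ _).symm
      _ = ∫⁻ t in Ioo a x0, hqm.stieltjesFunction.measure.rnDeriv volume t := by
          refine lintegral_congr_ae ?_
          filter_upwards [ae_restrict_of_ae key, ae_restrict_mem measurableSet_Ioo] with t ht hmem
          exact (ht (hIoo hmem)).symm
      _ ≤ ∫⁻ t in Ioc a x0, hqm.stieltjesFunction.measure.rnDeriv volume t :=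
          lintegral_mono_set Ioo_subset_Ioc_self
      _ ≤ hqm.stieltjesFunction.measure (Ioc a x0) := Measure.setLIntegral_rnDeriv_le _
      _ = ENNReal.ofReal (q x0 - q a) := by
          rw [StieltjesFunction.measure_Ioc, hSq, hSq]
  have hq0 : 0 ≤ q x0 - q a := sub_nonneg.2 (hqm hx0.1)
  have := (ENNReal.ofReal_le_ofReal_iff hq0).1 hcalc
  have hca : clmp a b a = a := clmp_eq ⟨le_rfl, hab⟩
  have hcx : clmp a b x0 = x0 := clmp_eq hx0
  simp only [hqdef, hca, hcx] at this
  linarith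

lemma const_of_lip_ae_deriv_zero {a b K : ℝ} (hab : a ≤ b) (hK : 0 ≤ K) {r : ℝ → ℝ}
    (hr : ∀ x ∈ Icc a b, ∀ y ∈ Icc a b, |r x - r y| ≤ K * |x - y|)
    (hd : ∀ᵐ x ∂(volume.restrict (Ioo a b)), HasDerivAt r 0 x) :
    ∀ x ∈ Icc a b, r x = r a := by
  intro x hx
  refine le_antisymm ?_ (le_of_lip_ae_deriv_zero hab hK hr hd x hx)
  have hr' : ∀ u ∈ Icc a b, ∀ v ∈ Icc a b, |(-r) u - (-r) v| ≤ K * |u - v| := by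
    intro u hu v hv
    rw [show (-r) u - (-r) v = -(r u - r v) by simp [Pi.neg_apply]; ring, abs_neg]
    exact hr u hu v hv
  have hd' : ∀ᵐ y ∂(volume.restrict (Ioo a b)), HasDerivAt (-r) 0 y := by
    filter_upwards [hd] with y hy
    simpa using hy.neg
  have := le_of_lip_ae_deriv_zero hab hK hr' hd' x hx
  simpa using this

lemma Ioc_clmp {a b : ℝ} (x y : ℝ) :
    Ioc x y ∩ Ioc a b = Ioc (clmp a b x) (clmp a b y) := by
  ext t
  simp only [mem_inter_iff, mem_Ioc, clmp, max_lt_iff, min_lt_iff, le_max_iff, le_min_iff]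
  constructor
  · rintro ⟨⟨h1, h2⟩, h3, h4⟩
    exact ⟨⟨h3, Or.inl h1⟩, Or.inr ⟨h2, h4⟩⟩
  · rintro ⟨⟨h3, h1⟩, h2⟩
    rcases h2 with h2 | h2
    · exact absurd (h2.trans_lt h3) (lt_irrefl t)
    rcases h1 with h1 | h1
    · exact ⟨⟨h1, h2.1⟩, h3, h2.2⟩
    · exact absurd (h2.2.trans_lt h1) (lt_irrefl t)

lemma ae_hasDerivAt_primitive {a b : ℝ} (hab : a < b) {ϱ : ℝ → ℝ}
    (hint : IntervalIntegrable ϱ volume a b) (hpos : ∀ t ∈ Icc a b, 0 ≤ ϱ t) :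
    ∀ᵐ x ∂(volume.restrict (Ioo a b)), HasDerivAt (fun y => ∫ s in a..y, ϱ s) (ϱ x) x := by
  set H : ℝ → ℝ := fun y => ∫ s in a..y, ϱ s with hHdef
  have hsub : ∀ x ∈ Icc a b, ∀ y ∈ Icc a b, IntervalIntegrable ϱ volume x y := by
    intro x hx y hy
    refine hint.mono_set ?_
    rw [uIcc_of_le hab.le]
    exact uIcc_subset_Icc hx hy
  have hdiff : ∀ x ∈ Icc a b, ∀ y ∈ Icc a b, H y - H x = ∫ s in x..y, ϱ s := fun x hx y hy =>
    integral_interval_sub_left (hsub a ⟨le_rfl, hab.le⟩ y hy) (hsub a ⟨le_rfl, hab.le⟩ x hx)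
  set q : ℝ → ℝ := fun t => H (clmp a b t) with hqdef
  have hqm : Monotone q := by
    intro s t hst
    have h1 := hdiff _ (clmp_mem hab.le s) _ (clmp_mem hab.le t)
    have h2 : 0 ≤ ∫ u in clmp a b s..clmp a b t, ϱ u := by
      refine intervalIntegral.integral_nonneg (clmp_mono a b hst) fun u hu => ?_
      exact hpos u ⟨(clmp_mem hab.le s).1.trans hu.1, hu.2.trans (clmp_mem hab.le t).2⟩
    simp only [hqdef]
    linarith
  have hicc : IntegrableOn ϱ (Icc a b) volume := by
    refine (integrableOn_Icc_iff_integrableOn_Ioc).2 hint.1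
  have hHc : ContinuousOn H (Icc a b) := by
    have := intervalIntegral.continuousOn_primitive_interval (μ := volume) (f := ϱ) (a := a) (b := b) ?_
    · rwa [uIcc_of_le hab.le] at this
    · rwa [uIcc_of_le hab.le]
  have hclmpc : Continuous (fun t => clmp a b t) :=
    continuous_const.max (continuous_id.min continuous_const)
  have hqc : Continuous q := hHc.comp_continuous hclmpc (fun t => clmp_mem hab.le t)
  have hSq : ∀ x, (hqm.stieltjesFunction : ℝ → ℝ) x = q x := by
    intro x
    rw [Monotone.stieltjesFunction_eq]
    exact rightLim_eq_of_tendsto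
      ((hqc.tendsto x).mono_left nhdsWithin_le_nhds)
  set δ : ℝ → ENNReal := fun t => ENNReal.ofReal ((Ioc a b).indicator ϱ t) with hδdef
  have hδm : AEMeasurable δ volume := by
    exact ENNReal.measurable_ofReal.comp_aemeasurable
      ((aemeasurable_indicator_iff measurableSet_Ioc).2 hint.1.aemeasurable)
  have hδi : δ = (Ioc a b).indicator (fun t => ENNReal.ofReal (ϱ t)) := by
    funext t
    by_cases h : t ∈ Ioc a b
    · simp [hδdef, indicator, h, mem_Ioc.1 h]
    · rw [mem_Ioc] at h
      simp [hδdef, indicator, h, if_neg h]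
  have heq : hqm.stieltjesFunction.measure = volume.withDensity δ := by
    refine Measure.ext_of_Ioc _ _ ?_
    intro x y hxy
    rw [StieltjesFunction.measure_Ioc, hSq, hSq, withDensity_apply _ measurableSet_Ioc]
    have hcle : clmp a b x ≤ clmp a b y := clmp_mono a b hxy.le
    have hIcc : Icc (clmp a b x) (clmp a b y) ⊆ Icc a b := fun u hu =>
      ⟨(clmp_mem hab.le x).1.trans hu.1, hu.2.trans (clmp_mem hab.le y).2⟩
    have hInt : IntegrableOn ϱ (Ioc (clmp a b x) (clmp a b y)) volume :=
      (hsub _ (clmp_mem hab.le x) _ (clmp_mem hab.le y)).1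
    calc ENNReal.ofReal (q y - q x)
        = ENNReal.ofReal (∫ s in clmp a b x..clmp a b y, ϱ s) := by
          rw [show q y - q x = _ from hdiff _ (clmp_mem hab.le x) _ (clmp_mem hab.le y)]
      _ = ENNReal.ofReal (∫ s in Ioc (clmp a b x) (clmp a b y), ϱ s) := by
          rw [intervalIntegral.integral_of_le hcle]
      _ = ∫⁻ s in Ioc (clmp a b x) (clmp a b y), ENNReal.ofReal (ϱ s) := by
          refine ofReal_integral_eq_lintegral_ofReal hInt ?_
          refine ae_restrict_of_forall_mem measurableSet_Ioc fun u hu => ?_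
          exact hpos u (hIcc (Ioc_subset_Icc_self hu))
      _ = ∫⁻ s in Ioc a b ∩ Ioc x y, ENNReal.ofReal (ϱ s) := by
          rw [inter_comm, Ioc_clmp]
      _ = ∫⁻ s in Ioc a b, ENNReal.ofReal (ϱ s) ∂(volume.restrict (Ioc x y)) := by
          rw [Measure.restrict_restrict measurableSet_Ioc]
      _ = ∫⁻ s in Ioc x y, δ s := by
          rw [hδi, lintegral_indicator measurableSet_Ioc]
  have hrn : hqm.stieltjesFunction.measure.rnDeriv volume =ᵐ[volume] δ := by
    rw [heq]; exact Measure.rnDeriv_withDensity₀ volume hδm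
  filter_upwards [ae_restrict_of_ae hqm.ae_hasDerivAt, ae_restrict_of_ae hrn,
    ae_restrict_mem measurableSet_Ioo] with x hx1 hx2 hx3
  rw [hx2] at hx1
  have hδx : (δ x).toReal = ϱ x := by
    rw [hδi]
    simp only [indicator_of_mem (Ioo_subset_Ioc_self hx3)]
    exact ENNReal.toReal_ofReal (hpos x (Ioo_subset_Icc_self hx3))
  rw [hδx] at hx1
  refine hx1.congr_of_eventuallyEq ?_
  filter_upwards [clmp_eventuallyEq hx3] with t ht
  simp only [hqdef, ht, id]

lemma lip_mul {s : Set ℝ} {F G : ℝ → ℝ} {KF KG A B : ℝ}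
    (hF : ∀ x ∈ s, ∀ y ∈ s, |F x - F y| ≤ KF * |x - y|)
    (hG : ∀ x ∈ s, ∀ y ∈ s, |G x - G y| ≤ KG * |x - y|)
    (hA : ∀ x ∈ s, |F x| ≤ A) (hB : ∀ x ∈ s, |G x| ≤ B) :
    ∀ x ∈ s, ∀ y ∈ s, |F x * G x - F y * G y| ≤ (A * KG + B * KF) * |x - y| := by
  intro x hx y hy
  have e : F x * G x - F y * G y = F x * (G x - G y) + G y * (F x - F y) := by ring
  calc |F x * G x - F y * G y| ≤ |F x * (G x - G y)| + |G y * (F x - F y)| := e ▸ abs_add_le _ _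
    _ = |F x| * |G x - G y| + |G y| * |F x - F y| := by rw [abs_mul, abs_mul]
    _ ≤ A * (KG * |x - y|) + B * (KF * |x - y|) := by
        refine add_le_add (mul_le_mul (hA x hx) (hG x hx y hy) (abs_nonneg _)
          ((abs_nonneg _).trans (hA x hx))) (mul_le_mul (hB y hy) (hF x hx y hy) (abs_nonneg _)
          ((abs_nonneg _).trans (hB y hy)))
    _ = (A * KG + B * KF) * |x - y| := by ring

lemma lip_inv {s : Set ℝ} {F : ℝ → ℝ} {KF c : ℝ} (hc : 0 < c)
    (hlow : ∀ x ∈ s, c ≤ F x)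
    (hF : ∀ x ∈ s, ∀ y ∈ s, |F x - F y| ≤ KF * |x - y|) :
    ∀ x ∈ s, ∀ y ∈ s, |(F x)⁻¹ - (F y)⁻¹| ≤ (KF / (c * c)) * |x - y| := by
  intro x hx y hy
  have hx0 : 0 < F x := hc.trans_le (hlow x hx)
  have hy0 : 0 < F y := hc.trans_le (hlow y hy)
  have hnum : |F y - F x| ≤ KF * |x - y| := by
    rw [abs_sub_comm]; exact hF x hx y hy
  rw [inv_sub_inv hx0.ne' hy0.ne', abs_div]
  have hden : c * c ≤ |F x * F y| := by
    rw [abs_mul, abs_of_pos hx0, abs_of_pos hy0]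
    exact mul_le_mul (hlow x hx) (hlow y hy) hc.le (hc.le.trans (hlow x hx))
  calc |F y - F x| / |F x * F y| ≤ (KF * |x - y|) / (c * c) :=
        div_le_div₀ ((abs_nonneg _).trans hnum) hnum (by positivity) hden
    _ = KF / (c * c) * |x - y| := by ring

lemma exp_lip {u v B : ℝ} (hu : u ≤ B) (hv : v ≤ B) :
    |Real.exp u - Real.exp v| ≤ Real.exp B * |u - v| := by
  wlog h : v ≤ u generalizing u v
  · rw [abs_sub_comm, abs_sub_comm u v]; exact this hv hu (le_of_not_ge h)
  rw [abs_of_nonneg (sub_nonneg.2 (Real.exp_le_exp.2 h)), abs_of_nonneg (sub_nonneg.2 h)]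
  have h1 : 1 + (v - u) ≤ Real.exp (v - u) := by have := Real.add_one_le_exp (v - u); linarith
  have h2 : Real.exp v = Real.exp u * Real.exp (v - u) := by
    rw [← Real.exp_add]; ring_nf
  have h3 : Real.exp u * (1 + (v - u)) ≤ Real.exp v := by
    rw [h2]; exact mul_le_mul_of_nonneg_left h1 (Real.exp_pos u).le
  have h4 : Real.exp u - Real.exp v ≤ Real.exp u * (u - v) := by nlinarith
  have h5 : Real.exp u ≤ Real.exp B := Real.exp_le_exp.2 hu
  nlinarith [Real.exp_pos u, sub_nonneg.2 h]

lemma lip_primitive {a b M : ℝ} {φ : ℝ → ℝ} (hab : a ≤ b)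
    (hint : IntervalIntegrable φ volume a b) (hM : ∀ u ∈ Icc a b, |φ u| ≤ M) :
    ∀ x ∈ Icc a b, ∀ y ∈ Icc a b,
      |(∫ s in a..x, φ s) - ∫ s in a..y, φ s| ≤ M * |x - y| := by
  intro x hx y hy
  have hsub : ∀ u ∈ Icc a b, IntervalIntegrable φ volume a u := fun u hu =>
    hint.mono_set (by rw [uIcc_of_le hab]; exact uIcc_subset_Icc ⟨le_rfl, hab⟩ hu)
  rw [integral_interval_sub_left (hsub x hx) (hsub y hy)]
  have := intervalIntegral.norm_integral_le_of_norm_le_const (C := M) (a := y) (b := x)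
    (f := φ) (fun u hu => by
      refine hM u ⟨?_, ?_⟩
      · exact le_of_lt (lt_of_le_of_lt (le_min hy.1 hx.1) (by simpa [Set.uIoc] using hu.1))
      · exact le_trans (by simpa [Set.uIoc] using hu.2) (max_le hy.2 hx.2))
  simpa [abs_sub_comm x y] using this
open Set MeasureTheory intervalIntegral Filter in
set_option maxHeartbeats 1600000 in
theorem stmt_18 (a b : ℝ) (ha : 0 < a) (hab : a < b) (hb1 : b < 1)
    (ϱ : ℝ → ℝ) (hϱpos : ∀ t ∈ Icc a b, 0 ≤ ϱ t)
    (ζ : ℝ → ℝ) (hζ : ∀ t, ζ t = 2 / (1 - t ^ 2))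
    (hmono : MonotoneOn (fun t => ϱ t / ζ t) (Icc a b))
    (hbdd : ∃ C : ℝ, ∀ t ∈ Icc a b, ϱ t / ζ t ≤ C)
    (hϱint : IntervalIntegrable ϱ volume a b)
    (ψ f g : ℝ → ℝ)
    (hψ : ∀ t, ψ t = Real.exp (∫ s in a..t, ϱ s))
    (hf : ∀ t, f t = t * (ζ t) ^ 2 * ψ t)
    (hg : ∀ t, g t = t * ζ t * ψ t)
    (m : ℝ) (hm : m = (g b - g a) / ∫ t in a..b, f t)
    (w : ℝ → ℝ)
    (hw : ∀ x, w x = g x / (m * (∫ s in a..x, f s) + g a)) :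
    (∃ K : NNReal, LipschitzOnWith K w (Icc a b)) ∧
    w a = 1 ∧ w b = 1 ∧ (∀ x ∈ Icc a b, 0 < w x) ∧
    (∀ᵐ x ∂(volume.restrict (Ioo a b)),
      HasDerivAt w ((1 / x + x * ζ x + ϱ x) * w x - m * ζ x * (w x) ^ 2) x) ∧
    (∀ (w' : ℝ → ℝ) (lam : ℝ),
      (∃ K : NNReal, LipschitzOnWith K w' (Icc a b)) →
      w' a = 1 → w' b = 1 →
      (∀ᵐ x ∂(volume.restrict (Ioo a b)),
        HasDerivAt w' ((1 / x + x * ζ x + ϱ x) * w' x - lam * ζ x * (w' x) ^ 2) x) →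
      lam = m ∧ ∀ x ∈ Icc a b, w' x = w x) := by
  clear hmono
  obtain ⟨C, hC⟩ := hbdd
  have hb0 : 0 < b := ha.trans hab
  have hb2 : (0:ℝ) < 1 - b ^ 2 := by nlinarith
  have hmemab : a ∈ Icc a b := ⟨le_rfl, hab.le⟩
  have hmemb : b ∈ Icc a b := ⟨hab.le, le_rfl⟩
  have hx2 : ∀ t ∈ Icc a b, 0 < 1 - t ^ 2 := fun t ht => by nlinarith [ht.1, ht.2]
  have ht0 : ∀ t ∈ Icc a b, 0 < t := fun t ht => ha.trans_le ht.1
  have ht1 : ∀ t ∈ Icc a b, t ≤ 1 := fun t ht => ht.2.trans hb1.le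
  have hx2le : ∀ t ∈ Icc a b, 1 - b ^ 2 ≤ 1 - t ^ 2 := fun t ht => by nlinarith [ht.2, ht0 t ht]
  have hζpos : ∀ t ∈ Icc a b, 0 < ζ t := fun t ht => by
    rw [hζ t]; exact div_pos two_pos (hx2 t ht)
  have hζle : ∀ t ∈ Icc a b, ζ t ≤ 2 / (1 - b ^ 2) := fun t ht => by
    rw [hζ t]; exact div_le_div_of_nonneg_left two_pos.le hb2 (hx2le t ht)
  set Z : ℝ := 2 / (1 - b ^ 2) with hZdef
  have hZpos : 0 < Z := div_pos two_pos hb2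
  set M : ℝ := max C 0 * Z with hMdef
  have hM0 : 0 ≤ M := mul_nonneg (le_max_right C 0) hZpos.le
  have hϱM : ∀ t ∈ Icc a b, ϱ t ≤ M := by
    intro t ht
    have h1 : ϱ t = ϱ t / ζ t * ζ t := (div_mul_cancel₀ _ (hζpos t ht).ne').symm
    rw [h1, hMdef]
    exact mul_le_mul ((hC t ht).trans (le_max_left C 0)) (hζle t ht) (hζpos t ht).le
      (le_max_right C 0)
  have hϱabs : ∀ t ∈ Icc a b, |ϱ t| ≤ M := fun t ht => by
    rw [abs_of_nonneg (hϱpos t ht)]; exact hϱM t ht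
  -- H = primitive of ϱ
  have hHlip := lip_primitive hab.le hϱint hϱabs
  have hHa : (∫ s in a..a, ϱ s) = 0 := integral_same
  have hHnn : ∀ t ∈ Icc a b, 0 ≤ ∫ s in a..t, ϱ s := fun t ht =>
    intervalIntegral.integral_nonneg ht.1 (fun u hu => hϱpos u ⟨hu.1, hu.2.trans ht.2⟩)
  have hHle : ∀ t ∈ Icc a b, (∫ s in a..t, ϱ s) ≤ M * (b - a) := by
    intro t ht
    have := hHlip t ht a hmemab
    rw [hHa, sub_zero] at this
    have h2 : |t - a| ≤ b - a := by rw [abs_of_nonneg (by linarith [ht.1])]; linarith [ht.2]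
    calc (∫ s in a..t, ϱ s) ≤ |∫ s in a..t, ϱ s| := le_abs_self _
      _ ≤ M * |t - a| := this
      _ ≤ M * (b - a) := mul_le_mul_of_nonneg_left h2 hM0
  -- ψ facts
  set Ψ : ℝ := Real.exp (M * (b - a)) with hΨdef
  have hΨ1 : 1 ≤ Ψ := Real.one_le_exp (by nlinarith)
  have hψpos : ∀ t, 0 < ψ t := fun t => by rw [hψ t]; exact Real.exp_pos _
  have hψ1 : ∀ t ∈ Icc a b, 1 ≤ ψ t := fun t ht => by
    rw [hψ t]; exact Real.one_le_exp (hHnn t ht)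
  have hψa : ψ a = 1 := by rw [hψ a, hHa, Real.exp_zero]
  have hψle : ∀ t ∈ Icc a b, ψ t ≤ Ψ := fun t ht => by
    rw [hψ t, hΨdef]; exact Real.exp_le_exp.2 (hHle t ht)
  have hψabs : ∀ t ∈ Icc a b, |ψ t| ≤ Ψ := fun t ht => by
    rw [abs_of_pos (hψpos t)]; exact hψle t ht
  have hψlip : ∀ x ∈ Icc a b, ∀ y ∈ Icc a b, |ψ x - ψ y| ≤ Ψ * M * |x - y| := by
    intro x hx y hy
    rw [hψ x, hψ y]
    calc |Real.exp (∫ s in a..x, ϱ s) - Real.exp (∫ s in a..y, ϱ s)|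
        ≤ Ψ * |(∫ s in a..x, ϱ s) - (∫ s in a..y, ϱ s)| := exp_lip (hHle x hx) (hHle y hy)
      _ ≤ Ψ * (M * |x - y|) := mul_le_mul_of_nonneg_left (hHlip x hx y hy) (by positivity)
      _ = Ψ * M * |x - y| := by ring
  -- G = t ζ t facts
  have hGd : ∀ x ∈ Icc a b, HasDerivAt (fun t : ℝ => t * (2 / (1 - t ^ 2)))
      ((2 + 2 * x ^ 2) / (1 - x ^ 2) ^ 2) x := by
    intro x hx
    have hne : (1 - x ^ 2) ≠ 0 := (hx2 x hx).ne'
    have hden : HasDerivAt (fun t : ℝ => 1 - t ^ 2) (-(2 * x)) x := by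
      simpa using (hasDerivAt_pow 2 x).const_sub 1
    have hinv := (hden.inv hne).const_mul (2:ℝ)
    have hmul := (hasDerivAt_id x).mul hinv
    have hfun : (fun t : ℝ => t * (2 / (1 - t ^ 2))) = fun t : ℝ => id t * (2 * (1 - t ^ 2)⁻¹) := by
      funext t; simp [div_eq_mul_inv]
    rw [hfun]
    refine hmul.congr_deriv ?_
    simp only [Pi.inv_apply, id_eq]
    field_simp
    ring
  have hGlip : ∀ x ∈ Icc a b, ∀ y ∈ Icc a b,
      |x * ζ x - y * ζ y| ≤ 4 / (1 - b ^ 2) ^ 2 * |x - y| := by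
    intro x hx y hy
    rw [hζ x, hζ y]
    have key := Convex.norm_image_sub_le_of_norm_hasDerivWithin_le
      (f := fun t : ℝ => t * (2 / (1 - t ^ 2))) (f' := fun x => (2 + 2 * x ^ 2) / (1 - x ^ 2) ^ 2)
      (s := Icc a b) (C := 4 / (1 - b ^ 2) ^ 2)
      (fun t ht => (hGd t ht).hasDerivWithinAt) ?_ (convex_Icc a b) hy hx
    · simpa [Real.norm_eq_abs] using key
    · intro t ht
      rw [Real.norm_eq_abs, abs_of_nonneg (by positivity)]
      refine div_le_div₀ (by positivity) (by nlinarith [ht0 t ht, ht1 t ht]) (by positivity) ?_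
      have h1 := hx2le t ht
      nlinarith [hx2 t ht]
  have hGbd : ∀ t ∈ Icc a b, |t * ζ t| ≤ Z := by
    intro t ht
    rw [abs_of_nonneg (mul_nonneg (ht0 t ht).le (hζpos t ht).le)]
    calc t * ζ t ≤ 1 * Z := mul_le_mul (ht1 t ht) (hζle t ht) (hζpos t ht).le one_pos.le
      _ = Z := one_mul Z
  -- g facts
  set Kg : ℝ := Z * (Ψ * M) + Ψ * (4 / (1 - b ^ 2) ^ 2) with hKgdef
  have hglip : ∀ x ∈ Icc a b, ∀ y ∈ Icc a b, |g x - g y| ≤ Kg * |x - y| := by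
    intro x hx y hy
    rw [hg x, hg y]
    exact lip_mul hGlip hψlip hGbd hψabs x hx y hy
  have hgbd : ∀ t ∈ Icc a b, |g t| ≤ Z * Ψ := by
    intro t ht
    rw [hg t, abs_mul]
    exact mul_le_mul (hGbd t ht) (hψabs t ht) (abs_nonneg _) hZpos.le
  have hgpos : ∀ t ∈ Icc a b, 0 < g t := fun t ht => by
    rw [hg t]
    exact mul_pos (mul_pos (ht0 t ht) (hζpos t ht)) (hψpos t)
  have hga0 : 0 < g a := hgpos a hmemab
  have hgab : g a < g b := by
    rw [hg a, hg b, hζ a, hζ b, hψa]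
    have h1 : 0 < 1 - a ^ 2 := hx2 a hmemab
    have h2 : a * (2 / (1 - a ^ 2)) < b * (2 / (1 - b ^ 2)) := by
      have e1 : a * (2 / (1 - a ^ 2)) = 2 * a / (1 - a ^ 2) := by ring
      have e2 : b * (2 / (1 - b ^ 2)) = 2 * b / (1 - b ^ 2) := by ring
      rw [e1, e2, div_lt_div_iff₀ h1 hb2]
      nlinarith [mul_pos (mul_pos ha hb0) (sub_pos.2 hab)]
    have h3 : 1 ≤ ψ b := hψ1 b hmemb
    have h4 : 0 < b * (2 / (1 - b ^ 2)) := by positivity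
    calc a * (2 / (1 - a ^ 2)) * 1 = a * (2 / (1 - a ^ 2)) := mul_one _
      _ < b * (2 / (1 - b ^ 2)) := h2
      _ = b * (2 / (1 - b ^ 2)) * 1 := (mul_one _).symm
      _ ≤ b * (2 / (1 - b ^ 2)) * ψ b := mul_le_mul_of_nonneg_left h3 h4.le
  -- f facts
  have hfpos : ∀ t ∈ Icc a b, 0 < f t := fun t ht => by
    rw [hf t]
    exact mul_pos (mul_pos (ht0 t ht) (pow_pos (hζpos t ht) 2)) (hψpos t)
  have hζ2le : ∀ t ∈ Icc a b, ζ t ^ 2 ≤ Z ^ 2 := fun t ht => by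
    nlinarith [hζle t ht, hζpos t ht, hZpos]
  have hfabs : ∀ t ∈ Icc a b, |f t| ≤ Z ^ 2 * Ψ := by
    intro t ht
    rw [hf t, abs_of_nonneg (mul_pos (mul_pos (ht0 t ht) (pow_pos (hζpos t ht) 2)) (hψpos t)).le]
    calc t * ζ t ^ 2 * ψ t ≤ 1 * Z ^ 2 * Ψ := by
          refine mul_le_mul (mul_le_mul (ht1 t ht) (hζ2le t ht) (by positivity) one_pos.le)
            (hψle t ht) (hψpos t).le (by positivity)
      _ = Z ^ 2 * Ψ := by ring
  have hHc : ContinuousOn (fun y => ∫ s in a..y, ϱ s) (Icc a b) := by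
    have h1 : IntegrableOn ϱ (uIcc a b) volume := by
      rw [uIcc_of_le hab.le]
      exact (integrableOn_Icc_iff_integrableOn_Ioc).2 hϱint.1
    have := intervalIntegral.continuousOn_primitive_interval h1
    rwa [uIcc_of_le hab.le] at this
  have hfc : ContinuousOn f (Icc a b) := by
    have h1 : ContinuousOn (fun t => t * (2 / (1 - t ^ 2)) ^ 2 *
        Real.exp (∫ s in a..t, ϱ s)) (Icc a b) := by
      refine ContinuousOn.mul (ContinuousOn.mul continuousOn_id ?_) (hHc.rexp)
      exact ((continuousOn_const.div (continuousOn_const.sub (continuousOn_pow 2))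
        (fun t ht => (hx2 t ht).ne')).pow 2)
    exact h1.congr fun t ht => by rw [hf t, hζ t, hψ t]
  have hfint : ∀ x ∈ Icc a b, IntervalIntegrable f volume a x := by
    intro x hx
    apply ContinuousOn.intervalIntegrable
    refine hfc.mono ?_
    rw [uIcc_of_le hx.1]
    exact Icc_subset_Icc le_rfl hx.2
  have hintf : 0 < ∫ t in a..b, f t :=
    intervalIntegral_pos_of_pos_on (hfint b hmemb) (fun t ht => hfpos t (Ioo_subset_Icc_self ht)) hab
  have hFnn : ∀ x ∈ Icc a b, 0 ≤ ∫ s in a..x, f s := fun x hx =>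
    intervalIntegral.integral_nonneg hx.1 (fun u hu => (hfpos u ⟨hu.1, hu.2.trans hx.2⟩).le)
  have hmpos : 0 < m := by
    rw [hm]; exact div_pos (sub_pos.2 hgab) hintf
  have hDpos : ∀ x ∈ Icc a b, g a ≤ m * (∫ s in a..x, f s) + g a := fun x hx => by
    nlinarith [hFnn x hx]
  have hFa : (∫ s in a..a, f s) = 0 := integral_same
  -- conclusion components
  have hwa : w a = 1 := by
    rw [hw a, hFa, mul_zero, zero_add, div_self hga0.ne']
  have hwb : w b = 1 := by
    rw [hw b, hm, div_mul_cancel₀ _ hintf.ne', sub_add_cancel, div_self (hga0.trans hgab).ne']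
  have hwpos : ∀ x ∈ Icc a b, 0 < w x := by
    intro x hx
    rw [hw x]
    exact div_pos (hgpos x hx) (hga0.trans_le (hDpos x hx))
  refine ⟨?_, hwa, hwb, hwpos, ?_, ?_⟩
  · -- Lipschitz
    set Bf : ℝ := Z ^ 2 * Ψ with hBfdef
    have hFlip := lip_primitive hab.le (hfint b hmemb) hfabs
    have hDlip : ∀ x ∈ Icc a b, ∀ y ∈ Icc a b,
        |(m * (∫ s in a..x, f s) + g a) - (m * (∫ s in a..y, f s) + g a)| ≤
          m * Bf * |x - y| := by
      intro x hx y hy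
      have : (m * (∫ s in a..x, f s) + g a) - (m * (∫ s in a..y, f s) + g a) =
          m * ((∫ s in a..x, f s) - (∫ s in a..y, f s)) := by ring
      rw [this, abs_mul, abs_of_pos hmpos, mul_assoc]
      exact mul_le_mul_of_nonneg_left (hFlip x hx y hy) hmpos.le
    have hinvlip := lip_inv hga0 hDpos hDlip
    have hinvbd : ∀ x ∈ Icc a b, |(m * (∫ s in a..x, f s) + g a)⁻¹| ≤ (g a)⁻¹ := by
      intro x hx
      rw [abs_of_pos (inv_pos.2 (hga0.trans_le (hDpos x hx)))]
      exact inv_anti₀ hga0 (hDpos x hx)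
    set Kw : ℝ := Z * Ψ * (m * Bf / (g a * g a)) + (g a)⁻¹ * Kg with hKwdef
    have hwlip := lip_mul hglip hinvlip hgbd hinvbd
    refine ⟨Real.toNNReal Kw, LipschitzOnWith.of_dist_le_mul ?_⟩
    intro x hx y hy
    rw [Real.dist_eq, Real.dist_eq, Real.coe_toNNReal']
    have h1 : |w x - w y| ≤ Kw * |x - y| := by
      rw [hw x, hw y, div_eq_mul_inv, div_eq_mul_inv]
      exact hwlip x hx y hy
    refine h1.trans (mul_le_mul_of_nonneg_right (le_max_left Kw 0) (abs_nonneg _))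
  · -- ODE a.e.
    have hae := ae_hasDerivAt_primitive hab hϱint hϱpos
    filter_upwards [hae, ae_restrict_mem measurableSet_Ioo] with x hHx hx
    have hxI : x ∈ Icc a b := Ioo_subset_Icc_self hx
    have hx0 : 0 < x := ht0 x hxI
    have hxne : (1 - x ^ 2) ≠ 0 := (hx2 x hxI).ne'
    have hψd : HasDerivAt (fun t => Real.exp (∫ s in a..t, ϱ s))
        (Real.exp (∫ s in a..x, ϱ s) * ϱ x) x := hHx.exp
    have hden : HasDerivAt (fun t : ℝ => 1 - t ^ 2) (-(2 * x)) x := by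
      simpa using (hasDerivAt_pow 2 x).const_sub 1
    have hζd : HasDerivAt (fun t : ℝ => 2 * (1 - t ^ 2)⁻¹)
        (2 * (-(-(2 * x)) / (1 - x ^ 2) ^ 2)) x := (hden.inv hxne).const_mul 2
    have hgd0 := ((hasDerivAt_id x).mul hζd).mul hψd
    have hgd : HasDerivAt g
        ((1 * (2 * (1 - x ^ 2)⁻¹) + id x * (2 * (-(-(2 * x)) / (1 - x ^ 2) ^ 2))) *
            Real.exp (∫ s in a..x, ϱ s) +
          id x * (2 * (1 - x ^ 2)⁻¹) * (Real.exp (∫ s in a..x, ϱ s) * ϱ x)) x := by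
      refine hgd0.congr_of_eventuallyEq (Eventually.of_forall fun t => ?_)
      rw [hg t, hζ t, hψ t]
      simp [div_eq_mul_inv]
    have hFd : HasDerivAt (fun y => ∫ s in a..y, f s) (f x) x := by
      refine intervalIntegral.integral_hasDerivAt_right (hfint x hxI) ?_ ?_
      · exact (hfc.mono Ioo_subset_Icc_self).stronglyMeasurableAtFilter isOpen_Ioo x hx
      · exact hfc.continuousAt (Icc_mem_nhds hx.1 hx.2)
    have hDd : HasDerivAt (fun y => m * (∫ s in a..y, f s) + g a) (m * f x) x :=
      (hFd.const_mul m).add_const (g a)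
    have hDne : (m * (∫ s in a..x, f s) + g a) ≠ 0 := (hga0.trans_le (hDpos x hxI)).ne'
    have hwd0 := hgd.div hDd hDne
    have hwd := hwd0.congr_of_eventuallyEq (Eventually.of_forall hw)
    refine hwd.congr_deriv ?_
    rw [hw x, hg x, hf x, hζ x, hψ x]
    simp only [id_eq, one_mul]
    set E := Real.exp (∫ s in a..x, ϱ s) with hE
    set Fx := (∫ s in a..x, f s) with hFxdef
    set ga := g a with hgadef
    set R := ϱ x with hR
    set DD := m * Fx + ga with hDD
    field_simp [hx0.ne', hxne, hDne]
  · rintro w' lam ⟨K', hK'⟩ hw'a hw'b hode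
    have hK'0 : (0:ℝ) ≤ (K' : ℝ) := K'.2
    have hw'lip : ∀ x ∈ Icc a b, ∀ y ∈ Icc a b, |w' x - w' y| ≤ (K' : ℝ) * |x - y| := by
      intro x hx y hy
      have := hK'.dist_le_mul x hx y hy
      rwa [Real.dist_eq, Real.dist_eq] at this
    have hw'c : ContinuousOn w' (Icc a b) := hK'.continuousOn
    set Bw : ℝ := 1 + (K' : ℝ) * (b - a) with hBwdef
    have hBw0 : 0 ≤ Bw := by rw [hBwdef]; nlinarith
    have hw'bd : ∀ x ∈ Icc a b, |w' x| ≤ Bw := by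
      intro x hx
      have h1 := hw'lip x hx a hmemab
      rw [hw'a] at h1
      have h2 : |x - a| ≤ b - a := by
        rw [abs_of_nonneg (by linarith [hx.1])]; linarith [hx.2]
      calc |w' x| = |(w' x - 1) + 1| := by ring_nf
        _ ≤ |w' x - 1| + |(1:ℝ)| := abs_add_le _ _
        _ ≤ (K' : ℝ) * (b - a) + 1 := by
            rw [abs_one]
            exact add_le_add (h1.trans (mul_le_mul_of_nonneg_left h2 hK'0)) le_rfl
        _ = Bw := by rw [hBwdef]; ring
    -- U = primitive of ζ w'
    have hφc : ContinuousOn (fun s => 2 / (1 - s ^ 2) * w' s) (Icc a b) := by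
      refine ContinuousOn.mul ?_ hw'c
      exact continuousOn_const.div (continuousOn_const.sub (continuousOn_pow 2))
        (fun t ht => (hx2 t ht).ne')
    have hφint : ∀ x ∈ Icc a b, IntervalIntegrable (fun s => 2 / (1 - s ^ 2) * w' s) volume a x := by
      intro x hx
      apply ContinuousOn.intervalIntegrable
      refine hφc.mono ?_
      rw [uIcc_of_le hx.1]
      exact Icc_subset_Icc le_rfl hx.2
    have hφbd : ∀ s ∈ Icc a b, |2 / (1 - s ^ 2) * w' s| ≤ Z * Bw := by
      intro s hs
      rw [abs_mul]
      refine mul_le_mul ?_ (hw'bd s hs) (abs_nonneg _) hZpos.le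
      rw [abs_of_pos (div_pos two_pos (hx2 s hs))]
      exact div_le_div_of_nonneg_left two_pos.le hb2 (hx2le s hs)
    have hUlip := lip_primitive hab.le (hφint b hmemb) hφbd
    have hUa : (∫ s in a..a, 2 / (1 - s ^ 2) * w' s) = 0 := integral_same
    have hUbd : ∀ x ∈ Icc a b, |∫ s in a..x, 2 / (1 - s ^ 2) * w' s| ≤ Z * Bw * (b - a) := by
      intro x hx
      have h1 := hUlip x hx a hmemab
      rw [hUa, sub_zero] at h1
      have h2 : |x - a| ≤ b - a := by
        rw [abs_of_nonneg (by linarith [hx.1])]; linarith [hx.2]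
      exact h1.trans (mul_le_mul_of_nonneg_left h2 (by positivity))
    have hUd : ∀ x ∈ Ioo a b, HasDerivAt (fun y => ∫ s in a..y, 2 / (1 - s ^ 2) * w' s)
        (2 / (1 - x ^ 2) * w' x) x := by
      intro x hx
      refine intervalIntegral.integral_hasDerivAt_right (hφint x (Ioo_subset_Icc_self hx)) ?_ ?_
      · exact (hφc.mono Ioo_subset_Icc_self).stronglyMeasurableAtFilter isOpen_Ioo x hx
      · exact hφc.continuousAt (Icc_mem_nhds hx.1 hx.2)
    -- u = exp (lam * U)
    set BU : ℝ := Z * Bw * (b - a) with hBUdef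
    set Bu : ℝ := Real.exp (|lam| * BU) with hBudef
    have hlamU : ∀ x ∈ Icc a b, lam * (∫ s in a..x, 2 / (1 - s ^ 2) * w' s) ≤ |lam| * BU := by
      intro x hx
      calc lam * (∫ s in a..x, 2 / (1 - s ^ 2) * w' s)
          ≤ |lam * (∫ s in a..x, 2 / (1 - s ^ 2) * w' s)| := le_abs_self _
        _ = |lam| * |∫ s in a..x, 2 / (1 - s ^ 2) * w' s| := abs_mul _ _
        _ ≤ |lam| * BU := mul_le_mul_of_nonneg_left (hUbd x hx) (abs_nonneg _)
    have hulip : ∀ x ∈ Icc a b, ∀ y ∈ Icc a b,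
        |Real.exp (lam * (∫ s in a..x, 2 / (1 - s ^ 2) * w' s)) -
          Real.exp (lam * (∫ s in a..y, 2 / (1 - s ^ 2) * w' s))| ≤
          Bu * (|lam| * (Z * Bw)) * |x - y| := by
      intro x hx y hy
      calc |Real.exp (lam * (∫ s in a..x, 2 / (1 - s ^ 2) * w' s)) -
            Real.exp (lam * (∫ s in a..y, 2 / (1 - s ^ 2) * w' s))|
          ≤ Bu * |lam * (∫ s in a..x, 2 / (1 - s ^ 2) * w' s) -
              lam * (∫ s in a..y, 2 / (1 - s ^ 2) * w' s)| :=
            exp_lip (hlamU x hx) (hlamU y hy)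
        _ = Bu * (|lam| * |(∫ s in a..x, 2 / (1 - s ^ 2) * w' s) -
              (∫ s in a..y, 2 / (1 - s ^ 2) * w' s)|) := by
            rw [← mul_sub, abs_mul]
        _ ≤ Bu * (|lam| * (Z * Bw * |x - y|)) := by
            refine mul_le_mul_of_nonneg_left (mul_le_mul_of_nonneg_left ?_ (abs_nonneg _))
              (by positivity)
            exact hUlip x hx y hy
        _ = Bu * (|lam| * (Z * Bw)) * |x - y| := by ring
    have hubd : ∀ x ∈ Icc a b,
        |Real.exp (lam * (∫ s in a..x, 2 / (1 - s ^ 2) * w' s))| ≤ Bu := by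
      intro x hx
      rw [abs_of_pos (Real.exp_pos _)]
      exact Real.exp_le_exp.2 (hlamU x hx)
    have hua : Real.exp (lam * (∫ s in a..a, 2 / (1 - s ^ 2) * w' s)) = 1 := by
      rw [hUa, mul_zero, Real.exp_zero]
    -- g lower bound and inverse lipschitz
    have hglow : ∀ t ∈ Icc a b, 2 * a ≤ g t := by
      intro t ht
      rw [hg t]
      have h1 : 2 ≤ ζ t := by
        rw [hζ t]
        rw [le_div_iff₀ (hx2 t ht)]
        nlinarith [ht0 t ht]
      have h2 := hψ1 t ht
      have h3 := ht.1
      calc 2 * a ≤ 2 * t := by linarith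
        _ = t * 2 := by ring
        _ ≤ t * ζ t := mul_le_mul_of_nonneg_left h1 (ht0 t ht).le
        _ = t * ζ t * 1 := (mul_one _).symm
        _ ≤ t * ζ t * ψ t := mul_le_mul_of_nonneg_left h2
            (mul_nonneg (ht0 t ht).le (hζpos t ht).le)
    have h2a : (0:ℝ) < 2 * a := by linarith
    have hginvlip := lip_inv h2a hglow hglip
    have hginvbd : ∀ t ∈ Icc a b, |(g t)⁻¹| ≤ (2 * a)⁻¹ := by
      intro t ht
      rw [abs_of_pos (inv_pos.2 (hgpos t ht))]
      exact inv_anti₀ h2a (hglow t ht)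
    -- p = w' * u lipschitz
    have hplip := lip_mul hw'lip hulip hw'bd hubd
    have hpbd : ∀ t ∈ Icc a b,
        |w' t * Real.exp (lam * (∫ s in a..t, 2 / (1 - s ^ 2) * w' s))| ≤ Bw * Bu := by
      intro t ht
      rw [abs_mul]
      exact mul_le_mul (hw'bd t ht) (hubd t ht) (abs_nonneg _) hBw0
    have hrlip := lip_mul hplip hginvlip hpbd hginvbd
    -- r has a.e. derivative zero
    have hr0 : ∀ᵐ x ∂(volume.restrict (Ioo a b)), HasDerivAt
        (fun y => w' y * Real.exp (lam * (∫ s in a..y, 2 / (1 - s ^ 2) * w' s)) * (g y)⁻¹) 0 x := by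
      filter_upwards [hode, ae_hasDerivAt_primitive hab hϱint hϱpos,
        ae_restrict_mem measurableSet_Ioo] with x hodex hHx hx
      have hxI : x ∈ Icc a b := Ioo_subset_Icc_self hx
      have hx0 : 0 < x := ht0 x hxI
      have hxne : (1 - x ^ 2) ≠ 0 := (hx2 x hxI).ne'
      rw [hζ x] at hodex
      have hψd : HasDerivAt (fun t => Real.exp (∫ s in a..t, ϱ s))
          (Real.exp (∫ s in a..x, ϱ s) * ϱ x) x := hHx.exp
      have hden : HasDerivAt (fun t : ℝ => 1 - t ^ 2) (-(2 * x)) x := by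
        simpa using (hasDerivAt_pow 2 x).const_sub 1
      have hζd : HasDerivAt (fun t : ℝ => 2 * (1 - t ^ 2)⁻¹)
          (2 * (-(-(2 * x)) / (1 - x ^ 2) ^ 2)) x := (hden.inv hxne).const_mul 2
      have hgd0 := ((hasDerivAt_id x).mul hζd).mul hψd
      have hgd : HasDerivAt g
          ((1 * (2 * (1 - x ^ 2)⁻¹) + id x * (2 * (-(-(2 * x)) / (1 - x ^ 2) ^ 2))) *
              Real.exp (∫ s in a..x, ϱ s) +
            id x * (2 * (1 - x ^ 2)⁻¹) * (Real.exp (∫ s in a..x, ϱ s) * ϱ x)) x := by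
        refine hgd0.congr_of_eventuallyEq (Eventually.of_forall fun t => ?_)
        rw [hg t, hζ t, hψ t]
        simp [div_eq_mul_inv]
      have hudx : HasDerivAt (fun y => Real.exp (lam * (∫ s in a..y, 2 / (1 - s ^ 2) * w' s)))
          (Real.exp (lam * (∫ s in a..x, 2 / (1 - s ^ 2) * w' s)) *
            (lam * (2 / (1 - x ^ 2) * w' x))) x := ((hUd x hx).const_mul lam).exp
      have hgne : g x ≠ 0 := (hgpos x hxI).ne'
      have htot := (hodex.mul hudx).mul (hgd.inv hgne)
      refine htot.congr_deriv ?_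
      simp only [Pi.inv_apply, Pi.mul_apply]
      rw [hg x, hζ x, hψ x]
      simp only [id_eq, one_mul]
      set E := Real.exp (∫ s in a..x, ϱ s) with hE
      set uu := Real.exp (lam * (∫ s in a..x, 2 / (1 - s ^ 2) * w' s)) with huu
      set W := w' x with hW
      set R := ϱ x with hR
      have hEpos : 0 < E := Real.exp_pos _
      field_simp [hx0.ne', hxne, hEpos.ne']
      ring
    -- r constant
    have hrconst := const_of_lip_ae_deriv_zero hab.le (abs_nonneg _)
      (fun x hx y hy => (hrlip x hx y hy).trans
        (mul_le_mul_of_nonneg_right (le_abs_self _) (abs_nonneg _))) hr0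
    have hpu : ∀ x ∈ Icc a b,
        w' x * Real.exp (lam * (∫ s in a..x, 2 / (1 - s ^ 2) * w' s)) * g a = g x := by
      intro x hx
      have h1 := hrconst x hx
      rw [hw'a, hua, one_mul, one_mul] at h1
      have hgne : g x ≠ 0 := (hgpos x hx).ne'
      set uu := Real.exp (lam * (∫ s in a..x, 2 / (1 - s ^ 2) * w' s)) with huudef
      field_simp at h1
      linear_combination h1
    -- V = u - 1 - (lam / g a) * F has derivative zero
    have hVlip : ∀ x ∈ Icc a b, ∀ y ∈ Icc a b,
        |(Real.exp (lam * (∫ s in a..x, 2 / (1 - s ^ 2) * w' s)) - 1 -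
            lam / g a * (∫ s in a..x, f s)) -
          (Real.exp (lam * (∫ s in a..y, 2 / (1 - s ^ 2) * w' s)) - 1 -
            lam / g a * (∫ s in a..y, f s))| ≤
          (Bu * (|lam| * (Z * Bw)) + |lam / g a| * (Z ^ 2 * Ψ)) * |x - y| := by
      intro x hx y hy
      have hFlip := lip_primitive hab.le (hfint b hmemb) hfabs
      have e : (Real.exp (lam * (∫ s in a..x, 2 / (1 - s ^ 2) * w' s)) - 1 -
            lam / g a * (∫ s in a..x, f s)) -
          (Real.exp (lam * (∫ s in a..y, 2 / (1 - s ^ 2) * w' s)) - 1 -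
            lam / g a * (∫ s in a..y, f s)) =
          (Real.exp (lam * (∫ s in a..x, 2 / (1 - s ^ 2) * w' s)) -
            Real.exp (lam * (∫ s in a..y, 2 / (1 - s ^ 2) * w' s))) -
          lam / g a * ((∫ s in a..x, f s) - (∫ s in a..y, f s)) := by ring
      rw [e]
      calc _ ≤ |Real.exp (lam * (∫ s in a..x, 2 / (1 - s ^ 2) * w' s)) -
            Real.exp (lam * (∫ s in a..y, 2 / (1 - s ^ 2) * w' s))| +
            |lam / g a * ((∫ s in a..x, f s) - (∫ s in a..y, f s))| := abs_sub _ _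
        _ ≤ Bu * (|lam| * (Z * Bw)) * |x - y| + |lam / g a| * (Z ^ 2 * Ψ * |x - y|) := by
            refine add_le_add (hulip x hx y hy) ?_
            rw [abs_mul]
            exact mul_le_mul_of_nonneg_left (hFlip x hx y hy) (abs_nonneg _)
        _ = (Bu * (|lam| * (Z * Bw)) + |lam / g a| * (Z ^ 2 * Ψ)) * |x - y| := by ring
    have hV0 : ∀ᵐ x ∂(volume.restrict (Ioo a b)), HasDerivAt
        (fun y => Real.exp (lam * (∫ s in a..y, 2 / (1 - s ^ 2) * w' s)) - 1 -
          lam / g a * (∫ s in a..y, f s)) 0 x := by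
      refine ae_restrict_of_forall_mem measurableSet_Ioo fun x hx => ?_
      have hxI : x ∈ Icc a b := Ioo_subset_Icc_self hx
      have hx0 : 0 < x := ht0 x hxI
      have hxne : (1 - x ^ 2) ≠ 0 := (hx2 x hxI).ne'
      have hudx : HasDerivAt (fun y => Real.exp (lam * (∫ s in a..y, 2 / (1 - s ^ 2) * w' s)))
          (Real.exp (lam * (∫ s in a..x, 2 / (1 - s ^ 2) * w' s)) *
            (lam * (2 / (1 - x ^ 2) * w' x))) x := ((hUd x hx).const_mul lam).exp
      have hFd : HasDerivAt (fun y => ∫ s in a..y, f s) (f x) x := by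
        refine intervalIntegral.integral_hasDerivAt_right (hfint x hxI) ?_ ?_
        · exact (hfc.mono Ioo_subset_Icc_self).stronglyMeasurableAtFilter isOpen_Ioo x hx
        · exact hfc.continuousAt (Icc_mem_nhds hx.1 hx.2)
      have hVd := (hudx.sub_const 1).sub (hFd.const_mul (lam / g a))
      refine hVd.congr_deriv ?_
      have hpux := hpu x hxI
      rw [hg x, hζ x, hψ x] at hpux
      rw [hf x, hζ x, hψ x]
      have hgane : g a ≠ 0 := hga0.ne'
      have e : x * (2 / (1 - x ^ 2)) ^ 2 * Real.exp (∫ s in a..x, ϱ s)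
          = 2 / (1 - x ^ 2) * (x * (2 / (1 - x ^ 2)) * Real.exp (∫ s in a..x, ϱ s)) := by
        ring
      rw [e, ← hpux]
      field_simp
      ring
    have hVconst := const_of_lip_ae_deriv_zero hab.le (abs_nonneg _)
      (fun x hx y hy => (hVlip x hx y hy).trans
        (mul_le_mul_of_nonneg_right (le_abs_self _) (abs_nonneg _))) hV0
    have huval : ∀ x ∈ Icc a b,
        Real.exp (lam * (∫ s in a..x, 2 / (1 - s ^ 2) * w' s)) =
          1 + lam / g a * (∫ s in a..x, f s) := by
      intro x hx
      have h1 := hVconst x hx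
      rw [hua, hFa] at h1
      simp at h1
      linarith [h1]
    -- lam = m
    have hlam : lam = m := by
      have h1 := hpu b hmemb
      rw [hw'b, one_mul, huval b hmemb] at h1
      rw [hm]
      rw [eq_div_iff hintf.ne']
      have hgane : g a ≠ 0 := hga0.ne'
      field_simp at h1
      linarith [h1]
    refine ⟨hlam, ?_⟩
    intro x hx
    have e1 := hpu x hx
    have e3 := huval x hx
    have hgane : g a ≠ 0 := hga0.ne'
    have hDne2 : m * (∫ s in a..x, f s) + g a ≠ 0 := (hga0.trans_le (hDpos x hx)).ne'
    rw [hw x, eq_div_iff hDne2]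
    have e2 : Real.exp (lam * (∫ s in a..x, 2 / (1 - s ^ 2) * w' s)) * g a =
        m * (∫ s in a..x, f s) + g a := by
      rw [e3, ← hlam]
      field_simp
      ring
    calc w' x * (m * (∫ s in a..x, f s) + g a)
        = w' x * (Real.exp (lam * (∫ s in a..x, 2 / (1 - s ^ 2) * w' s)) * g a) := by rw [e2]
      _ = g x := by linear_combination e1
end

section
/- Let 0 ≤ a < b < 1, ζ(t) = 2/(1-t²), ϱ ≥ 0 on [a,b] with ϱ/ζ non-decreasing and bounded, ψ = exp(∫ ϱ), f = tζ²ψ, g = tζψ. Define \hat{m} := (g(a)+g(b))/∫_a^b f dt. Then (b·ζ(b) - a·ζ(a))·\hat{m} ≤ 2 + a·(a·ζ(a) + ϱ(a⁺)) + b·(b·ζ(b) + ϱ(b⁻)) (a reverse Hermite–Hadamard inequality), with equality if and only if ϱ ≡ 0 on [a,b). -/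
lemma key1 (s sb c cb : ℝ) (h0 : 0 ≤ s) (h2 : s ≤ sb) (hc : 1 ≤ c) (hcb : 1 ≤ cb)
    (e : c^2 = 1 + s^2) (eb : cb^2 = 1 + sb^2) : sb*c - cb*s ≤ sb + s := by
  rcases le_or_gt (sb*c - cb*s) 0 with h | h
  · nlinarith
  · have hid : (sb*c - cb*s)*(sb*c + cb*s) = sb^2 - s^2 := by nlinarith
    have hsb : 0 < sb := by nlinarith
    have hge : 0 ≤ sb*c + cb*s - sb := by nlinarith
    nlinarith [mul_nonneg h.le hge, mul_nonneg h0 (h0.trans h2)]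

lemma key1' (s sb c cb : ℝ) (h0 : 0 < s) (h2 : s < sb) (hc : 1 ≤ c) (hcb : 1 ≤ cb)
    (e : c^2 = 1 + s^2) (eb : cb^2 = 1 + sb^2) : sb*c - cb*s < sb + s := by
  rcases le_or_gt (sb*c - cb*s) 0 with h | h
  · nlinarith
  · have hid : (sb*c - cb*s)*(sb*c + cb*s) = sb^2 - s^2 := by nlinarith
    have hsb : 0 < sb := by nlinarith
    have hge : 0 ≤ sb*c + cb*s - sb := by nlinarith
    nlinarith [mul_nonneg h.le hge, mul_pos h0 (h0.trans h2)]

lemma Fnonneg (sa s sb ca c cb : ℝ) (h0 : 0 ≤ sa) (h1 : sa ≤ s) (h2 : s ≤ sb)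
    (hca : 1 ≤ ca) (hc : 1 ≤ c) (hcb : 1 ≤ cb)
    (ea : ca^2 = 1 + sa^2) (e : c^2 = 1 + s^2) (eb : cb^2 = 1 + sb^2) :
    0 ≤ (ca+cb)*(cb-c) + sb*(sa+s) - sb^2 := by
  have hs0 : 0 ≤ s := h0.trans h1
  have hcc : c ≤ cb := by nlinarith
  have hk1 := key1 s sb c cb hs0 h2 hc hcb e eb
  have hk2 : 0 ≤ (ca+cb)*(sb+s) - sb*(cb+c) := by
    nlinarith [mul_le_mul_of_nonneg_right hca (by linarith : (0:ℝ) ≤ sb + s)]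
  rcases le_or_gt (sb - s - sa) 0 with h | h
  · nlinarith [mul_nonneg (by linarith : (0:ℝ) ≤ ca + cb) (sub_nonneg.2 hcc)]
  · have h3 : 0 ≤ ((ca+cb)*(cb-c) + sb*(sa+s) - sb^2) * (cb + c) := by
      have e1 : ((ca+cb)*(cb-c) + sb*(sa+s) - sb^2) * (cb + c)
          = (sb-s)*((ca+cb)*(sb+s)) - (sb-s-sa)*(sb*(cb+c)) := by nlinarith
      rw [e1]
      have i1 : (sb-s-sa)*(sb*(cb+c)) ≤ (sb-s-sa)*((ca+cb)*(sb+s)) := by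
        apply mul_le_mul_of_nonneg_left (by linarith) h.le
      have i2 : (sb-s-sa)*((ca+cb)*(sb+s)) ≤ (sb-s)*((ca+cb)*(sb+s)) := by
        apply mul_le_mul_of_nonneg_right (by linarith)
        nlinarith
      linarith
    exact (mul_nonneg_iff_of_pos_right (by linarith : (0:ℝ) < cb + c)).1 h3

lemma Fpos (sa s sb ca c cb : ℝ) (h0 : 0 ≤ sa) (h1 : sa < s) (h2 : s < sb)
    (hca : 1 ≤ ca) (hc : 1 ≤ c) (hcb : 1 ≤ cb)
    (ea : ca^2 = 1 + sa^2) (e : c^2 = 1 + s^2) (eb : cb^2 = 1 + sb^2) :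
    0 < (ca+cb)*(cb-c) + sb*(sa+s) - sb^2 := by
  have hs0 : 0 < s := h0.trans_lt h1
  have hcc : c < cb := by nlinarith
  have hk1 := key1' s sb c cb hs0 h2 hc hcb e eb
  have hk2 : 0 < (ca+cb)*(sb+s) - sb*(cb+c) := by
    nlinarith [mul_le_mul_of_nonneg_right hca (by linarith : (0:ℝ) ≤ sb + s)]
  rcases le_or_gt (sb - s - sa) 0 with h | h
  · nlinarith [mul_pos (by linarith : (0:ℝ) < ca + cb) (sub_pos.2 hcc)]
  · have h3 : 0 < ((ca+cb)*(cb-c) + sb*(sa+s) - sb^2) * (cb + c) := by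
      have e1 : ((ca+cb)*(cb-c) + sb*(sa+s) - sb^2) * (cb + c)
          = (sb-s)*((ca+cb)*(sb+s)) - (sb-s-sa)*(sb*(cb+c)) := by nlinarith
      rw [e1]
      have i1 : (sb-s-sa)*(sb*(cb+c)) < (sb-s-sa)*((ca+cb)*(sb+s)) := by
        apply mul_lt_mul_of_pos_left (by linarith) h
      have i2 : (sb-s-sa)*((ca+cb)*(sb+s)) ≤ (sb-s)*((ca+cb)*(sb+s)) := by
        apply mul_le_mul_of_nonneg_right (by linarith)
        nlinarith
      linarith
    exact (mul_pos_iff_of_pos_right (by linarith : (0:ℝ) < cb + c)).1 h3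

lemma stmt19_gap (sa sb ca cb pb J K M II ala blb : ℝ)
    (hpb : pb = 1 + J)
    (hIK : II + K = cb * pb - ca)
    (hsq : cb^2 - ca^2 = sb^2 - sa^2)
    (hala : 0 ≤ ala * II)
    (hblb : sb * M ≤ blb * II)
    (hG : 0 ≤ ((ca+cb)*cb + sb*sa - sb^2)*J - (ca+cb)*K + sb*M) :
    (sb - sa) * (sa + sb * pb) ≤ (ca + cb + ala + blb) * II := by
  have key : (ca + cb + ala + blb) * II - (sb - sa) * (sa + sb * pb)
      = (((ca+cb)*cb + sb*sa - sb^2)*J - (ca+cb)*K + sb*M) + ala * II + (blb * II - sb * M) := by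
    linear_combination (ca+cb)*hIK + ((ca+cb)*cb - (sb-sa)*sb)*hpb + hsq
  linarith

lemma stmt19_gap_strict (sa sb ca cb pb J K M II ala blb : ℝ)
    (hpb : pb = 1 + J)
    (hIK : II + K = cb * pb - ca)
    (hsq : cb^2 - ca^2 = sb^2 - sa^2)
    (hala : 0 ≤ ala * II)
    (hblb : sb * M ≤ blb * II)
    (hG : 0 < ((ca+cb)*cb + sb*sa - sb^2)*J - (ca+cb)*K + sb*M) :
    (sb - sa) * (sa + sb * pb) < (ca + cb + ala + blb) * II := by
  have key : (ca + cb + ala + blb) * II - (sb - sa) * (sa + sb * pb)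
      = (((ca+cb)*cb + sb*sa - sb^2)*J - (ca+cb)*K + sb*M) + ala * II + (blb * II - sb * M) := by
    linear_combination (ca+cb)*hIK + ((ca+cb)*cb - (sb-sa)*sb)*hpb + hsq
  linarith


open Set MeasureTheory intervalIntegral Filter

theorem stmt_19 (a b : ℝ) (ha : 0 ≤ a) (hab : a < b) (hb1 : b < 1)
    (ϱ : ℝ → ℝ) (hϱpos : ∀ t ∈ Icc a b, 0 ≤ ϱ t)
    (ζ : ℝ → ℝ) (hζ : ∀ t, ζ t = 2 / (1 - t ^ 2))
    (hmono : MonotoneOn (fun t => ϱ t / ζ t) (Icc a b))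
    (hbdd : ∃ C : ℝ, ∀ t ∈ Icc a b, ϱ t / ζ t ≤ C)
    (hϱint : IntervalIntegrable ϱ volume a b)
    (ψ f g : ℝ → ℝ)
    (hψ : ∀ t, ψ t = Real.exp (∫ s in a..t, ϱ s))
    (hf : ∀ t, f t = t * (ζ t) ^ 2 * ψ t)
    (hg : ∀ t, g t = t * ζ t * ψ t)
    (mhat La Lb : ℝ)
    (hmhat : mhat = (g a + g b) / ∫ t in a..b, f t)
    (hLa : Tendsto ϱ (nhdsWithin a (Ioi a)) (nhds La))
    (hLb : Tendsto ϱ (nhdsWithin b (Iio b)) (nhds Lb)) :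
    (b * ζ b - a * ζ a) * mhat ≤ 2 + a * (a * ζ a + La) + b * (b * ζ b + Lb) ∧
    ((b * ζ b - a * ζ a) * mhat = 2 + a * (a * ζ a + La) + b * (b * ζ b + Lb) ↔
      ∀ t ∈ Ico a b, ϱ t = 0) := by
  have hab' : a ≤ b := hab.le
  have hb0 : 0 < b := lt_of_le_of_lt ha hab
  -- basic facts about points of [a,b]
  have hsq1 : ∀ t ∈ Icc a b, 0 < 1 - t ^ 2 := by
    intro t ht
    have h1 : 0 ≤ t := ha.trans ht.1
    have h2 : t < 1 := lt_of_le_of_lt ht.2 hb1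
    nlinarith
  have hzpos : ∀ t ∈ Icc a b, 0 < ζ t := by
    intro t ht; rw [hζ]; exact div_pos two_pos (hsq1 t ht)
  have hz2 : ∀ t ∈ Icc a b, 2 ≤ ζ t := by
    intro t ht
    have h1 := hsq1 t ht
    have h2 : 0 ≤ t := ha.trans ht.1
    rw [hζ]
    rw [le_div_iff₀ h1]
    nlinarith
  have hsqid : ∀ t ∈ Icc a b, (ζ t - 1) ^ 2 = 1 + (t * ζ t) ^ 2 := by
    intro t ht
    have h1 := (hsq1 t ht).ne'
    rw [hζ]
    field_simp
    ring
  have hzsq : ∀ t ∈ Icc a b, t ^ 2 * ζ t = ζ t - 2 := by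
    intro t ht
    have h1 := (hsq1 t ht).ne'
    rw [hζ]
    field_simp
    ring
  have hamem : a ∈ Icc a b := left_mem_Icc.2 hab'
  have hbmem : b ∈ Icc a b := right_mem_Icc.2 hab'
  -- strict monotonicity of t * ζ t
  have hslt : ∀ x ∈ Icc a b, ∀ y ∈ Icc a b, x < y → x * ζ x < y * ζ y := by
    intro x hx y hy hxy
    have h1 := hsq1 x hx
    have h2 := hsq1 y hy
    have h0x : 0 ≤ x := ha.trans hx.1
    rw [hζ, hζ, mul_div_assoc'] -- x * 2 / (1 - x^2)
    rw [mul_div_assoc']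
    rw [div_lt_div_iff₀ h1 h2]
    have h0y : 0 ≤ y := h0x.trans hxy.le
    nlinarith [mul_pos (sub_pos.2 hxy) (show (0:ℝ) < 1 + x*y from by nlinarith)]
  have hsle : ∀ x ∈ Icc a b, ∀ y ∈ Icc a b, x ≤ y → x * ζ x ≤ y * ζ y := by
    intro x hx y hy hxy
    rcases eq_or_lt_of_le hxy with rfl | h
    · exact le_rfl
    · exact (hslt x hx y hy h).le
  have hsab : a * ζ a < b * ζ b := hslt a hamem b hbmem hab
  have hsa0 : 0 ≤ a * ζ a := mul_nonneg ha (hzpos a hamem).le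
  -- continuity of ζ on [a,b]
  have hzf : ζ = fun u => 2 / (1 - u ^ 2) := funext hζ
  have hzcont : ContinuousOn ζ (Icc a b) := by
    rw [hzf]
    exact ContinuousOn.div continuousOn_const (by fun_prop) (fun t ht => (hsq1 t ht).ne')
  -- continuity of ψ on [a,b]
  have hψf : ψ = fun t => Real.exp (∫ s in a..t, ϱ s) := funext hψ
  have hϱIcc : IntegrableOn ϱ (Icc a b) volume :=
    (intervalIntegrable_iff_integrableOn_Icc_of_le hab').1 hϱint
  have hψcont : ContinuousOn ψ (Icc a b) := by
    rw [hψf]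
    apply Real.continuous_exp.comp_continuousOn
    have h2 : IntegrableOn ϱ (uIcc a b) volume := by rwa [uIcc_of_le hab']
    have := intervalIntegral.continuousOn_primitive_interval (f := ϱ) (μ := volume) h2
    rwa [uIcc_of_le hab'] at this
  have hψpos : ∀ t, 0 < ψ t := by intro t; rw [hψ]; exact Real.exp_pos _
  have hψa : ψ a = 1 := by rw [hψ, intervalIntegral.integral_same, Real.exp_zero]
  -- monotonicity of ϱ on [a,b]
  have hϱmono : MonotoneOn ϱ (Icc a b) := by
    intro x hx y hy hxy
    have hzx := hzpos x hx
    have hzy := hzpos y hy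
    have h1 : ϱ x / ζ x ≤ ϱ y / ζ y := hmono hx hy hxy
    have h2 : 0 ≤ ϱ y / ζ y := div_nonneg (hϱpos y hy) hzy.le
    have hzxy : ζ x ≤ ζ y := by
      rw [hζ, hζ]
      have := hsq1 x hx; have := hsq1 y hy
      rw [div_le_div_iff₀ (by linarith) (by linarith)]
      have h0x : 0 ≤ x := ha.trans hx.1
      nlinarith
    calc ϱ x = (ϱ x / ζ x) * ζ x := by field_simp
    _ ≤ (ϱ y / ζ y) * ζ x := by apply mul_le_mul_of_nonneg_right h1 hzx.le
    _ ≤ (ϱ y / ζ y) * ζ y := by apply mul_le_mul_of_nonneg_left hzxy h2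
    _ = ϱ y := by field_simp
  -- global monotone extension r of ϱ
  set r : ℝ → ℝ := fun t => ϱ (max a (min t b)) with hrdef
  have hclamp : ∀ t, max a (min t b) ∈ Icc a b := by
    intro t
    constructor
    · exact le_max_left _ _
    · exact max_le hab' (min_le_right _ _)
  have hrmono : Monotone r := by
    intro x y hxy
    exact hϱmono (hclamp x) (hclamp y)
      (max_le_max le_rfl (min_le_min hxy le_rfl))
  have hreq : ∀ t ∈ Icc a b, r t = ϱ t := by
    intro t ht
    have : max a (min t b) = t := by
      rw [min_eq_left ht.2, max_eq_right ht.1]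
    rw [hrdef]; simp only [this]

  -- integrability of r and the right-limit function R
  have hrint : ∀ x ∈ Icc a b, IntervalIntegrable r volume a x := by
    intro x hx
    exact (hrmono.monotoneOn _).intervalIntegrable
  set R : ℝ → ℝ := Function.rightLim r with hRdef
  have hRmono : Monotone R := hrmono.rightLim
  have hRtendsto : ∀ x, Tendsto r (nhdsWithin x (Ioi x)) (nhds (R x)) := fun x =>
    hrmono.tendsto_rightLim x
  have hRae : ∀ᵐ x ∂(volume : Measure ℝ), R x = r x := by
    have hsub : {x | R x ≠ r x} ⊆ {x | ¬ContinuousWithinAt r (Ioi x) x} := by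
      intro x hx
      simp only [mem_setOf_eq] at hx ⊢
      intro hc
      exact hx (hrmono.continuousWithinAt_Ioi_iff_rightLim_eq.1 hc)
    have hcnull : (volume : Measure ℝ) {x | ¬ContinuousWithinAt r (Ioi x) x} = 0 :=
      (Set.Countable.mono (fun x (hx : ¬ContinuousWithinAt r (Ioi x) x) (hc : ContinuousAt r x) => hx hc.continuousWithinAt) hrmono.countable_not_continuousAt).measure_zero _
    have : (volume : Measure ℝ) {x | R x ≠ r x} = 0 := measure_mono_null hsub hcnull
    exact this
  -- the primitive of r and its exponential
  set H : ℝ → ℝ := fun u => ∫ s in a..u, r s with hHdef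
  set Ψ : ℝ → ℝ := fun u => Real.exp (H u) with hΨdef
  have hHcont : ContinuousOn H (Icc a b) := by
    have h2 : IntegrableOn r (uIcc a b) volume := by
      rw [uIcc_of_le hab']
      exact (intervalIntegrable_iff_integrableOn_Icc_of_le hab').1 (hrint b hbmem)
    have := intervalIntegral.continuousOn_primitive_interval (f := r) (μ := volume) h2
    rwa [uIcc_of_le hab'] at this
  have hΨcont : ContinuousOn Ψ (Icc a b) := Real.continuous_exp.comp_continuousOn hHcont
  have hΨpos : ∀ t, 0 < Ψ t := fun t => Real.exp_pos _
  have hΨeq : ∀ t ∈ Icc a b, Ψ t = ψ t := by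
    intro t ht
    rw [hΨdef, hψ]
    simp only [hHdef]
    congr 1
    apply intervalIntegral.integral_congr
    intro u hu
    have : u ∈ Icc a b := by
      rcases le_total a t with h | h
      · rw [uIcc_of_le h] at hu; exact ⟨hu.1, hu.2.trans ht.2⟩
      · rw [uIcc_of_ge h] at hu; exact ⟨ht.1.trans hu.1, hu.2.trans hab'⟩
    exact hreq u this
  -- right derivative of H
  have hHderiv : ∀ x ∈ Ioo a b, HasDerivWithinAt H (R x) (Ioi x) x := by
    intro x hx
    have hint : IntervalIntegrable r volume a x := hrint x ⟨hx.1.le, hx.2.le⟩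
    have hmeas : StronglyMeasurableAtFilter r (nhdsWithin x (Ioi x)) :=
      (hrmono.measurable.stronglyMeasurable).stronglyMeasurableAtFilter
    have htd : Tendsto r (nhdsWithin x (Ioi x) ⊓ ae volume) (nhds (R x)) :=
      (hRtendsto x).mono_left inf_le_left
    have := intervalIntegral.integral_hasDerivWithinAt_of_tendsto_ae_right
      (s := Ici x) (t := Ioi x) hint hmeas htd
    exact this.mono Ioi_subset_Ici_self
  have hΨderiv : ∀ x ∈ Ioo a b, HasDerivWithinAt Ψ (R x * Ψ x) (Ioi x) x := by
    intro x hx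
    have := (hHderiv x hx).exp
    simpa [hΨdef, mul_comm] using this

  -- derivative of ζ
  have hzd : ∀ x ∈ Ioo a b, HasDerivAt ζ (x * ζ x ^ 2) x := by
    intro x hx
    have hxm : x ∈ Icc a b := ⟨hx.1.le, hx.2.le⟩
    have hne := (hsq1 x hxm).ne'
    simp only [hzf]
    have h1 : HasDerivAt (fun u : ℝ => 1 - u ^ 2) (-(2 * x)) x := by
      simpa using (hasDerivAt_pow 2 x).const_sub 1
    have h2 := h1.inv hne
    have h3 := h2.const_mul (2 : ℝ)
    simp only [div_eq_mul_inv]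
    refine h3.congr_deriv ?_
    field_simp
  -- FTC A : ∫ R Ψ = Ψ b - Ψ a
  have hΨcontu : ContinuousOn Ψ (uIcc a b) := by rwa [uIcc_of_le hab']
  have hRint : IntervalIntegrable R volume a b := (hRmono.monotoneOn _).intervalIntegrable
  have hRΨint : IntervalIntegrable (fun x => R x * Ψ x) volume a b :=
    hRint.mul_continuousOn hΨcontu
  have hftcA : ∫ x in a..b, R x * Ψ x = Ψ b - Ψ a :=
    integral_eq_sub_of_hasDeriv_right_of_le hab' hΨcont (fun x hx => hΨderiv x hx) hRΨint
  have hΨa : Ψ a = 1 := by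
    simp only [hΨdef, hHdef, intervalIntegral.integral_same, Real.exp_zero]
  -- the four integrals
  have hψcontu : ContinuousOn ψ (uIcc a b) := by rwa [uIcc_of_le hab']
  have hzcontu : ContinuousOn ζ (uIcc a b) := by rwa [uIcc_of_le hab']
  have hJint : IntervalIntegrable (fun t => ϱ t * ψ t) volume a b :=
    hϱint.mul_continuousOn hψcontu
  have hKint : IntervalIntegrable (fun t => ϱ t * ((ζ t - 1) * ψ t)) volume a b :=
    hϱint.mul_continuousOn (((hzcontu.sub continuousOn_const)).mul hψcontu)
  have hMint : IntervalIntegrable (fun t => ϱ t * (t * ζ t * ψ t)) volume a b :=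
    hϱint.mul_continuousOn (((continuousOn_id.mul hzcontu)).mul hψcontu)
  have hff : f = fun t => t * ζ t ^ 2 * ψ t := funext hf
  have hfcont : ContinuousOn f (uIcc a b) := by
    rw [hff]
    exact (continuousOn_id.mul (hzcontu.pow 2)).mul hψcontu
  have hfint : IntervalIntegrable f volume a b := hfcont.intervalIntegrable
  set J := ∫ t in a..b, ϱ t * ψ t with hJdef
  set K := ∫ t in a..b, ϱ t * ((ζ t - 1) * ψ t) with hKdef
  set M := ∫ t in a..b, ϱ t * (t * ζ t * ψ t) with hMdef
  set II := ∫ t in a..b, f t with hIIdef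
  -- a.e. facts
  have haeΙ : ∀ᵐ x ∂(volume : Measure ℝ), x ∈ Set.uIoc a b → x ∈ Icc a b := by
    filter_upwards with x hx
    rw [uIoc_of_le hab'] at hx
    exact ⟨hx.1.le, hx.2⟩
  -- J = ψ b - 1
  have hJeq : J = ψ b - 1 := by
    have e1 : J = ∫ x in a..b, R x * Ψ x := by
      rw [hJdef]
      apply intervalIntegral.integral_congr_ae
      filter_upwards [hRae, haeΙ] with x hx hx2 hx3
      have hm := hx2 hx3
      rw [← hreq x hm, ← hΨeq x hm, hx]
    rw [e1, hftcA, hΨa, hΨeq b hbmem]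
  have hΨb : Ψ b = ψ b := hΨeq b hbmem
  -- FTC B : ∫ (f + R ((ζ-1) Ψ)) = (ζ b - 1) ψ b - (ζ a - 1)
  have hPcont : ContinuousOn (fun u => (ζ u - 1) * Ψ u) (Icc a b) :=
    (hzcont.sub continuousOn_const).mul hΨcont
  have hBint1 : IntervalIntegrable (fun x => x * ζ x ^ 2 * Ψ x) volume a b :=
    ((continuousOn_id.mul (hzcontu.pow 2)).mul hΨcontu).intervalIntegrable
  have hBint2 : IntervalIntegrable (fun x => R x * ((ζ x - 1) * Ψ x)) volume a b :=
    hRint.mul_continuousOn ((hzcontu.sub continuousOn_const).mul hΨcontu)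
  have hPderiv : ∀ x ∈ Ioo a b, HasDerivWithinAt (fun u => (ζ u - 1) * Ψ u)
      (x * ζ x ^ 2 * Ψ x + R x * ((ζ x - 1) * Ψ x)) (Ioi x) x := by
    intro x hx
    have h1 := ((hzd x hx).sub_const 1).hasDerivWithinAt (s := Ioi x)
    have h2 := h1.mul (hΨderiv x hx)
    refine h2.congr_deriv ?_
    ring
  have hftcB : (∫ x in a..b, (x * ζ x ^ 2 * Ψ x + R x * ((ζ x - 1) * Ψ x)))
      = (ζ b - 1) * Ψ b - (ζ a - 1) * Ψ a :=
    integral_eq_sub_of_hasDeriv_right_of_le hab' hPcont hPderiv (hBint1.add hBint2)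
  have hIKeq : II + K = (ζ b - 1) * ψ b - (ζ a - 1) := by
    have e1 : (∫ x in a..b, (x * ζ x ^ 2 * Ψ x + R x * ((ζ x - 1) * Ψ x)))
        = (∫ x in a..b, x * ζ x ^ 2 * Ψ x) + ∫ x in a..b, R x * ((ζ x - 1) * Ψ x) :=
      intervalIntegral.integral_add hBint1 hBint2
    have e2 : (∫ x in a..b, x * ζ x ^ 2 * Ψ x) = II := by
      rw [hIIdef, hff]
      apply intervalIntegral.integral_congr
      intro u hu
      rw [uIcc_of_le hab'] at hu
      show u * ζ u ^ 2 * Ψ u = u * ζ u ^ 2 * ψ u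
      rw [hΨeq u hu]
    have e3 : (∫ x in a..b, R x * ((ζ x - 1) * Ψ x)) = K := by
      rw [hKdef]
      apply intervalIntegral.integral_congr_ae
      filter_upwards [hRae, haeΙ] with x hx hx2 hx3
      have hm := hx2 hx3
      rw [hx, hreq x hm, hΨeq x hm]
    rw [e1, e2, e3, hΨa, hΨb] at hftcB
    linarith [hftcB]

  -- La ≥ 0
  have hLa0 : 0 ≤ La := by
    apply ge_of_tendsto hLa
    apply eventually_of_mem (Ioo_mem_nhdsGT_of_mem (left_mem_Ico.2 hab))
    intro x hx
    exact hϱpos x ⟨hx.1.le, hx.2.le⟩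
  -- bound ϱ t * ζ b ≤ Lb * ζ t on [a,b)
  have hzbne : ζ b ≠ 0 := (hzpos b hbmem).ne'
  have hqlim : Tendsto (fun u => ϱ u / ζ u) (nhdsWithin b (Iio b)) (nhds (Lb / ζ b)) := by
    apply Tendsto.div hLb _ hzbne
    have hc : ContinuousAt ζ b := by
      rw [hzf]
      exact ContinuousAt.div continuousAt_const (by fun_prop) (hsq1 b hbmem).ne'
    exact hc.continuousWithinAt.tendsto
  have hq : ∀ t ∈ Ico a b, ϱ t * ζ b ≤ Lb * ζ t := by
    intro t ht
    have htm : t ∈ Icc a b := ⟨ht.1, ht.2.le⟩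
    have h1 : ϱ t / ζ t ≤ Lb / ζ b := by
      apply ge_of_tendsto hqlim
      apply eventually_of_mem (Ioo_mem_nhdsLT_of_mem ⟨ht.2, le_rfl⟩)
      intro u hu
      exact hmono htm ⟨ht.1.trans hu.1.le, hu.2.le⟩ hu.1.le
    exact (div_le_div_iff₀ (hzpos t htm) (hzpos b hbmem)).1 h1
  -- ζ b * M ≤ Lb * II
  have haeb : ∀ᵐ (x : ℝ) ∂(volume : Measure ℝ), x ≠ b := by
    rw [ae_iff]
    simp only [not_not, setOf_eq_eq_singleton]
    exact measure_singleton b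
  have hMle : ζ b * M ≤ Lb * II := by
    rw [hMdef, hIIdef, ← intervalIntegral.integral_const_mul, ← intervalIntegral.integral_const_mul]
    apply intervalIntegral.integral_mono_ae_restrict hab' (hMint.const_mul _) (hfint.const_mul _)
    filter_upwards [ae_restrict_mem measurableSet_Icc, ae_restrict_of_ae haeb] with x hx hxb
    have hico : x ∈ Ico a b := ⟨hx.1, lt_of_le_of_ne hx.2 hxb⟩
    have hxnn : 0 ≤ x * ζ x * ψ x :=
      mul_nonneg (mul_nonneg (ha.trans hx.1) (hzpos x hx).le) (hψpos x).le
    calc ζ b * (ϱ x * (x * ζ x * ψ x)) = (ϱ x * ζ b) * (x * ζ x * ψ x) := by ring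
    _ ≤ (Lb * ζ x) * (x * ζ x * ψ x) := mul_le_mul_of_nonneg_right (hq x hico) hxnn
    _ = Lb * f x := by rw [hf]; ring
  -- positivity of II
  have hIpos : 0 < II := by
    rw [hIIdef]
    apply intervalIntegral.intervalIntegral_pos_of_pos_on hfint _ hab
    intro x hx
    have hxm : x ∈ Icc a b := ⟨hx.1.le, hx.2.le⟩
    rw [hf]
    have hx0 : 0 < x := lt_of_le_of_lt ha hx.1
    have := hzpos x hxm
    have := hψpos x
    positivity

  -- the combination integrand G
  set G : ℝ → ℝ := fun t =>
    ((ζ a - 1 + (ζ b - 1)) * (ζ b - 1) + b * ζ b * (a * ζ a) - (b * ζ b)^2) * (ϱ t * ψ t)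
    + (-(ζ a - 1 + (ζ b - 1))) * (ϱ t * ((ζ t - 1) * ψ t))
    + b * ζ b * (ϱ t * (t * ζ t * ψ t)) with hGdef
  have hGint : IntervalIntegrable G volume a b :=
    ((hJint.const_mul _).add (hKint.const_mul _)).add (hMint.const_mul _)
  have hGval : ∫ t in a..b, G t
      = ((ζ a - 1 + (ζ b - 1)) * (ζ b - 1) + b * ζ b * (a * ζ a) - (b * ζ b)^2) * J
        + (-(ζ a - 1 + (ζ b - 1))) * K + b * ζ b * M := by
    rw [hGdef]
    rw [intervalIntegral.integral_add ((hJint.const_mul _).add (hKint.const_mul _))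
      (hMint.const_mul _)]
    rw [intervalIntegral.integral_add (hJint.const_mul _) (hKint.const_mul _)]
    rw [intervalIntegral.integral_const_mul, intervalIntegral.integral_const_mul,
      intervalIntegral.integral_const_mul]
  have hGptnn : ∀ t ∈ Icc a b, 0 ≤ G t := by
    intro t ht
    have hF := Fnonneg (a * ζ a) (t * ζ t) (b * ζ b) (ζ a - 1) (ζ t - 1) (ζ b - 1)
      hsa0 (hsle a hamem t ht ht.1) (hsle t ht b hbmem ht.2)
      (by linarith [hz2 a hamem]) (by linarith [hz2 t ht]) (by linarith [hz2 b hbmem])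
      (hsqid a hamem) (hsqid t ht) (hsqid b hbmem)
    have hϱψ : 0 ≤ ϱ t * ψ t := mul_nonneg (hϱpos t ht) (hψpos t).le
    have hGform : G t = (ϱ t * ψ t) *
        ((ζ a - 1 + (ζ b - 1)) * (ζ b - 1 - (ζ t - 1)) + b * ζ b * (a * ζ a + t * ζ t)
          - (b * ζ b)^2) := by
      rw [hGdef]; ring
    rw [hGform]
    exact mul_nonneg hϱψ hF
  have hGnn : 0 ≤ ∫ t in a..b, G t := intervalIntegral.integral_nonneg hab' hGptnn
  -- strict positivity of ∫ G under a positivity witness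
  have hGpos : ∀ t₀ ∈ Ico a b, 0 < ϱ t₀ → 0 < ∫ t in a..b, G t := by
    intro t₀ ht₀ hϱt₀
    have ht₀m : t₀ ∈ Icc a b := ⟨ht₀.1, ht₀.2.le⟩
    have hs1 : IntervalIntegrable G volume a t₀ :=
      hGint.mono_set (uIcc_subset_uIcc left_mem_uIcc (by rw [uIcc_of_le hab']; exact ht₀m))
    have hs2 : IntervalIntegrable G volume t₀ b :=
      hGint.mono_set (uIcc_subset_uIcc (by rw [uIcc_of_le hab']; exact ht₀m) right_mem_uIcc)
    have hsplit := intervalIntegral.integral_add_adjacent_intervals hs1 hs2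
    have h1 : 0 ≤ ∫ t in a..t₀, G t :=
      intervalIntegral.integral_nonneg ht₀.1 (fun u hu => hGptnn u ⟨hu.1, hu.2.trans ht₀.2.le⟩)
    have h2 : 0 < ∫ t in t₀..b, G t := by
      apply intervalIntegral.intervalIntegral_pos_of_pos_on hs2 _ ht₀.2
      intro x hx
      have hxm : x ∈ Icc a b := ⟨ht₀.1.trans hx.1.le, hx.2.le⟩
      have hax : a < x := lt_of_le_of_lt ht₀.1 hx.1
      have hϱx : 0 < ϱ x := lt_of_lt_of_le hϱt₀ (hϱmono ht₀m hxm hx.1.le)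
      have hF := Fpos (a * ζ a) (x * ζ x) (b * ζ b) (ζ a - 1) (ζ x - 1) (ζ b - 1)
        hsa0 (hslt a hamem x hxm hax) (hslt x hxm b hbmem hx.2)
        (by linarith [hz2 a hamem]) (by linarith [hz2 x hxm]) (by linarith [hz2 b hbmem])
        (hsqid a hamem) (hsqid x hxm) (hsqid b hbmem)
      have hGform : G x = (ϱ x * ψ x) *
          ((ζ a - 1 + (ζ b - 1)) * (ζ b - 1 - (ζ x - 1)) + b * ζ b * (a * ζ a + x * ζ x)
            - (b * ζ b)^2) := by
        rw [hGdef]; ring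
      rw [hGform]
      exact mul_pos (mul_pos hϱx (hψpos x)) hF
    linarith
  -- assembling the hypotheses of the gap lemmas
  have hpb' : ψ b = 1 + J := by linarith [hJeq]
  have hsq' : (ζ b - 1)^2 - (ζ a - 1)^2 = (b * ζ b)^2 - (a * ζ a)^2 := by
    have h1 := hsqid a hamem
    have h2 := hsqid b hbmem
    linarith
  have hala : 0 ≤ a * La * II := mul_nonneg (mul_nonneg ha hLa0) hIpos.le
  have hblb : b * ζ b * M ≤ b * Lb * II := by
    calc b * ζ b * M = b * (ζ b * M) := by ring
    _ ≤ b * (Lb * II) := mul_le_mul_of_nonneg_left hMle hb0.le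
    _ = b * Lb * II := by ring
  have hGcomb : 0 ≤ ((ζ a - 1 + (ζ b - 1)) * (ζ b - 1) + b * ζ b * (a * ζ a) - (b * ζ b)^2) * J
      - (ζ a - 1 + (ζ b - 1)) * K + b * ζ b * M := by
    have h := hGnn
    rw [hGval] at h
    exact h.trans_eq (by ring)
  have hIK' : II + K = (ζ b - 1) * ψ b - (ζ a - 1) := by linarith [hIKeq]
  have hC : 2 + a * (a * ζ a + La) + b * (b * ζ b + Lb)
      = (ζ a - 1) + (ζ b - 1) + a * La + b * Lb := by
    have h1 := hzsq a hamem
    have h2 := hzsq b hbmem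
    linear_combination h1 + h2
  have hga : g a = a * ζ a := by rw [hg, hψa, mul_one]
  have hgb : g b = b * ζ b * ψ b := hg b
  have hmain : (b * ζ b - a * ζ a) * (a * ζ a + b * ζ b * ψ b)
      ≤ ((ζ a - 1) + (ζ b - 1) + a * La + b * Lb) * II := by
    have := stmt19_gap (a * ζ a) (b * ζ b) (ζ a - 1) (ζ b - 1) (ψ b) J K M II (a * La) (b * Lb)
      hpb' hIK' hsq' hala hblb hGcomb
    exact this.trans_eq (by ring)
  constructor
  · -- the inequality
    rw [hmhat, hga, hgb, hC, ← mul_div_assoc, div_le_iff₀ hIpos]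
    exact hmain
  constructor
  · -- equality implies ϱ = 0 on [a,b)
    intro heq
    rw [hmhat, hga, hgb, hC, ← mul_div_assoc, div_eq_iff hIpos.ne'] at heq
    by_contra hno
    push_neg at hno
    obtain ⟨t₀, ht₀, hne⟩ := hno
    have hϱt₀ : 0 < ϱ t₀ := lt_of_le_of_ne (hϱpos t₀ ⟨ht₀.1, ht₀.2.le⟩) (Ne.symm hne)
    have hGs : 0 < ((ζ a - 1 + (ζ b - 1)) * (ζ b - 1) + b * ζ b * (a * ζ a) - (b * ζ b)^2) * J
        - (ζ a - 1 + (ζ b - 1)) * K + b * ζ b * M := by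
      have h := hGpos t₀ ht₀ hϱt₀
      rw [hGval] at h
      exact h.trans_eq (by ring)
    have hstrict := stmt19_gap_strict (a * ζ a) (b * ζ b) (ζ a - 1) (ζ b - 1) (ψ b) J K M II
      (a * La) (b * Lb) hpb' hIK' hsq' hala hblb hGs
    have : (b * ζ b - a * ζ a) * (a * ζ a + b * ζ b * ψ b)
        < ((ζ a - 1) + (ζ b - 1) + a * La + b * Lb) * II := hstrict.trans_eq (by ring)
    linarith [heq, this]
  · -- ϱ = 0 on [a,b) implies equality
    intro hz
    have hInt0 : ∫ s in a..b, ϱ s = 0 := by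
      have e : ∫ s in a..b, ϱ s = ∫ s in a..b, (0 : ℝ) := by
        apply intervalIntegral.integral_congr_ae
        filter_upwards [haeb] with x hxb hxΙ
        rw [uIoc_of_le hab'] at hxΙ
        exact hz x ⟨hxΙ.1.le, lt_of_le_of_ne hxΙ.2 hxb⟩
      rw [e, intervalIntegral.integral_zero]
    have hψb1 : ψ b = 1 := by rw [hψ, hInt0, Real.exp_zero]
    have hK0 : K = 0 := by
      rw [hKdef]
      have e : ∫ t in a..b, ϱ t * ((ζ t - 1) * ψ t) = ∫ t in a..b, (0 : ℝ) := by
        apply intervalIntegral.integral_congr_ae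
        filter_upwards [haeb] with x hxb hxΙ
        rw [uIoc_of_le hab'] at hxΙ
        rw [hz x ⟨hxΙ.1.le, lt_of_le_of_ne hxΙ.2 hxb⟩, zero_mul]
      rw [e, intervalIntegral.integral_zero]
    have hIIval : II = (ζ b - 1) - (ζ a - 1) := by
      rw [hψb1, hK0] at hIK'
      linarith
    have hLa00 : La = 0 := by
      apply tendsto_nhds_unique hLa
      apply Tendsto.congr' _ tendsto_const_nhds
      apply eventuallyEq_of_mem (Ioo_mem_nhdsGT_of_mem (left_mem_Ico.2 hab))
      intro x hx
      exact (hz x ⟨hx.1.le, hx.2⟩).symm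
    have hLb00 : Lb = 0 := by
      apply tendsto_nhds_unique hLb
      apply Tendsto.congr' _ tendsto_const_nhds
      apply eventuallyEq_of_mem (Ioo_mem_nhdsLT_of_mem (right_mem_Ioc.2 hab))
      intro x hx
      exact (hz x ⟨hx.1.le, hx.2⟩).symm
    rw [hmhat, hga, hgb, hC, hψb1, mul_one, hLa00, hLb00, ← mul_div_assoc,
      div_eq_iff hIpos.ne', hIIval]
    linear_combination -hsq'
end
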